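/- arXiv:2308.14183 — 3 statements merged into one kernel-verified Lean document; each statement's English description precedes it below -/
import Mathlib

section
/- For every integer k ≥ 1, the number of type B set partitions of {-k,...,-1,1,...,k} equals ∑_{j=0}^{k} S(k+1,j+1) · I_j. -/
open Finset

def stirling : ℕ → ℕ → ℕ
  | 0, 0 => 1
  | 0, _ + 1 => 0
  | _ + 1, 0 => 0
  | n + 1, j + 1 => (j + 1) * stirling n (j + 1) + stirling n j

/-- Number of involutions in the symmetric group on `j` letters. -/
noncomputable def involutions (j : ℕ) : ℕ := Nat.card {σ : Equiv.Perm (Fin j) // σ * σ = 1}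

/-- The set `{-k,…,-1,1,…,k}` inside `ℤ`. -/
noncomputable def pmSet (k : ℕ) : Finset ℤ := (Finset.Icc (-(k : ℤ)) k).erase 0

def matchNum : ℕ → ℕ
  | 0 => 1
  | 1 => 1
  | n + 2 => matchNum (n + 1) + (n + 1) * matchNum n

set_option linter.unusedSectionVars false

namespace Stmt11
variable {α : Type*} [DecidableEq α]

open Classical in
noncomputable def partitionsOf (s : Finset α) : Finset (Finset (Finset α)) :=
  s.powerset.powerset.filter fun c =>
    (∀ t ∈ c, t.Nonempty) ∧
    (∀ t ∈ c, ∀ u ∈ c, t ≠ u → Disjoint t u) ∧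
    (∀ x ∈ s, ∃ t ∈ c, x ∈ t)

lemma mem_partitionsOf {s : Finset α} {c : Finset (Finset α)} :
    c ∈ partitionsOf s ↔
      (∀ t ∈ c, t ⊆ s) ∧ (∀ t ∈ c, t.Nonempty) ∧
      (∀ t ∈ c, ∀ u ∈ c, t ≠ u → Disjoint t u) ∧ (∀ x ∈ s, ∃ t ∈ c, x ∈ t) := by
  classical
  simp only [partitionsOf, mem_filter, mem_powerset]
  constructor
  · rintro ⟨h1, h2, h3, h4⟩
    exact ⟨fun t ht => mem_powerset.1 (h1 ht), h2, h3, h4⟩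
  · rintro ⟨h1, h2, h3, h4⟩
    exact ⟨fun t ht => mem_powerset.2 (h1 t ht), h2, h3, h4⟩

lemma partitionsOf_empty : partitionsOf (∅ : Finset α) = {∅} := by
  ext c
  simp only [mem_partitionsOf, mem_singleton]
  constructor
  · rintro ⟨h1, h2, _, _⟩
    by_contra hc
    obtain ⟨t, ht⟩ := Finset.nonempty_iff_ne_empty.2 hc
    obtain ⟨x, hx⟩ := h2 t ht
    exact absurd (h1 t ht hx) (notMem_empty x)
  · rintro rfl
    refine ⟨by simp, by simp, by simp, by simp⟩

theorem card_partitionsOf_filter (s : Finset α) (m : ℕ) :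
    ((partitionsOf s).filter fun c => c.card = m).card = stirling s.card m := by
  classical
  induction s using Finset.induction_on generalizing m with
  | empty =>
    rw [partitionsOf_empty]
    cases m with
    | zero =>
      rw [filter_singleton]
      simp [stirling]
    | succ m =>
      rw [Finset.card_eq_zero.2]
      · simp [stirling]
      · ext c; simp only [mem_filter, mem_singleton, notMem_empty, iff_false, not_and]
        rintro rfl; simp
  | @insert a s ha ih =>
    rw [card_insert_of_notMem ha]
    cases m with
    | zero =>
      rw [Finset.card_eq_zero.2, stirling]
      ext c
      simp only [mem_filter, notMem_empty, iff_false, not_and]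
      intro hc hcard
      obtain ⟨-, -, -, hcov⟩ := mem_partitionsOf.1 hc
      obtain ⟨t, ht, -⟩ := hcov a (mem_insert_self a s)
      rw [Finset.card_eq_zero] at hcard
      subst hcard
      exact absurd ht (notMem_empty t)
    | succ m =>
      set S := (partitionsOf (insert a s)).filter (fun c => c.card = m + 1) with hS
      have hsplit := Finset.card_filter_add_card_filter_not
        (s := S) (p := fun c => ({a} : Finset α) ∈ c)
      -- Count partitions where {a} is a singleton block
      have hA : (S.filter (fun c => ({a} : Finset α) ∈ c)).card
          = stirling s.card m := by
        rw [← ih m]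
        refine Finset.card_bij' (fun c _ => c.erase {a}) (fun d _ => insert {a} d) ?_ ?_ ?_ ?_
        · rintro c hc
          simp only [hS, mem_filter, and_assoc] at hc
          obtain ⟨hc, hcard, hmem⟩ := hc
          obtain ⟨hsub, hne, hdis, hcov⟩ := mem_partitionsOf.1 hc
          simp only [mem_filter]
          constructor
          · rw [mem_partitionsOf]
            refine ⟨?_, ?_, ?_, ?_⟩
            · intro t ht
              obtain ⟨htne, htc⟩ := Finset.mem_erase.1 ht
              intro x hx
              have hxs := hsub t htc hx
              rcases mem_insert.1 hxs with rfl | h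
              · exact absurd (Finset.disjoint_left.1 (hdis t htc _ hmem htne)
                  hx (mem_singleton_self x)) (fun h => h)
              · exact h
            · intro t ht; exact hne t (Finset.mem_erase.1 ht).2
            · intro t ht u hu htu
              exact hdis t (Finset.mem_erase.1 ht).2 u (Finset.mem_erase.1 hu).2 htu
            · intro x hx
              obtain ⟨t, htc, hxt⟩ := hcov x (mem_insert_of_mem hx)
              refine ⟨t, Finset.mem_erase.2 ⟨?_, htc⟩, hxt⟩
              rintro rfl
              rw [mem_singleton] at hxt
              exact ha (hxt ▸ hx)
          · rw [Finset.card_erase_of_mem hmem, hcard]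
            omega
        · rintro d hd
          simp only [mem_filter] at hd
          obtain ⟨hd, hcard⟩ := hd
          obtain ⟨hsub, hne, hdis, hcov⟩ := mem_partitionsOf.1 hd
          have hand : ({a} : Finset α) ∉ d := by
            intro h
            exact ha (hsub _ h (mem_singleton_self a))
          simp only [hS, mem_filter, and_assoc]
          refine ⟨?_, ?_, mem_insert_self _ _⟩
          · rw [mem_partitionsOf]
            refine ⟨?_, ?_, ?_, ?_⟩
            · intro t ht
              rcases mem_insert.1 ht with rfl | h
              · simp
              · exact (hsub t h).trans (subset_insert a s)
            · intro t ht
              rcases mem_insert.1 ht with rfl | h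
              · exact ⟨a, mem_singleton_self a⟩
              · exact hne t h
            · intro t ht u hu htu
              rcases mem_insert.1 ht with rfl | h <;> rcases mem_insert.1 hu with rfl | h'
              · exact absurd rfl htu
              · rw [Finset.disjoint_singleton_left]
                intro hau; exact ha (hsub u h' hau)
              · rw [Finset.disjoint_singleton_right]
                intro hat; exact ha (hsub t h hat)
              · exact hdis t h u h' htu
            · intro x hx
              rcases mem_insert.1 hx with rfl | h
              · exact ⟨{x}, mem_insert_self _ _, mem_singleton_self x⟩
              · obtain ⟨t, htd, hxt⟩ := hcov x h
                exact ⟨t, mem_insert_of_mem htd, hxt⟩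
          · rw [card_insert_of_notMem hand, hcard]
        · rintro c hc
          simp only [hS, mem_filter, and_assoc] at hc
          exact Finset.insert_erase hc.2.2
        · rintro d hd
          simp only [mem_filter] at hd
          obtain ⟨hd, -⟩ := hd
          obtain ⟨hsub, -, -, -⟩ := mem_partitionsOf.1 hd
          apply Finset.erase_insert
          intro h
          exact ha (hsub _ h (mem_singleton_self a))
      -- Count partitions where a is in a block of size ≥ 2
      have hB : (S.filter (fun c => ({a} : Finset α) ∉ c)).card
          = (m + 1) * stirling s.card (m + 1) := by
        have hTcard : (((partitionsOf s).filter (fun c => c.card = m + 1)).sigma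
            (fun c => c)).card = (m + 1) * stirling s.card (m + 1) := by
          rw [Finset.card_sigma, ← ih (m+1), Finset.sum_congr rfl
            (fun c hc => (mem_filter.1 hc).2), Finset.sum_const, smul_eq_mul, mul_comm]
        rw [← hTcard]
        symm
        refine Finset.card_bij (fun (p : Σ _ : Finset (Finset α), Finset α) _ =>
          insert (insert a p.2) (p.1.erase p.2)) ?_ ?_ ?_
        · rintro ⟨c, t⟩ hp
          simp only [Finset.mem_sigma, mem_filter] at hp
          obtain ⟨⟨hc, hcard⟩, htc⟩ := hp
          obtain ⟨hsub, hne, hdis, hcov⟩ := mem_partitionsOf.1 hc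
          have hanotint : a ∉ t := fun h => ha (hsub t htc h)
          have hins_notmem : insert a t ∉ c.erase t := by
            intro h
            exact ha (hsub _ (Finset.mem_erase.1 h).2 (mem_insert_self a t))
          simp only [hS, mem_filter, and_assoc]
          refine ⟨?_, ?_, ?_⟩
          · rw [mem_partitionsOf]
            refine ⟨?_, ?_, ?_, ?_⟩
            · intro u hu
              rcases mem_insert.1 hu with rfl | h
              · exact insert_subset_insert a (hsub t htc)
              · exact ((hsub u (Finset.mem_erase.1 h).2).trans (subset_insert a s))
            · intro u hu
              rcases mem_insert.1 hu with rfl | h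
              · exact ⟨a, mem_insert_self a t⟩
              · exact hne u (Finset.mem_erase.1 h).2
            · intro u hu v hv huv
              rcases mem_insert.1 hu with rfl | h <;> rcases mem_insert.1 hv with rfl | h'
              · exact absurd rfl huv
              · rw [Finset.disjoint_left]
                intro x hx hxv
                obtain ⟨hvt, hvc⟩ := Finset.mem_erase.1 h'
                rcases mem_insert.1 hx with rfl | hxt
                · exact ha (hsub v hvc hxv)
                · exact Finset.disjoint_left.1 (hdis t htc v hvc (Ne.symm hvt)) hxt hxv
              · rw [Finset.disjoint_right]
                intro x hx hxv
                obtain ⟨hvt, hvc⟩ := Finset.mem_erase.1 h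
                rcases mem_insert.1 hx with rfl | hxt
                · exact ha (hsub u hvc hxv)
                · exact Finset.disjoint_left.1 (hdis t htc u hvc (Ne.symm hvt)) hxt hxv
              · exact hdis u (Finset.mem_erase.1 h).2 v (Finset.mem_erase.1 h').2 huv
            · intro x hx
              rcases mem_insert.1 hx with rfl | h
              · exact ⟨insert x t, mem_insert_self _ _, mem_insert_self x t⟩
              · obtain ⟨u, huc, hxu⟩ := hcov x h
                by_cases hut : u = t
                · subst hut
                  exact ⟨insert a u, mem_insert_self _ _, mem_insert_of_mem hxu⟩
                · exact ⟨u, mem_insert_of_mem (Finset.mem_erase.2 ⟨hut, huc⟩), hxu⟩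
          · rw [card_insert_of_notMem hins_notmem, Finset.card_erase_of_mem htc, hcard]
            omega
          · intro hmem
            rcases mem_insert.1 hmem with heq | h
            · obtain ⟨x, hx⟩ := hne t htc
              have : x ∈ ({a} : Finset α) := heq ▸ (mem_insert_of_mem hx)
              rw [mem_singleton] at this
              subst this
              exact ha (hsub t htc hx)
            · exact ha (hsub _ (Finset.mem_erase.1 h).2 (mem_singleton_self a))
        · rintro ⟨c₁, t₁⟩ hp₁ ⟨c₂, t₂⟩ hp₂ heq
          simp only [Finset.mem_sigma, mem_filter] at hp₁ hp₂
          obtain ⟨⟨hc₁, -⟩, ht₁⟩ := hp₁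
          obtain ⟨⟨hc₂, -⟩, ht₂⟩ := hp₂
          obtain ⟨hsub₁, -, hdis₁, -⟩ := mem_partitionsOf.1 hc₁
          obtain ⟨hsub₂, -, hdis₂, -⟩ := mem_partitionsOf.1 hc₂
          have hat₁ : a ∉ t₁ := fun h => ha (hsub₁ t₁ ht₁ h)
          have hat₂ : a ∉ t₂ := fun h => ha (hsub₂ t₂ ht₂ h)
          have heq' : insert (insert a t₁) (c₁.erase t₁) = insert (insert a t₂) (c₂.erase t₂) :=
            heq
          have hkey : insert a t₁ = insert a t₂ := by
            have h1 : insert a t₁ ∈ insert (insert a t₂) (c₂.erase t₂) := by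
              rw [← heq']; exact mem_insert_self _ _
            rcases mem_insert.1 h1 with h | h
            · exact h
            · exact absurd (mem_insert_self a t₁)
                (fun hmem => ha (hsub₂ _ (Finset.mem_erase.1 h).2 hmem))
          have htt : t₁ = t₂ := by
            rw [← Finset.erase_insert hat₁, ← Finset.erase_insert hat₂, hkey]
          have hins₁ : insert a t₁ ∉ c₁.erase t₁ :=
            fun h => ha (hsub₁ _ (Finset.mem_erase.1 h).2 (mem_insert_self a t₁))
          have hins₂ : insert a t₂ ∉ c₂.erase t₂ :=
            fun h => ha (hsub₂ _ (Finset.mem_erase.1 h).2 (mem_insert_self a t₂))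
          have hcc : c₁ = c₂ := by
            have he : c₁.erase t₁ = c₂.erase t₂ := by
              rw [← Finset.erase_insert hins₁, ← Finset.erase_insert hins₂, heq', hkey]
            rw [← Finset.insert_erase ht₁, ← Finset.insert_erase ht₂, he, htt]
          subst htt
          subst hcc
          rfl
        · rintro d hd
          simp only [hS, mem_filter, and_assoc] at hd
          obtain ⟨hd, hcard, hnotmem⟩ := hd
          obtain ⟨hsub, hne, hdis, hcov⟩ := mem_partitionsOf.1 hd
          obtain ⟨u, hud, hau⟩ := hcov a (mem_insert_self a s)
          have hune : u ≠ {a} := by rintro rfl; exact hnotmem hud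
          have htne : (u.erase a).Nonempty := by
            rw [Finset.nonempty_iff_ne_empty]
            intro h
            apply hune
            apply Finset.eq_singleton_iff_unique_mem.2
            refine ⟨hau, fun x hx => ?_⟩
            by_contra hxa
            exact absurd (Finset.mem_erase.2 ⟨hxa, hx⟩) (h ▸ notMem_empty x)
          have htnotin : u.erase a ∉ d.erase u := by
            intro h
            obtain ⟨hneu, hmem⟩ := Finset.mem_erase.1 h
            obtain ⟨x, hx⟩ := htne
            exact Finset.disjoint_left.1 (hdis _ hmem u hud hneu) hx
              (Finset.mem_erase.1 hx).2
          refine ⟨⟨insert (u.erase a) (d.erase u), u.erase a⟩, ?_, ?_⟩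
          · simp only [Finset.mem_sigma, mem_filter]
            refine ⟨⟨?_, ?_⟩, mem_insert_self _ _⟩
            · rw [mem_partitionsOf]
              refine ⟨?_, ?_, ?_, ?_⟩
              · intro t ht
                rcases mem_insert.1 ht with rfl | h
                · intro x hx
                  obtain ⟨hxa, hxu⟩ := Finset.mem_erase.1 hx
                  rcases mem_insert.1 (hsub u hud hxu) with h' | h'
                  · exact absurd h' hxa
                  · exact h'
                · intro x hx
                  have hxa : x ≠ a := by
                    rintro rfl
                    obtain ⟨htu, htd⟩ := Finset.mem_erase.1 h
                    exact Finset.disjoint_left.1 (hdis _ htd u hud htu) hx hau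
                  rcases mem_insert.1 (hsub _ (Finset.mem_erase.1 h).2 hx) with h' | h'
                  · exact absurd h' hxa
                  · exact h'
              · intro t ht
                rcases mem_insert.1 ht with rfl | h
                · exact htne
                · exact hne t (Finset.mem_erase.1 h).2
              · intro t ht v hv htv
                rcases mem_insert.1 ht with rfl | h <;> rcases mem_insert.1 hv with rfl | h'
                · exact absurd rfl htv
                · rw [Finset.disjoint_left]
                  intro x hx hxv
                  obtain ⟨hvu, hvd⟩ := Finset.mem_erase.1 h'
                  exact Finset.disjoint_left.1 (hdis u hud _ hvd (Ne.symm hvu))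
                    (Finset.mem_erase.1 hx).2 hxv
                · rw [Finset.disjoint_right]
                  intro x hx hxv
                  obtain ⟨hvu, hvd⟩ := Finset.mem_erase.1 h
                  exact Finset.disjoint_left.1 (hdis u hud _ hvd (Ne.symm hvu))
                    (Finset.mem_erase.1 hx).2 hxv
                · exact hdis t (Finset.mem_erase.1 h).2 v (Finset.mem_erase.1 h').2 htv
              · intro x hx
                obtain ⟨t, htd, hxt⟩ := hcov x (mem_insert_of_mem hx)
                by_cases htu : t = u
                · subst htu
                  refine ⟨t.erase a, mem_insert_self _ _, Finset.mem_erase.2 ⟨?_, hxt⟩⟩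
                  rintro rfl; exact ha hx
                · exact ⟨t, mem_insert_of_mem (Finset.mem_erase.2 ⟨htu, htd⟩), hxt⟩
            · rw [card_insert_of_notMem htnotin, Finset.card_erase_of_mem hud, hcard]
              omega
          · simp only
            rw [Finset.erase_insert htnotin, Finset.insert_erase hau, Finset.insert_erase hud]
      rw [← hsplit, hA, hB, stirling]
      omega


open Classical in
noncomputable def matchings (V : Finset α) : Finset (Finset (Finset α)) :=
  V.powerset.powerset.filter fun M =>
    (∀ e ∈ M, e.card = 2) ∧ (∀ e ∈ M, ∀ f ∈ M, e ≠ f → Disjoint e f)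

lemma mem_matchings {V : Finset α} {M : Finset (Finset α)} :
    M ∈ matchings V ↔
      (∀ e ∈ M, e ⊆ V) ∧ (∀ e ∈ M, e.card = 2) ∧
      (∀ e ∈ M, ∀ f ∈ M, e ≠ f → Disjoint e f) := by
  classical
  simp only [matchings, mem_filter, mem_powerset]
  constructor
  · rintro ⟨h1, h2, h3⟩
    exact ⟨fun e he => mem_powerset.1 (h1 he), h2, h3⟩
  · rintro ⟨h1, h2, h3⟩
    exact ⟨fun e he => mem_powerset.2 (h1 e he), h2, h3⟩

lemma matchings_mono {V W : Finset α} (h : V ⊆ W) : matchings V ⊆ matchings W := by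
  intro M hM
  rw [mem_matchings] at hM ⊢
  exact ⟨fun e he => (hM.1 e he).trans h, hM.2⟩

theorem card_matchings (V : Finset α) : (matchings V).card = matchNum V.card := by
  classical
  generalize hn : V.card = n
  induction n using Nat.strong_induction_on generalizing V with
  | _ n ih =>
  match n, hn with
  | 0, hn =>
    have hV : V = ∅ := Finset.card_eq_zero.1 hn
    subst hV
    have : matchings (∅ : Finset α) = {∅} := by
      ext M
      simp only [mem_matchings, mem_singleton]
      constructor
      · rintro ⟨h1, h2, -⟩
        by_contra hM
        obtain ⟨e, he⟩ := Finset.nonempty_iff_ne_empty.2 hM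
        have he2 := h2 e he
        have : e = ∅ := Finset.subset_empty.1 (h1 e he)
        subst this
        simp at he2
      · rintro rfl; exact ⟨by simp, by simp, by simp⟩
    rw [this]
    simp [matchNum]
  | (n + 1), hn =>
    obtain ⟨a, haV⟩ := Finset.card_pos.1 (show 0 < V.card by omega)
    have hsplit := Finset.card_filter_add_card_filter_not
      (s := matchings V) (p := fun M => ∀ e ∈ M, a ∉ e)
    -- a uncovered
    have hA : (matchings V).filter (fun M => ∀ e ∈ M, a ∉ e) = matchings (V.erase a) := by
      ext M
      simp only [mem_filter, mem_matchings]
      constructor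
      · rintro ⟨⟨h1, h2, h3⟩, h4⟩
        refine ⟨fun e he x hx => Finset.mem_erase.2 ⟨?_, h1 e he hx⟩, h2, h3⟩
        rintro rfl; exact h4 e he hx
      · rintro ⟨h1, h2, h3⟩
        exact ⟨⟨fun e he => (h1 e he).trans (erase_subset a V), h2, h3⟩,
          fun e he hx => (Finset.mem_erase.1 (h1 e he hx)).1 rfl⟩
    -- a covered
    have hB : ((matchings V).filter (fun M => ¬ ∀ e ∈ M, a ∉ e)).card
        = ((V.erase a).sigma (fun b => matchings ((V.erase a).erase b))).card := by
      symm
      refine Finset.card_bij (fun (p : Σ _ : α, Finset (Finset α)) _ =>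
        insert {a, p.1} p.2) ?_ ?_ ?_
      · rintro ⟨b, M⟩ hp
        simp only [Finset.mem_sigma] at hp
        obtain ⟨hb, hM⟩ := hp
        obtain ⟨hbne, hbV⟩ := Finset.mem_erase.1 hb
        obtain ⟨h1, h2, h3⟩ := mem_matchings.1 hM
        have hedge : ∀ e ∈ M, a ∉ e ∧ b ∉ e := by
          intro e he
          constructor
          · intro hx
            exact (Finset.mem_erase.1 ((Finset.mem_erase.1 (h1 e he hx)).2)).1 rfl
          · intro hx
            exact (Finset.mem_erase.1 (h1 e he hx)).1 rfl
        simp only [mem_filter, mem_matchings]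
        refine ⟨⟨?_, ?_, ?_⟩, ?_⟩
        · intro e he
          rcases mem_insert.1 he with rfl | h
          · intro x hx
            rcases Finset.mem_insert.1 hx with rfl | hx
            · exact haV
            · rw [Finset.mem_singleton] at hx; subst hx; exact hbV
          · exact (h1 e h).trans ((erase_subset b _).trans (erase_subset a V))
        · intro e he
          rcases mem_insert.1 he with rfl | h
          · rw [Finset.card_insert_of_notMem (by simp [Ne.symm hbne]), Finset.card_singleton]
          · exact h2 e h
        · intro e he f hf hef
          rcases mem_insert.1 he with rfl | h <;> rcases mem_insert.1 hf with rfl | h'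
          · exact absurd rfl hef
          · rw [Finset.disjoint_left]
            intro x hx hxf
            rcases Finset.mem_insert.1 hx with rfl | hx
            · exact (hedge f h').1 hxf
            · rw [Finset.mem_singleton] at hx; subst hx; exact (hedge f h').2 hxf
          · rw [Finset.disjoint_right]
            intro x hx hxf
            rcases Finset.mem_insert.1 hx with rfl | hx
            · exact (hedge e h).1 hxf
            · rw [Finset.mem_singleton] at hx; subst hx; exact (hedge e h).2 hxf
          · exact h3 e h f h' hef
        · intro hall
          exact hall _ (mem_insert_self _ _) (Finset.mem_insert_self a _)
      · rintro ⟨b₁, M₁⟩ hp₁ ⟨b₂, M₂⟩ hp₂ heq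
        simp only [Finset.mem_sigma] at hp₁ hp₂
        obtain ⟨hb₁, hM₁⟩ := hp₁
        obtain ⟨hb₂, hM₂⟩ := hp₂
        obtain ⟨h11, -, -⟩ := mem_matchings.1 hM₁
        obtain ⟨h21, -, -⟩ := mem_matchings.1 hM₂
        have hae₁ : ∀ e ∈ M₁, a ∉ e := fun e he hx =>
          (Finset.mem_erase.1 ((Finset.mem_erase.1 (h11 e he hx)).2)).1 rfl
        have hae₂ : ∀ e ∈ M₂, a ∉ e := fun e he hx =>
          (Finset.mem_erase.1 ((Finset.mem_erase.1 (h21 e he hx)).2)).1 rfl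
        have heq' : insert {a, b₁} M₁ = insert {a, b₂} M₂ := heq
        have hbb : b₁ = b₂ := by
          have h1 : ({a, b₁} : Finset α) ∈ insert {a, b₂} M₂ := by
            rw [← heq']; exact mem_insert_self _ _
          rcases mem_insert.1 h1 with h | h
          · have : b₁ ∈ ({a, b₂} : Finset α) := h ▸ (by simp)
            rcases Finset.mem_insert.1 this with rfl | hb
            · exact absurd hb₁ (by simp)
            · exact Finset.mem_singleton.1 hb
          · exact absurd (Finset.mem_insert_self a {b₁}) (hae₂ _ h)
        subst hbb
        have hne₁ : ({a, b₁} : Finset α) ∉ M₁ := fun h => hae₁ _ h (by simp)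
        have hne₂ : ({a, b₁} : Finset α) ∉ M₂ := fun h => hae₂ _ h (by simp)
        have : M₁ = M₂ := by
          rw [← Finset.erase_insert hne₁, ← Finset.erase_insert hne₂, heq']
        subst this
        rfl
      · intro N hN
        simp only [mem_filter, mem_matchings] at hN
        obtain ⟨⟨h1, h2, h3⟩, h4⟩ := hN
        push_neg at h4
        obtain ⟨e, heN, hae⟩ := h4
        obtain ⟨x, y, hxy, hexy⟩ := Finset.card_eq_two.1 (h2 e heN)
        have hab : ∃ b, b ≠ a ∧ e = {a, b} := by
          subst hexy
          rcases Finset.mem_insert.1 hae with rfl | h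
          · exact ⟨y, Ne.symm hxy, rfl⟩
          · rw [Finset.mem_singleton] at h; subst h
            exact ⟨x, hxy, by rw [Finset.pair_comm]⟩
        obtain ⟨b, hba, rfl⟩ := hab
        have hbV : b ∈ V := h1 _ heN (by simp)
        refine ⟨⟨b, N.erase {a, b}⟩, ?_, ?_⟩
        · simp only [Finset.mem_sigma]
          refine ⟨Finset.mem_erase.2 ⟨hba, hbV⟩, mem_matchings.2 ⟨?_, ?_, ?_⟩⟩
          · intro f hf z hz
            obtain ⟨hfe, hfN⟩ := Finset.mem_erase.1 hf
            have hdis := h3 f hfN _ heN hfe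
            refine Finset.mem_erase.2 ⟨?_, Finset.mem_erase.2 ⟨?_, h1 f hfN hz⟩⟩
            · rintro rfl
              exact Finset.disjoint_left.1 hdis hz (by simp)
            · rintro rfl
              exact Finset.disjoint_left.1 hdis hz (by simp)
          · intro f hf; exact h2 f (Finset.mem_erase.1 hf).2
          · intro f hf g hg hfg
            exact h3 f (Finset.mem_erase.1 hf).2 g (Finset.mem_erase.1 hg).2 hfg
        · simp only
          exact Finset.insert_erase heN
    have hcV : (V.erase a).card = n := by
      rw [Finset.card_erase_of_mem haV, hn]
      omega
    rw [← hsplit, hA, hB, Finset.card_sigma]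
    have hsum : ∀ b ∈ V.erase a, (matchings ((V.erase a).erase b)).card = matchNum (n - 1) := by
      intro b hb
      rw [ih (n-1) (by omega) _ (by rw [Finset.card_erase_of_mem hb, hcV])]
    rw [Finset.sum_congr rfl hsum, Finset.sum_const, smul_eq_mul,
      ih n (by omega) _ hcV, Finset.card_erase_of_mem haV, hn]
    cases n with
    | zero => simp [matchNum]
    | succ m => simp only [Nat.add_sub_cancel, matchNum]

lemma pair_erase {x y : α} (h : y ≠ x) : ({x, y} : Finset α).erase x = {y} := by
  ext z
  simp only [Finset.mem_erase, Finset.mem_insert, Finset.mem_singleton]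
  constructor
  · rintro ⟨hzx, rfl | rfl⟩
    · exact absurd rfl hzx
    · rfl
  · rintro rfl; exact ⟨h, Or.inr rfl⟩

lemma filter_eq_singleton' {V : Finset α} {M : Finset (Finset α)} (hM : M ∈ matchings V)
    {e : Finset α} {x : α} (he : e ∈ M) (hx : x ∈ e) :
    M.filter (fun e' => x ∈ e') = {e} := by
  classical
  obtain ⟨-, -, h3⟩ := mem_matchings.1 hM
  ext f
  simp only [mem_filter, mem_singleton]
  constructor
  · rintro ⟨hf, hxf⟩
    by_contra hfe
    exact Finset.disjoint_left.1 (h3 f hf e he hfe) hxf hx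
  · rintro rfl; exact ⟨he, hx⟩

lemma exists_pair_of_mem' {V : Finset α} {M : Finset (Finset α)} (hM : M ∈ matchings V)
    {e : Finset α} {x : α} (he : e ∈ M) (hx : x ∈ e) :
    ∃ y, y ≠ x ∧ e = {x, y} := by
  obtain ⟨-, h2, -⟩ := mem_matchings.1 hM
  obtain ⟨u, v, huv, rfl⟩ := Finset.card_eq_two.1 (h2 e he)
  rcases Finset.mem_insert.1 hx with rfl | h
  · exact ⟨v, Ne.symm huv, rfl⟩
  · rw [Finset.mem_singleton] at h; subst h
    exact ⟨u, huv, by rw [Finset.pair_comm]⟩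

section MatchPerm
variable [LinearOrder α] [Fintype α]

/-- candidate partners of `x` in `M` -/
noncomputable def cand (M : Finset (Finset α)) (x : α) : Finset α :=
  ((M.filter (fun e => x ∈ e)).sup id).erase x

noncomputable def mfun (M : Finset (Finset α)) (x : α) : α :=
  if h : (cand M x).Nonempty then (cand M x).min' h else x

lemma mfun_eq_partner {M : Finset (Finset α)} (hM : M ∈ matchings univ)
    {x y : α} (he : ({x, y} : Finset α) ∈ M) (hxy : y ≠ x) :
    mfun M x = y := by
  have hc : cand M x = {y} := by
    rw [cand, filter_eq_singleton' hM he (by simp), Finset.sup_singleton, id, pair_erase hxy]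
  rw [mfun, hc]
  simp

lemma mfun_eq_of_uncovered {M : Finset (Finset α)} {x : α} (h : ∀ e ∈ M, x ∉ e) :
    mfun M x = x := by
  have : M.filter (fun e' => x ∈ e') = ∅ := by
    rw [Finset.filter_eq_empty_iff]; exact h
  rw [mfun, cand, this]
  simp

lemma mfun_involutive {M : Finset (Finset α)} (hM : M ∈ matchings univ) :
    Function.Involutive (mfun M) := by
  intro x
  by_cases h : ∃ e ∈ M, x ∈ e
  · obtain ⟨e, he, hx⟩ := h
    obtain ⟨y, hyx, rfl⟩ := exists_pair_of_mem' hM he hx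
    rw [mfun_eq_partner hM he hyx]
    rw [Finset.pair_comm] at he
    exact mfun_eq_partner hM he (Ne.symm hyx)
  · push_neg at h
    rw [mfun_eq_of_uncovered h, mfun_eq_of_uncovered h]

lemma matching_eq_image {M : Finset (Finset α)} (hM : M ∈ matchings univ) :
    M = (univ.filter (fun x => mfun M x ≠ x)).image (fun x => ({x, mfun M x} : Finset α)) := by
  ext e
  simp only [Finset.mem_image, mem_filter, mem_univ, true_and]
  constructor
  · intro he
    obtain ⟨x, hx⟩ : e.Nonempty := by
      obtain ⟨-, h2, -⟩ := mem_matchings.1 hM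
      exact Finset.card_pos.1 (by rw [h2 e he]; omega)
    obtain ⟨y, hyx, rfl⟩ := exists_pair_of_mem' hM he hx
    have := mfun_eq_partner hM he hyx
    exact ⟨x, by rw [this]; exact hyx, by rw [this]⟩
  · rintro ⟨x, hfx, rfl⟩
    by_cases h : ∃ e ∈ M, x ∈ e
    · obtain ⟨e, he, hx⟩ := h
      obtain ⟨y, hyx, rfl⟩ := exists_pair_of_mem' hM he hx
      rw [mfun_eq_partner hM he hyx]
      exact he
    · push_neg at h
      exact absurd (mfun_eq_of_uncovered h) hfx

end MatchPerm

theorem involutions_eq_matchNum (j : ℕ) : involutions j = matchNum j := by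
  classical
  have h1 : (matchings (univ : Finset (Fin j))).card = matchNum j := by
    rw [card_matchings, card_univ, Fintype.card_fin]
  rw [involutions, ← h1, ← Nat.card_eq_finsetCard]
  apply Nat.card_congr
  symm
  refine Equiv.ofBijective (fun p =>
    ⟨(mfun_involutive p.2).toPerm, Equiv.ext fun x => (mfun_involutive p.2) x⟩) ⟨?_, ?_⟩
  · rintro ⟨M₁, hM₁⟩ ⟨M₂, hM₂⟩ heq
    simp only [Subtype.mk_eq_mk] at heq ⊢
    have hfun : mfun M₁ = mfun M₂ := by
      have := congrArg (fun σ : Equiv.Perm (Fin j) => (σ : Fin j → Fin j)) heq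
      simpa [Function.Involutive.coe_toPerm] using this
    rw [matching_eq_image hM₁, matching_eq_image hM₂, hfun]
  · rintro ⟨σ, hσ⟩
    have hσ2 : ∀ x, σ (σ x) = x := by
      intro x
      have := Equiv.ext_iff.1 hσ x
      simpa [Equiv.Perm.mul_apply] using this
    set M : Finset (Finset (Fin j)) :=
      (univ.filter (fun x => σ x ≠ x)).image (fun x => ({x, σ x} : Finset (Fin j))) with hMdef
    have hpair : ∀ z : Fin j, σ z ≠ z → ∀ e ∈ M, z ∈ e → e = {z, σ z} := by
      intro z hz e heM hze
      obtain ⟨x, hx, rfl⟩ := Finset.mem_image.1 heM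
      rw [mem_filter] at hx
      rcases Finset.mem_insert.1 hze with rfl | h
      · rfl
      · rw [Finset.mem_singleton] at h; subst h
        rw [hσ2 x, Finset.pair_comm]
    have hM : M ∈ matchings univ := by
      rw [mem_matchings]
      refine ⟨fun e _ => subset_univ e, ?_, ?_⟩
      · intro e heM
        obtain ⟨x, hx, rfl⟩ := Finset.mem_image.1 heM
        rw [mem_filter] at hx
        rw [Finset.card_insert_of_notMem (by simp [Ne.symm hx.2]), Finset.card_singleton]
      · intro e he f hf hef
        rw [Finset.disjoint_left]
        intro z hze hzf
        have hz : σ z ≠ z := by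
          obtain ⟨x, hx, rfl⟩ := Finset.mem_image.1 he
          rw [mem_filter] at hx
          rcases Finset.mem_insert.1 hze with rfl | h
          · exact hx.2
          · rw [Finset.mem_singleton] at h; subst h
            rw [hσ2 x]
            exact fun hcon => hx.2 hcon.symm
        exact hef ((hpair z hz e he hze).trans (hpair z hz f hf hzf).symm)
    refine ⟨⟨M, hM⟩, ?_⟩
    simp only [Subtype.mk_eq_mk]
    apply Equiv.ext
    intro x
    rw [Function.Involutive.coe_toPerm]
    by_cases hx : σ x = x
    · have hunc : ∀ e ∈ M, x ∉ e := by
        intro e heM hxe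
        obtain ⟨y, hy, rfl⟩ := Finset.mem_image.1 heM
        rw [mem_filter] at hy
        rcases Finset.mem_insert.1 hxe with rfl | h
        · exact hy.2 hx
        · rw [Finset.mem_singleton] at h; subst h
          rw [hσ2 y] at hx
          exact hy.2 hx.symm  -- hx : σ (σ y) = σ y i.e. y = σ y
      rw [mfun_eq_of_uncovered hunc, hx]
    · have heM : ({x, σ x} : Finset (Fin j)) ∈ M :=
        Finset.mem_image.2 ⟨x, mem_filter.2 ⟨mem_univ x, hx⟩, rfl⟩
      rw [mfun_eq_partner hM heM hx]

lemma stirling_succ_zero (n : ℕ) : stirling (n+1) 0 = 0 := rfl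

/-! ### negation of finsets of integers -/

def negS (X : Finset ℤ) : Finset ℤ := X.image (fun x => -x)

lemma mem_negS {X : Finset ℤ} {x : ℤ} : x ∈ negS X ↔ -x ∈ X := by
  simp only [negS, Finset.mem_image]
  constructor
  · rintro ⟨y, hy, rfl⟩; simpa using hy
  · intro h; exact ⟨-x, h, by ring⟩

@[simp] lemma negS_negS (X : Finset ℤ) : negS (negS X) = X := by
  ext x; simp [mem_negS]

lemma negS_union (X Y : Finset ℤ) : negS (X ∪ Y) = negS X ∪ negS Y := by
  ext x; simp [mem_negS]

lemma negS_inj {X Y : Finset ℤ} (h : negS X = negS Y) : X = Y := by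
  rw [← negS_negS X, h, negS_negS]

lemma negS_nonempty {X : Finset ℤ} (h : X.Nonempty) : (negS X).Nonempty := by
  obtain ⟨x, hx⟩ := h
  exact ⟨-x, mem_negS.2 (by simpa using hx)⟩

lemma mem_pmSet {k : ℕ} {x : ℤ} : x ∈ pmSet k ↔ x ≠ 0 ∧ -(k:ℤ) ≤ x ∧ x ≤ k := by
  simp [pmSet, Finset.mem_erase, Finset.mem_Icc, and_assoc]

lemma neg_mem_pmSet {k : ℕ} {x : ℤ} (h : x ∈ pmSet k) : -x ∈ pmSet k := by
  rw [mem_pmSet] at h ⊢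
  refine ⟨by omega, by omega, by omega⟩

lemma mem_pmSet_of_Icc1 {k : ℕ} {x : ℤ} (h : x ∈ Finset.Icc (1:ℤ) k) : x ∈ pmSet k := by
  rw [Finset.mem_Icc] at h
  rw [mem_pmSet]
  refine ⟨by omega, by omega, by omega⟩

/-! ### the forward map -/

section Forward
variable {k : ℕ} (P : Finpartition (pmSet k))

lemma part_subset_pmSet {x : ℤ} (hx : x ∈ pmSet k) : P.part x ⊆ pmSet k :=
  P.le ((P.part_mem.2 hx))

lemma part_eq_of_mem_part {x z : ℤ} (hx : x ∈ pmSet k) (hz : z ∈ P.part x) :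
    P.part z = P.part x :=
  P.part_eq_of_mem ((P.part_mem.2 hx)) hz

variable (hsym : ∀ X ∈ P.parts, X.image (fun x => -x) ∈ P.parts)

include hsym in
lemma part_neg {x : ℤ} (hx : x ∈ pmSet k) : P.part (-x) = negS (P.part x) := by
  have h1 : negS (P.part x) ∈ P.parts := hsym _ ((P.part_mem.2 hx))
  exact P.part_eq_of_mem h1 (mem_negS.2 (by simpa using P.mem_part hx))

open Classical in
noncomputable def Z0 : Finset ℤ :=
  insert (0:ℤ) ((pmSet k).filter (fun y => 0 < y ∧ negS (P.part y) = P.part y))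

open Classical in
noncomputable def cell (x : ℤ) : Finset ℤ :=
  if 0 < x ∧ x ≤ (k:ℤ) ∧ negS (P.part x) ≠ P.part x then (P.part x).filter (fun y => 0 < y)
  else Z0 P

noncomputable def Qof : Finset (Finset ℤ) := (Finset.Icc (0:ℤ) (k:ℤ)).image (cell P)

open Classical in
noncomputable def ncell (x : ℤ) : Finset ℤ :=
  ((P.part x).filter (fun y => y < 0)).image (fun y => -y)

open Classical in
noncomputable def Mof : Finset (Finset (Finset ℤ)) :=
  ((Finset.Icc (1:ℤ) (k:ℤ)).filter
    (fun x => negS (P.part x) ≠ P.part x ∧ ∃ y ∈ P.part x, y < 0)).image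
    (fun x => ({cell P x, ncell P x} : Finset (Finset ℤ)))

lemma cell_of_pos {x : ℤ} (h : 0 < x ∧ x ≤ (k:ℤ) ∧ negS (P.part x) ≠ P.part x) :
    cell P x = (P.part x).filter (fun y => 0 < y) := by
  rw [cell, if_pos h]

lemma cell_of_not {x : ℤ} (h : ¬(0 < x ∧ x ≤ (k:ℤ) ∧ negS (P.part x) ≠ P.part x)) :
    cell P x = Z0 P := by
  rw [cell, if_neg h]

lemma zero_mem_Z0 : (0:ℤ) ∈ Z0 P := Finset.mem_insert_self _ _

lemma Z0_subset : Z0 P ⊆ Finset.Icc (0:ℤ) (k:ℤ) := by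
  intro z hz
  rcases Finset.mem_insert.1 hz with rfl | hz
  · simp
  · obtain ⟨hz1, hz2, -⟩ := Finset.mem_filter.1 hz
    rw [mem_pmSet] at hz1
    rw [Finset.mem_Icc]
    omega

lemma cell_subset (x : ℤ) : cell P x ⊆ Finset.Icc (0:ℤ) (k:ℤ) := by
  by_cases h : 0 < x ∧ x ≤ (k:ℤ) ∧ negS (P.part x) ≠ P.part x
  · rw [cell_of_pos P h]
    intro z hz
    obtain ⟨hz1, hz2⟩ := Finset.mem_filter.1 hz
    have := mem_pmSet.1 (part_subset_pmSet P (mem_pmSet.2 ⟨by omega, by omega, h.2.1⟩) hz1)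
    rw [Finset.mem_Icc]
    omega
  · rw [cell_of_not P h]
    exact Z0_subset P

lemma mem_cell_self {x : ℤ} (hx : x ∈ Finset.Icc (0:ℤ) (k:ℤ)) : x ∈ cell P x := by
  rw [Finset.mem_Icc] at hx
  by_cases h : 0 < x ∧ x ≤ (k:ℤ) ∧ negS (P.part x) ≠ P.part x
  · rw [cell_of_pos P h]
    exact Finset.mem_filter.2 ⟨P.mem_part (mem_pmSet.2 ⟨by omega, by omega, by omega⟩), h.1⟩
  · rw [cell_of_not P h]
    by_cases hx0 : x = 0
    · subst hx0; exact zero_mem_Z0 P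
    · refine Finset.mem_insert.2 (Or.inr (Finset.mem_filter.2 ⟨?_, by omega, ?_⟩))
      · exact mem_pmSet.2 ⟨hx0, by omega, by omega⟩
      · by_contra hcon
        exact h ⟨by omega, by omega, hcon⟩

lemma cells_eq_of_mem {x y z : ℤ} (hzx : z ∈ cell P x) (hzy : z ∈ cell P y) :
    cell P x = cell P y := by
  by_cases h1 : 0 < x ∧ x ≤ (k:ℤ) ∧ negS (P.part x) ≠ P.part x <;>
    by_cases h2 : 0 < y ∧ y ≤ (k:ℤ) ∧ negS (P.part y) ≠ P.part y
  · rw [cell_of_pos P h1] at hzx ⊢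
    rw [cell_of_pos P h2] at hzy ⊢
    obtain ⟨hz1, -⟩ := Finset.mem_filter.1 hzx
    obtain ⟨hz2, -⟩ := Finset.mem_filter.1 hzy
    have hx : x ∈ pmSet k := mem_pmSet.2 ⟨by omega, by omega, by omega⟩
    have hy : y ∈ pmSet k := mem_pmSet.2 ⟨by omega, by omega, by omega⟩
    rw [P.eq_of_mem_parts ((P.part_mem.2 hx)) ((P.part_mem.2 hy)) hz1 hz2]
  · -- x positive branch, y is Z0 : contradiction
    exfalso
    rw [cell_of_pos P h1] at hzx
    rw [cell_of_not P h2] at hzy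
    obtain ⟨hz1, hz2⟩ := Finset.mem_filter.1 hzx
    have hx : x ∈ pmSet k := mem_pmSet.2 ⟨by omega, by omega, by omega⟩
    rcases Finset.mem_insert.1 hzy with rfl | hzy
    · omega
    · obtain ⟨-, -, hzsym⟩ := Finset.mem_filter.1 hzy
      rw [part_eq_of_mem_part P hx hz1] at hzsym
      exact h1.2.2 hzsym
  · exfalso
    rw [cell_of_pos P h2] at hzy
    rw [cell_of_not P h1] at hzx
    obtain ⟨hz1, hz2⟩ := Finset.mem_filter.1 hzy
    have hy : y ∈ pmSet k := mem_pmSet.2 ⟨by omega, by omega, by omega⟩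
    rcases Finset.mem_insert.1 hzx with rfl | hzx
    · omega
    · obtain ⟨-, -, hzsym⟩ := Finset.mem_filter.1 hzx
      rw [part_eq_of_mem_part P hy hz1] at hzsym
      exact h2.2.2 hzsym
  · rw [cell_of_not P h1, cell_of_not P h2]

lemma Qof_mem : Qof P ∈ partitionsOf (Finset.Icc (0:ℤ) (k:ℤ)) := by
  rw [mem_partitionsOf]
  refine ⟨?_, ?_, ?_, ?_⟩
  · intro t ht
    obtain ⟨x, -, rfl⟩ := Finset.mem_image.1 ht
    exact cell_subset P x
  · intro t ht
    obtain ⟨x, hx, rfl⟩ := Finset.mem_image.1 ht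
    exact ⟨x, mem_cell_self P hx⟩
  · intro t ht u hu htu
    obtain ⟨x, -, rfl⟩ := Finset.mem_image.1 ht
    obtain ⟨y, -, rfl⟩ := Finset.mem_image.1 hu
    rw [Finset.disjoint_left]
    intro z hz hz'
    exact htu (cells_eq_of_mem P hz hz')
  · intro x hx
    exact ⟨cell P x, Finset.mem_image.2 ⟨x, hx, rfl⟩, mem_cell_self P hx⟩

/-- the block of a raw partition containing 0 -/
noncomputable def zeroBlk (Q : Finset (Finset ℤ)) : Finset ℤ :=
  (Q.filter (fun t => (0:ℤ) ∈ t)).sup id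

lemma cell_zero : cell P 0 = Z0 P := cell_of_not P (by simp)

lemma Z0_mem_Qof : Z0 P ∈ Qof P := by
  refine Finset.mem_image.2 ⟨0, ?_, cell_zero P⟩
  rw [Finset.mem_Icc]
  exact ⟨le_refl 0, Int.ofNat_nonneg k⟩

lemma zero_mem_iff {B : Finset ℤ} (hB : B ∈ Qof P) : (0:ℤ) ∈ B ↔ B = Z0 P := by
  obtain ⟨x, -, rfl⟩ := Finset.mem_image.1 hB
  constructor
  · intro h0
    by_cases h : 0 < x ∧ x ≤ (k:ℤ) ∧ negS (P.part x) ≠ P.part x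
    · rw [cell_of_pos P h] at h0
      obtain ⟨-, h0⟩ := Finset.mem_filter.1 h0
      omega
    · exact cell_of_not P h
  · intro h; rw [h]; exact zero_mem_Z0 P

lemma zeroBlk_Qof : zeroBlk (Qof P) = Z0 P := by
  have : (Qof P).filter (fun t => (0:ℤ) ∈ t) = {Z0 P} := by
    ext B
    simp only [Finset.mem_filter, Finset.mem_singleton]
    constructor
    · rintro ⟨hB, h0⟩
      exact (zero_mem_iff P hB).1 h0
    · rintro rfl
      exact ⟨Z0_mem_Qof P, zero_mem_Z0 P⟩
  rw [zeroBlk, this, Finset.sup_singleton, id]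

/-- positive trace -/
noncomputable def trace (X : Finset ℤ) : Finset ℤ := X.filter (fun y => 0 < y)

lemma trace_inj {X Y : Finset ℤ} (hX : X ∈ P.parts) (hY : Y ∈ P.parts)
    (h : trace X = trace Y) (hne : (trace X).Nonempty) : X = Y := by
  obtain ⟨z, hz⟩ := hne
  have hz' : z ∈ trace Y := h ▸ hz
  exact P.eq_of_mem_parts hX hY (Finset.mem_filter.1 hz).1 (Finset.mem_filter.1 hz').1

lemma ncell_eq_trace (x : ℤ) : ncell P x = trace (negS (P.part x)) := by
  ext z
  simp only [ncell, trace, Finset.mem_image, Finset.mem_filter, mem_negS]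
  constructor
  · rintro ⟨y, ⟨hy1, hy2⟩, rfl⟩
    exact ⟨by simpa using hy1, by omega⟩
  · rintro ⟨h1, h2⟩
    exact ⟨-z, ⟨h1, by omega⟩, by ring⟩

lemma cell_eq_trace {x : ℤ} (h : 0 < x ∧ x ≤ (k:ℤ) ∧ negS (P.part x) ≠ P.part x) :
    cell P x = trace (P.part x) := cell_of_pos P h

include hsym in
lemma Mof_mem : Mof P ∈ matchings ((Qof P).erase (zeroBlk (Qof P))) := by
  rw [zeroBlk_Qof, mem_matchings]
  have hmemIcc : ∀ x : ℤ, x ∈ Finset.Icc (1:ℤ) (k:ℤ) → x ∈ pmSet k := fun x h =>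
    mem_pmSet_of_Icc1 h
  -- main: each x in the index set yields a valid edge
  have hedge : ∀ x ∈ (Finset.Icc (1:ℤ) (k:ℤ)).filter
      (fun x => negS (P.part x) ≠ P.part x ∧ ∃ y ∈ P.part x, y < 0),
      (0 < x ∧ x ≤ (k:ℤ) ∧ negS (P.part x) ≠ P.part x) ∧
      (∃ x', x' ∈ Finset.Icc (1:ℤ) (k:ℤ) ∧ P.part x' = negS (P.part x) ∧
        cell P x' = ncell P x) ∧ cell P x ≠ ncell P x := by
    intro x hx
    obtain ⟨hxI, hxsym, y, hy, hy0⟩ := Finset.mem_filter.1 hx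
    rw [Finset.mem_Icc] at hxI
    have hxpm : x ∈ pmSet k := mem_pmSet.2 ⟨by omega, by omega, by omega⟩
    have hcond : 0 < x ∧ x ≤ (k:ℤ) ∧ negS (P.part x) ≠ P.part x := ⟨by omega, by omega, hxsym⟩
    have hypm : y ∈ pmSet k := part_subset_pmSet P hxpm hy
    have hyk := mem_pmSet.1 hypm
    have hx' : -y ∈ Finset.Icc (1:ℤ) (k:ℤ) := Finset.mem_Icc.2 ⟨by omega, by omega⟩
    have hpart' : P.part (-y) = negS (P.part x) := by
      rw [part_neg P hsym hypm, part_eq_of_mem_part P hxpm hy]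
    refine ⟨hcond, ⟨-y, hx', hpart', ?_⟩, ?_⟩
    · rw [cell_of_pos P ?side, hpart', ncell_eq_trace, trace]
      case side =>
        rw [Finset.mem_Icc] at hx'
        rw [hpart', negS_negS]
        refine ⟨by omega, by omega, fun hc => hxsym hc.symm⟩
    · intro hcon
      have h1 : x ∈ ncell P x := by
        rw [← hcon]
        rw [cell_of_pos P hcond]
        exact Finset.mem_filter.2 ⟨P.mem_part hxpm, by omega⟩
      rw [ncell_eq_trace] at h1
      have h2 : x ∈ negS (P.part x) := (Finset.mem_filter.1 h1).1
      have := P.eq_of_mem_parts (hsym _ ((P.part_mem.2 hxpm))) ((P.part_mem.2 hxpm)) h2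
        (P.mem_part hxpm)
      exact hxsym this
  refine ⟨?_, ?_, ?_⟩
  · intro e he
    obtain ⟨x, hx, rfl⟩ := Finset.mem_image.1 he
    obtain ⟨hcond, ⟨x', hx'I, hpart', hcell'⟩, hne⟩ := hedge x hx
    intro B hB
    rcases Finset.mem_insert.1 hB with rfl | hB
    · refine Finset.mem_erase.2 ⟨?_, Finset.mem_image.2 ⟨x, ?_, rfl⟩⟩
      · intro hcon
        have := zero_mem_Z0 P
        rw [← hcon, cell_of_pos P hcond] at this
        obtain ⟨-, h0⟩ := Finset.mem_filter.1 this
        omega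
      · obtain ⟨h1, -⟩ := Finset.mem_filter.1 hx
        rw [Finset.mem_Icc] at h1 ⊢
        omega
    · rw [Finset.mem_singleton] at hB; subst hB
      refine Finset.mem_erase.2 ⟨?_, ?_⟩
      · intro hcon
        have := zero_mem_Z0 P
        rw [← hcon, ncell_eq_trace] at this
        obtain ⟨-, h0⟩ := Finset.mem_filter.1 this
        omega
      · refine Finset.mem_image.2 ⟨x', ?_, hcell'⟩
        rw [Finset.mem_Icc] at hx'I ⊢
        omega
  · intro e he
    obtain ⟨x, hx, rfl⟩ := Finset.mem_image.1 he
    obtain ⟨-, -, hne⟩ := hedge x hx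
    rw [Finset.card_insert_of_notMem (by simpa using hne), Finset.card_singleton]
  · intro e he f hf hef
    obtain ⟨x, hx, rfl⟩ := Finset.mem_image.1 he
    obtain ⟨w, hw, rfl⟩ := Finset.mem_image.1 hf
    obtain ⟨hcondx, -, hnex⟩ := hedge x hx
    obtain ⟨hcondw, -, hnew⟩ := hedge w hw
    have hxpm : x ∈ pmSet k := mem_pmSet.2 ⟨by omega, by omega, by omega⟩
    have hwpm : w ∈ pmSet k := mem_pmSet.2 ⟨by omega, by omega, by omega⟩
    obtain ⟨-, hxsym', hxmix⟩ := Finset.mem_filter.1 hx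
    obtain ⟨-, hwsym', hwmix⟩ := Finset.mem_filter.1 hw
    -- nonemptiness of traces
    have htx : (trace (P.part x)).Nonempty :=
      ⟨x, Finset.mem_filter.2 ⟨P.mem_part hxpm, by omega⟩⟩
    have htnx : (trace (negS (P.part x))).Nonempty := by
      obtain ⟨y, hy, hy0⟩ := hxmix
      exact ⟨-y, Finset.mem_filter.2 ⟨mem_negS.2 (by simpa using hy), by omega⟩⟩
    -- the four parts involved
    have hXmem : P.part x ∈ P.parts := (P.part_mem.2 hxpm)
    have hWmem : P.part w ∈ P.parts := (P.part_mem.2 hwpm)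
    have hnXmem : negS (P.part x) ∈ P.parts := hsym _ hXmem
    have hnWmem : negS (P.part w) ∈ P.parts := hsym _ hWmem
    rw [Finset.disjoint_left]
    intro B hB hB'
    apply hef
    have hcx := cell_eq_trace P hcondx
    have hcw := cell_eq_trace P hcondw
    have hnx := ncell_eq_trace P x
    have hnw := ncell_eq_trace P w
    rcases Finset.mem_insert.1 hB with rfl | hB <;>
      rcases Finset.mem_insert.1 hB' with heqB | hB'
    · -- cell x = cell w
      have : P.part x = P.part w := by
        apply trace_inj P hXmem hWmem _ htx
        rw [← hcx, ← hcw, heqB]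
      have e1 : cell P x = cell P w := by rw [hcx, hcw, this]
      have e2 : ncell P x = ncell P w := by rw [hnx, hnw, this]
      rw [e1, e2]
    · -- cell x = ncell w
      rw [Finset.mem_singleton] at hB'
      have : P.part x = negS (P.part w) := by
        apply trace_inj P hXmem hnWmem _ htx
        rw [← hcx, ← hnw, hB']
      have h2 : negS (P.part x) = P.part w := by rw [this, negS_negS]
      have e1 : cell P x = ncell P w := by rw [hcx, hnw, this]
      have e2 : ncell P x = cell P w := by rw [hnx, hcw, h2]
      rw [e1, e2, Finset.pair_comm]
    · -- ncell x = cell w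
      rw [Finset.mem_singleton] at hB
      subst hB
      have : negS (P.part x) = P.part w := by
        apply trace_inj P hnXmem hWmem _ htnx
        rw [← hnx, ← hcw, heqB]
      have h2 : P.part x = negS (P.part w) := by rw [← this, negS_negS]
      have e1 : cell P x = ncell P w := by rw [hcx, hnw, h2]
      have e2 : ncell P x = cell P w := by rw [hnx, hcw, this]
      rw [e1, e2, Finset.pair_comm]
    · -- ncell x = ncell w
      rw [Finset.mem_singleton] at hB hB'
      subst hB
      have : negS (P.part x) = negS (P.part w) := by
        apply trace_inj P hnXmem hnWmem _ htnx
        rw [← hnx, ← hnw, hB']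
      have heq2 := negS_inj this
      have e1 : cell P x = cell P w := by rw [hcx, hcw, heq2]
      have e2 : ncell P x = ncell P w := by rw [hnx, hnw, heq2]
      rw [e1, e2]

end Forward

/-! ### the reverse map -/

section Reverse
variable {k : ℕ} {Q : Finset (Finset ℤ)} {M : Finset (Finset (Finset ℤ))}

lemma zero_mem_Icc0k : (0:ℤ) ∈ Finset.Icc (0:ℤ) (k:ℤ) :=
  Finset.mem_Icc.2 ⟨le_refl 0, Int.ofNat_nonneg k⟩

lemma eq_zeroBlk (hQ : Q ∈ partitionsOf (Finset.Icc (0:ℤ) (k:ℤ)))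
    {B : Finset ℤ} (hB : B ∈ Q) (h0 : (0:ℤ) ∈ B) : B = zeroBlk Q := by
  obtain ⟨-, -, hdis, -⟩ := mem_partitionsOf.1 hQ
  have : Q.filter (fun t => (0:ℤ) ∈ t) = {B} := by
    ext C
    simp only [Finset.mem_filter, Finset.mem_singleton]
    constructor
    · rintro ⟨hC, h0C⟩
      by_contra hne
      exact Finset.disjoint_left.1 (hdis C hC B hB hne) h0C h0
    · rintro rfl; exact ⟨hB, h0⟩
  rw [zeroBlk, this, Finset.sup_singleton, id]

lemma zeroBlk_mem (hQ : Q ∈ partitionsOf (Finset.Icc (0:ℤ) (k:ℤ))) :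
    zeroBlk Q ∈ Q ∧ (0:ℤ) ∈ zeroBlk Q := by
  obtain ⟨-, -, -, hcov⟩ := mem_partitionsOf.1 hQ
  obtain ⟨B, hB, h0⟩ := hcov 0 zero_mem_Icc0k
  have := eq_zeroBlk hQ hB h0
  subst this
  exact ⟨hB, h0⟩

lemma mem_V_subset (hQ : Q ∈ partitionsOf (Finset.Icc (0:ℤ) (k:ℤ)))
    {B : Finset ℤ} (hB : B ∈ Q.erase (zeroBlk Q)) : B ⊆ Finset.Icc (1:ℤ) (k:ℤ) := by
  obtain ⟨hBne, hBQ⟩ := Finset.mem_erase.1 hB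
  obtain ⟨hsub, -, -, -⟩ := mem_partitionsOf.1 hQ
  intro z hz
  have hz' := Finset.mem_Icc.1 (hsub B hBQ hz)
  have hz0 : z ≠ 0 := by
    rintro rfl
    exact hBne (eq_zeroBlk hQ hBQ hz)
  rw [Finset.mem_Icc]
  omega

noncomputable def partnerOf (M : Finset (Finset (Finset ℤ))) (B : Finset ℤ) : Finset ℤ :=
  (((M.filter (fun e => B ∈ e)).sup id).erase B).sup id

lemma partnerOf_uncovered {B : Finset ℤ} (h : ∀ e ∈ M, B ∉ e) : partnerOf M B = ∅ := by
  have : M.filter (fun e => B ∈ e) = ∅ := Finset.filter_eq_empty_iff.2 h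
  rw [partnerOf, this]
  simp

lemma partnerOf_spec {V : Finset (Finset ℤ)} (hM : M ∈ matchings V)
    {e : Finset (Finset ℤ)} {B : Finset ℤ} (he : e ∈ M) (hB : B ∈ e) :
    e = {B, partnerOf M B} ∧ partnerOf M B ≠ B ∧ partnerOf M B ∈ e := by
  obtain ⟨B', hB'ne, hepair⟩ := exists_pair_of_mem' hM he hB
  have : partnerOf M B = B' := by
    rw [partnerOf, filter_eq_singleton' hM he hB, Finset.sup_singleton, id, hepair,
      pair_erase hB'ne, Finset.sup_singleton, id]
  rw [this, hepair]
  exact ⟨rfl, hB'ne, by simp⟩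

lemma partnerOf_partner {V : Finset (Finset ℤ)} (hM : M ∈ matchings V)
    {e : Finset (Finset ℤ)} {B : Finset ℤ} (he : e ∈ M) (hB : B ∈ e) :
    partnerOf M (partnerOf M B) = B := by
  obtain ⟨hepair, hne, hmem⟩ := partnerOf_spec hM he hB
  obtain ⟨hepair', hne', hmem'⟩ := partnerOf_spec hM he hmem
  have : partnerOf M (partnerOf M B) ∈ e := hmem'
  rw [hepair] at this
  rcases Finset.mem_insert.1 this with h | h
  · exact h
  · rw [Finset.mem_singleton] at h
    exact absurd h hne'

lemma covered_of_partner_nonempty {B : Finset ℤ} (h : (partnerOf M B).Nonempty) :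
    ∃ e ∈ M, B ∈ e := by
  by_contra hcon
  push_neg at hcon
  rw [partnerOf_uncovered hcon] at h
  exact Finset.not_nonempty_empty h

noncomputable def blk1 (M : Finset (Finset (Finset ℤ))) (B : Finset ℤ) : Finset ℤ :=
  B ∪ negS (partnerOf M B)

noncomputable def blk2 (M : Finset (Finset (Finset ℤ))) (B : Finset ℤ) : Finset ℤ :=
  negS B ∪ partnerOf M B

noncomputable def symBlk (Q : Finset (Finset ℤ)) : Finset ℤ :=
  ((zeroBlk Q).erase 0) ∪ negS ((zeroBlk Q).erase 0)

lemma negS_blk1 (B : Finset ℤ) : negS (blk1 M B) = blk2 M B := by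
  rw [blk1, blk2, negS_union, negS_negS, Finset.union_comm]

lemma negS_blk2 (B : Finset ℤ) : negS (blk2 M B) = blk1 M B := by
  rw [← negS_blk1, negS_negS]

lemma negS_symBlk : negS (symBlk Q) = symBlk Q := by
  rw [symBlk, negS_union, negS_negS, Finset.union_comm]

open Classical in
noncomputable def gblocks (Q : Finset (Finset ℤ)) (M : Finset (Finset (Finset ℤ))) :
    Finset (Finset ℤ) :=
  ((Q.erase (zeroBlk Q)).image (blk1 M)) ∪ ((Q.erase (zeroBlk Q)).image (blk2 M)) ∪
    (if zeroBlk Q = {0} then ∅ else {symBlk Q})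

lemma mem_gblocks {X : Finset ℤ} :
    X ∈ gblocks Q M ↔ (∃ B ∈ Q.erase (zeroBlk Q), X = blk1 M B) ∨
      (∃ B ∈ Q.erase (zeroBlk Q), X = blk2 M B) ∨
      (zeroBlk Q ≠ {0} ∧ X = symBlk Q) := by
  classical
  simp only [gblocks, Finset.mem_union, Finset.mem_image]
  constructor
  · rintro ((⟨B, hB, rfl⟩ | ⟨B, hB, rfl⟩) | h)
    · exact Or.inl ⟨B, hB, rfl⟩
    · exact Or.inr (Or.inl ⟨B, hB, rfl⟩)
    · right; right
      by_cases h0 : zeroBlk Q = {0}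
      · rw [if_pos h0] at h; exact absurd h (Finset.notMem_empty X)
      · rw [if_neg h0, Finset.mem_singleton] at h; exact ⟨h0, h⟩
  · rintro (⟨B, hB, rfl⟩ | ⟨B, hB, rfl⟩ | ⟨h0, rfl⟩)
    · exact Or.inl (Or.inl ⟨B, hB, rfl⟩)
    · exact Or.inl (Or.inr ⟨B, hB, rfl⟩)
    · right; rw [if_neg h0]; exact Finset.mem_singleton_self _

variable (hQ : Q ∈ partitionsOf (Finset.Icc (0:ℤ) (k:ℤ)))
  (hM : M ∈ matchings (Q.erase (zeroBlk Q)))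

include hQ hM in
lemma partnerOf_subset {B : Finset ℤ} : partnerOf M B ⊆ Finset.Icc (1:ℤ) (k:ℤ) := by
  by_cases h : (partnerOf M B).Nonempty
  · obtain ⟨e, he, hB⟩ := covered_of_partner_nonempty h
    obtain ⟨-, -, hmem⟩ := partnerOf_spec hM he hB
    have := (mem_matchings.1 hM).1 e he hmem
    exact mem_V_subset hQ this
  · rw [Finset.not_nonempty_iff_eq_empty.1 h]
    exact Finset.empty_subset _

include hQ in
lemma zeroBlk_erase_subset : (zeroBlk Q).erase 0 ⊆ Finset.Icc (1:ℤ) (k:ℤ) := by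
  obtain ⟨hmem, -⟩ := zeroBlk_mem hQ
  obtain ⟨hsub, -, -, -⟩ := mem_partitionsOf.1 hQ
  intro z hz
  obtain ⟨hz0, hzB⟩ := Finset.mem_erase.1 hz
  have := Finset.mem_Icc.1 (hsub _ hmem hzB)
  rw [Finset.mem_Icc]
  omega

include hQ hM in
lemma pos_mem_blk1 {B : Finset ℤ} (hB : B ∈ Q.erase (zeroBlk Q)) {z : ℤ} (hz : 0 < z) :
    z ∈ blk1 M B ↔ z ∈ B := by
  rw [blk1, Finset.mem_union, mem_negS]
  constructor
  · rintro (h | h)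
    · exact h
    · have := Finset.mem_Icc.1 (partnerOf_subset hQ hM h)
      omega
  · exact Or.inl

include hQ hM in
lemma neg_mem_blk1 {B : Finset ℤ} (hB : B ∈ Q.erase (zeroBlk Q)) {z : ℤ} (hz : z < 0) :
    z ∈ blk1 M B ↔ -z ∈ partnerOf M B := by
  rw [blk1, Finset.mem_union, mem_negS]
  constructor
  · rintro (h | h)
    · have := Finset.mem_Icc.1 (mem_V_subset hQ hB h)
      omega
    · exact h
  · exact Or.inr

include hQ hM in
lemma pos_mem_blk2 {B : Finset ℤ} (hB : B ∈ Q.erase (zeroBlk Q)) {z : ℤ} (hz : 0 < z) :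
    z ∈ blk2 M B ↔ z ∈ partnerOf M B := by
  rw [blk2, Finset.mem_union, mem_negS]
  constructor
  · rintro (h | h)
    · have := Finset.mem_Icc.1 (mem_V_subset hQ hB h)
      omega
    · exact h
  · exact Or.inr

include hQ hM in
lemma neg_mem_blk2 {B : Finset ℤ} (hB : B ∈ Q.erase (zeroBlk Q)) {z : ℤ} (hz : z < 0) :
    z ∈ blk2 M B ↔ -z ∈ B := by
  rw [blk2, Finset.mem_union, mem_negS]
  constructor
  · rintro (h | h)
    · exact h
    · have := Finset.mem_Icc.1 (partnerOf_subset hQ hM h)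
      omega
  · exact Or.inl

include hQ in
lemma pos_mem_symBlk {z : ℤ} (hz : 0 < z) :
    z ∈ symBlk Q ↔ z ∈ (zeroBlk Q).erase 0 := by
  rw [symBlk, Finset.mem_union, mem_negS]
  constructor
  · rintro (h | h)
    · exact h
    · have := Finset.mem_Icc.1 (zeroBlk_erase_subset hQ h)
      omega
  · exact Or.inl

include hQ in
lemma neg_mem_symBlk {z : ℤ} (hz : z < 0) :
    z ∈ symBlk Q ↔ -z ∈ (zeroBlk Q).erase 0 := by
  rw [symBlk, Finset.mem_union, mem_negS]
  constructor
  · rintro (h | h)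
    · have := Finset.mem_Icc.1 (zeroBlk_erase_subset hQ h)
      omega
    · exact h
  · exact Or.inr

include hQ hM in
lemma zero_not_mem_gblocks {X : Finset ℤ} (hX : X ∈ gblocks Q M) : (0:ℤ) ∉ X := by
  intro h0
  rcases mem_gblocks.1 hX with ⟨B, hB, rfl⟩ | ⟨B, hB, rfl⟩ | ⟨h0Q, rfl⟩
  · rcases Finset.mem_union.1 h0 with h | h
    · have := Finset.mem_Icc.1 (mem_V_subset hQ hB h)
      omega
    · rw [mem_negS] at h
      have := Finset.mem_Icc.1 (partnerOf_subset hQ hM h)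
      omega
  · rcases Finset.mem_union.1 h0 with h | h
    · rw [mem_negS] at h
      have := Finset.mem_Icc.1 (mem_V_subset hQ hB h)
      omega
    · have := Finset.mem_Icc.1 (partnerOf_subset hQ hM h)
      omega
  · rcases Finset.mem_union.1 h0 with h | h
    · exact (Finset.mem_erase.1 h).1 rfl
    · rw [mem_negS] at h
      exact (Finset.mem_erase.1 h).1 (by omega)

include hQ hM in
lemma blk2_eq_blk1_of_covered {B : Finset ℤ} {e : Finset (Finset ℤ)}
    (he : e ∈ M) (hB : B ∈ e) : blk2 M B = blk1 M (partnerOf M B) := by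
  rw [blk1, partnerOf_partner hM he hB, blk2, Finset.union_comm]

include hQ hM in
lemma pos_desc {X : Finset ℤ} (hX : X ∈ gblocks Q M) {z : ℤ} (hz : 0 < z) (hzX : z ∈ X) :
    (∃ B ∈ Q.erase (zeroBlk Q), z ∈ B ∧ X = blk1 M B) ∨
      (z ∈ (zeroBlk Q).erase 0 ∧ X = symBlk Q ∧ zeroBlk Q ≠ {0}) := by
  rcases mem_gblocks.1 hX with ⟨B, hB, rfl⟩ | ⟨B, hB, rfl⟩ | ⟨h0Q, rfl⟩
  · exact Or.inl ⟨B, hB, (pos_mem_blk1 hQ hM hB hz).1 hzX, rfl⟩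
  · have hzp : z ∈ partnerOf M B := (pos_mem_blk2 hQ hM hB hz).1 hzX
    obtain ⟨e, he, hBe⟩ := covered_of_partner_nonempty ⟨z, hzp⟩
    obtain ⟨-, -, hpmem⟩ := partnerOf_spec hM he hBe
    have hpV : partnerOf M B ∈ Q.erase (zeroBlk Q) := (mem_matchings.1 hM).1 e he hpmem
    exact Or.inl ⟨partnerOf M B, hpV, hzp, blk2_eq_blk1_of_covered hQ hM he hBe⟩
  · exact Or.inr ⟨(pos_mem_symBlk hQ hz).1 hzX, rfl, h0Q⟩

include hQ hM in
lemma neg_desc {X : Finset ℤ} (hX : X ∈ gblocks Q M) {z : ℤ} (hz : z < 0) (hzX : z ∈ X) :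
    (∃ B ∈ Q.erase (zeroBlk Q), -z ∈ B ∧ X = blk2 M B) ∨
      (-z ∈ (zeroBlk Q).erase 0 ∧ X = symBlk Q ∧ zeroBlk Q ≠ {0}) := by
  rcases mem_gblocks.1 hX with ⟨B, hB, rfl⟩ | ⟨B, hB, rfl⟩ | ⟨h0Q, rfl⟩
  · have hzp : -z ∈ partnerOf M B := (neg_mem_blk1 hQ hM hB hz).1 hzX
    obtain ⟨e, he, hBe⟩ := covered_of_partner_nonempty ⟨-z, hzp⟩
    obtain ⟨-, -, hpmem⟩ := partnerOf_spec hM he hBe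
    have hpV : partnerOf M B ∈ Q.erase (zeroBlk Q) := (mem_matchings.1 hM).1 e he hpmem
    refine Or.inl ⟨partnerOf M B, hpV, hzp, ?_⟩
    rw [← negS_blk2 (M := M) B, blk2_eq_blk1_of_covered hQ hM he hBe, negS_blk1]
  · exact Or.inl ⟨B, hB, (neg_mem_blk2 hQ hM hB hz).1 hzX, rfl⟩
  · exact Or.inr ⟨(neg_mem_symBlk hQ hz).1 hzX, rfl, h0Q⟩

include hQ hM in
lemma gblocks_eq_of_mem {X Y : Finset ℤ} (hX : X ∈ gblocks Q M) (hY : Y ∈ gblocks Q M)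
    {z : ℤ} (hzX : z ∈ X) (hzY : z ∈ Y) : X = Y := by
  obtain ⟨-, -, hdis, -⟩ := mem_partitionsOf.1 hQ
  have hz0 : z ≠ 0 := by
    rintro rfl
    exact zero_not_mem_gblocks hQ hM hX hzX
  have key : ∀ {w : ℤ}, 0 < w →
      ∀ {X' Y' : Finset ℤ}, X' ∈ gblocks Q M → Y' ∈ gblocks Q M →
        (∃ B ∈ Q.erase (zeroBlk Q), w ∈ B ∧ X' = blk1 M B) ∨
          (w ∈ (zeroBlk Q).erase 0 ∧ X' = symBlk Q ∧ zeroBlk Q ≠ {0}) →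
        (∃ B ∈ Q.erase (zeroBlk Q), w ∈ B ∧ Y' = blk1 M B) ∨
          (w ∈ (zeroBlk Q).erase 0 ∧ Y' = symBlk Q ∧ zeroBlk Q ≠ {0}) → X' = Y' := by
    intro w hw X' Y' hX' hY' hdX hdY
    rcases hdX with ⟨B, hB, hwB, rfl⟩ | ⟨hwB, rfl, h0⟩ <;>
      rcases hdY with ⟨C, hC, hwC, rfl⟩ | ⟨hwC, rfl, h0'⟩
    · have : B = C := by
        by_contra hne
        obtain ⟨hB1, hB2⟩ := Finset.mem_erase.1 hB
        obtain ⟨hC1, hC2⟩ := Finset.mem_erase.1 hC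
        exact Finset.disjoint_left.1 (hdis B hB2 C hC2 hne) hwB hwC
      rw [this]
    · exfalso
      obtain ⟨hB1, hB2⟩ := Finset.mem_erase.1 hB
      obtain ⟨hwC0, hwCB⟩ := Finset.mem_erase.1 hwC
      apply hB1
      by_contra hne
      exact Finset.disjoint_left.1 (hdis B hB2 _ (zeroBlk_mem hQ).1 hne) hwB hwCB
    · exfalso
      obtain ⟨hC1, hC2⟩ := Finset.mem_erase.1 hC
      obtain ⟨hwB0, hwBB⟩ := Finset.mem_erase.1 hwB
      apply hC1
      by_contra hne
      exact Finset.disjoint_left.1 (hdis C hC2 _ (zeroBlk_mem hQ).1 hne) hwC hwBB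
    · rfl
  rcases lt_or_gt_of_ne hz0 with hneg | hpos
  · -- use negS descriptors
    have hdX := neg_desc hQ hM hX hneg hzX
    have hdY := neg_desc hQ hM hY hneg hzY
    -- translate to positive descriptors of negS X
    have hnX : negS X ∈ gblocks Q M := by
      rcases mem_gblocks.1 hX with ⟨B, hB, rfl⟩ | ⟨B, hB, rfl⟩ | ⟨h0Q, rfl⟩
      · rw [negS_blk1]; exact mem_gblocks.2 (Or.inr (Or.inl ⟨B, hB, rfl⟩))
      · rw [negS_blk2]; exact mem_gblocks.2 (Or.inl ⟨B, hB, rfl⟩)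
      · rw [negS_symBlk]; exact mem_gblocks.2 (Or.inr (Or.inr ⟨h0Q, rfl⟩))
    have hnY : negS Y ∈ gblocks Q M := by
      rcases mem_gblocks.1 hY with ⟨B, hB, rfl⟩ | ⟨B, hB, rfl⟩ | ⟨h0Q, rfl⟩
      · rw [negS_blk1]; exact mem_gblocks.2 (Or.inr (Or.inl ⟨B, hB, rfl⟩))
      · rw [negS_blk2]; exact mem_gblocks.2 (Or.inl ⟨B, hB, rfl⟩)
      · rw [negS_symBlk]; exact mem_gblocks.2 (Or.inr (Or.inr ⟨h0Q, rfl⟩))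
    have hdnX : (∃ B ∈ Q.erase (zeroBlk Q), -z ∈ B ∧ negS X = blk1 M B) ∨
        (-z ∈ (zeroBlk Q).erase 0 ∧ negS X = symBlk Q ∧ zeroBlk Q ≠ {0}) := by
      rcases hdX with ⟨B, hB, hzB, rfl⟩ | ⟨hzB, rfl, h0⟩
      · exact Or.inl ⟨B, hB, hzB, negS_blk2 B⟩
      · exact Or.inr ⟨hzB, negS_symBlk, h0⟩
    have hdnY : (∃ B ∈ Q.erase (zeroBlk Q), -z ∈ B ∧ negS Y = blk1 M B) ∨
        (-z ∈ (zeroBlk Q).erase 0 ∧ negS Y = symBlk Q ∧ zeroBlk Q ≠ {0}) := by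
      rcases hdY with ⟨B, hB, hzB, rfl⟩ | ⟨hzB, rfl, h0⟩
      · exact Or.inl ⟨B, hB, hzB, negS_blk2 B⟩
      · exact Or.inr ⟨hzB, negS_symBlk, h0⟩
    have := key (by omega : (0:ℤ) < -z) hnX hnY hdnX hdnY
    exact negS_inj this
  · exact key hpos hX hY (pos_desc hQ hM hX hpos hzX) (pos_desc hQ hM hY hpos hzY)

include hQ in
lemma gblocks_nonempty {X : Finset ℤ} (hX : X ∈ gblocks Q M) : X.Nonempty := by
  obtain ⟨-, hne, -, -⟩ := mem_partitionsOf.1 hQ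
  rcases mem_gblocks.1 hX with ⟨B, hB, rfl⟩ | ⟨B, hB, rfl⟩ | ⟨h0Q, rfl⟩
  · obtain ⟨x, hx⟩ := hne B (Finset.mem_erase.1 hB).2
    exact ⟨x, Finset.mem_union_left _ hx⟩
  · obtain ⟨x, hx⟩ := hne B (Finset.mem_erase.1 hB).2
    exact ⟨-x, Finset.mem_union_left _ (mem_negS.2 (by simpa using hx))⟩
  · obtain ⟨hmem, h0⟩ := zeroBlk_mem hQ
    have : ((zeroBlk Q).erase 0).Nonempty := by
      rw [Finset.nonempty_iff_ne_empty]
      intro hcon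
      apply h0Q
      apply Finset.eq_singleton_iff_unique_mem.2
      refine ⟨h0, fun x hx => ?_⟩
      by_contra hxne
      exact absurd (Finset.mem_erase.2 ⟨hxne, hx⟩) (hcon ▸ Finset.notMem_empty x)
    obtain ⟨x, hx⟩ := this
    exact ⟨x, Finset.mem_union_left _ hx⟩

include hQ hM in
lemma gblocks_subset {X : Finset ℤ} (hX : X ∈ gblocks Q M) : X ⊆ pmSet k := by
  intro z hz
  have hz0 : z ≠ 0 := fun h => zero_not_mem_gblocks hQ hM hX (h ▸ hz)
  rcases lt_or_gt_of_ne hz0 with hneg | hpos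
  · rcases neg_desc hQ hM hX hneg hz with ⟨B, hB, hzB, -⟩ | ⟨hzB, -, -⟩
    · have := Finset.mem_Icc.1 (mem_V_subset hQ hB hzB)
      exact mem_pmSet.2 ⟨hz0, by omega, by omega⟩
    · have := Finset.mem_Icc.1 (zeroBlk_erase_subset hQ hzB)
      exact mem_pmSet.2 ⟨hz0, by omega, by omega⟩
  · rcases pos_desc hQ hM hX hpos hz with ⟨B, hB, hzB, -⟩ | ⟨hzB, -, -⟩
    · have := Finset.mem_Icc.1 (mem_V_subset hQ hB hzB)
      exact mem_pmSet.2 ⟨hz0, by omega, by omega⟩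
    · have := Finset.mem_Icc.1 (zeroBlk_erase_subset hQ hzB)
      exact mem_pmSet.2 ⟨hz0, by omega, by omega⟩

include hQ hM in
lemma gblocks_cover {x : ℤ} (hx : x ∈ pmSet k) : ∃ X ∈ gblocks Q M, x ∈ X := by
  obtain ⟨-, -, -, hcov⟩ := mem_partitionsOf.1 hQ
  obtain ⟨hx0, hxl, hxu⟩ := mem_pmSet.1 hx
  rcases lt_or_gt_of_ne hx0 with hneg | hpos
  · obtain ⟨B, hB, hxB⟩ := hcov (-x) (Finset.mem_Icc.2 ⟨by omega, by omega⟩)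
    by_cases hBz : B = zeroBlk Q
    · subst hBz
      have h0Q : zeroBlk Q ≠ {0} := by
        intro hcon
        rw [hcon, Finset.mem_singleton] at hxB
        omega
      refine ⟨symBlk Q, mem_gblocks.2 (Or.inr (Or.inr ⟨h0Q, rfl⟩)), ?_⟩
      rw [neg_mem_symBlk hQ hneg]
      exact Finset.mem_erase.2 ⟨by omega, hxB⟩
    · have hBV : B ∈ Q.erase (zeroBlk Q) := Finset.mem_erase.2 ⟨hBz, hB⟩
      refine ⟨blk2 M B, mem_gblocks.2 (Or.inr (Or.inl ⟨B, hBV, rfl⟩)), ?_⟩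
      rw [neg_mem_blk2 hQ hM hBV hneg]
      exact hxB
  · obtain ⟨B, hB, hxB⟩ := hcov x (Finset.mem_Icc.2 ⟨by omega, by omega⟩)
    by_cases hBz : B = zeroBlk Q
    · subst hBz
      have h0Q : zeroBlk Q ≠ {0} := by
        intro hcon
        rw [hcon, Finset.mem_singleton] at hxB
        omega
      refine ⟨symBlk Q, mem_gblocks.2 (Or.inr (Or.inr ⟨h0Q, rfl⟩)), ?_⟩
      rw [pos_mem_symBlk hQ hpos]
      exact Finset.mem_erase.2 ⟨by omega, hxB⟩
    · have hBV : B ∈ Q.erase (zeroBlk Q) := Finset.mem_erase.2 ⟨hBz, hB⟩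
      refine ⟨blk1 M B, mem_gblocks.2 (Or.inl ⟨B, hBV, rfl⟩), ?_⟩
      rw [pos_mem_blk1 hQ hM hBV hpos]
      exact hxB

/-- The reconstructed finpartition. -/
noncomputable def revP (hQ : Q ∈ partitionsOf (Finset.Icc (0:ℤ) (k:ℤ)))
    (hM : M ∈ matchings (Q.erase (zeroBlk Q))) : Finpartition (pmSet k) where
  parts := gblocks Q M
  supIndep := by
    rw [Finset.supIndep_iff_pairwiseDisjoint]
    intro X hX Y hY hne
    rw [Function.onFun, Finset.disjoint_left]
    intro z hzX hzY
    exact hne (gblocks_eq_of_mem hQ hM (Finset.mem_coe.1 hX) (Finset.mem_coe.1 hY) hzX hzY)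
  sup_parts := by
    apply le_antisymm
    · refine Finset.sup_le fun X hX => ?_
      exact gblocks_subset hQ hM hX
    · intro x hx
      obtain ⟨X, hX, hxX⟩ := gblocks_cover hQ hM hx
      exact Finset.mem_sup.2 ⟨X, hX, hxX⟩
  bot_notMem := by
    intro hcon
    obtain ⟨x, hx⟩ := gblocks_nonempty hQ hcon
    exact Finset.notMem_empty x hx

include hQ hM in
lemma blk1_not_symm {B : Finset ℤ} (hB : B ∈ Q.erase (zeroBlk Q)) :
    negS (blk1 M B) ≠ blk1 M B := by
  intro hcon
  rw [negS_blk1] at hcon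
  have hBp : B = partnerOf M B := by
    apply Finset.Subset.antisymm
    · intro z hz
      have hzpos : 0 < z := by
        have := Finset.mem_Icc.1 (mem_V_subset hQ hB hz)
        omega
      have h1 : z ∈ blk1 M B := (pos_mem_blk1 hQ hM hB hzpos).2 hz
      rw [← hcon] at h1
      exact (pos_mem_blk2 hQ hM hB hzpos).1 h1
    · intro z hz
      have hzpos : 0 < z := by
        have := Finset.mem_Icc.1 (partnerOf_subset hQ hM hz)
        omega
      have h1 : z ∈ blk2 M B := (pos_mem_blk2 hQ hM hB hzpos).2 hz
      rw [hcon] at h1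
      exact (pos_mem_blk1 hQ hM hB hzpos).1 h1
  by_cases h : (partnerOf M B).Nonempty
  · obtain ⟨e, he, hBe⟩ := covered_of_partner_nonempty h
    obtain ⟨-, hne, -⟩ := partnerOf_spec hM he hBe
    exact hne hBp.symm
  · rw [Finset.not_nonempty_iff_eq_empty.1 h] at hBp
    obtain ⟨-, hne, -, -⟩ := mem_partitionsOf.1 hQ
    obtain ⟨x, hx⟩ := hne B (Finset.mem_erase.1 hB).2
    rw [hBp] at hx
    exact Finset.notMem_empty x hx

include hQ hM in
lemma symm_eq_symBlk {X : Finset ℤ} (hX : X ∈ gblocks Q M) (hs : negS X = X) :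
    X = symBlk Q := by
  rcases mem_gblocks.1 hX with ⟨B, hB, rfl⟩ | ⟨B, hB, rfl⟩ | ⟨-, rfl⟩
  · exact absurd hs (blk1_not_symm hQ hM hB)
  · exfalso
    apply blk1_not_symm hQ hM hB
    rw [negS_blk1, ← hs, negS_blk2]
  · rfl

include hQ hM in
lemma revP_symm : ∀ X ∈ (revP hQ hM).parts, X.image (fun x => -x) ∈ (revP hQ hM).parts := by
  intro X hX
  show negS X ∈ gblocks Q M
  rcases mem_gblocks.1 hX with ⟨B, hB, rfl⟩ | ⟨B, hB, rfl⟩ | ⟨h0Q, rfl⟩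
  · rw [negS_blk1]; exact mem_gblocks.2 (Or.inr (Or.inl ⟨B, hB, rfl⟩))
  · rw [negS_blk2]; exact mem_gblocks.2 (Or.inl ⟨B, hB, rfl⟩)
  · rw [negS_symBlk]; exact mem_gblocks.2 (Or.inr (Or.inr ⟨h0Q, rfl⟩))

include hQ hM in
lemma revP_uniq : ∀ X ∈ (revP hQ hM).parts, ∀ Y ∈ (revP hQ hM).parts,
    X.image (fun x => -x) = X → Y.image (fun x => -x) = Y → X = Y := by
  intro X hX Y hY hsX hsY
  rw [symm_eq_symBlk hQ hM hX hsX, symm_eq_symBlk hQ hM hY hsY]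

include hQ hM in
lemma trace_blk1_eq {B : Finset ℤ} (hB : B ∈ Q.erase (zeroBlk Q)) :
    trace (blk1 M B) = B := by
  ext z
  simp only [trace, Finset.mem_filter]
  constructor
  · rintro ⟨h1, h2⟩
    exact (pos_mem_blk1 hQ hM hB h2).1 h1
  · intro hz
    have hzpos : 0 < z := by
      have := Finset.mem_Icc.1 (mem_V_subset hQ hB hz)
      omega
    exact ⟨(pos_mem_blk1 hQ hM hB hzpos).2 hz, hzpos⟩

include hQ hM in
lemma trace_blk2_eq {B : Finset ℤ} (hB : B ∈ Q.erase (zeroBlk Q)) :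
    trace (blk2 M B) = partnerOf M B := by
  ext z
  simp only [trace, Finset.mem_filter]
  constructor
  · rintro ⟨h1, h2⟩
    exact (pos_mem_blk2 hQ hM hB h2).1 h1
  · intro hz
    have hzpos : 0 < z := by
      have := Finset.mem_Icc.1 (partnerOf_subset hQ hM hz)
      omega
    exact ⟨(pos_mem_blk2 hQ hM hB hzpos).2 hz, hzpos⟩

include hQ hM in
lemma revP_part_blk1 {x : ℤ} {B : Finset ℤ} (hB : B ∈ Q.erase (zeroBlk Q)) (hx : x ∈ B) :
    (revP hQ hM).part x = blk1 M B := by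
  apply (revP hQ hM).part_eq_of_mem
  · show blk1 M B ∈ gblocks Q M
    exact mem_gblocks.2 (Or.inl ⟨B, hB, rfl⟩)
  · have hxpos : 0 < x := by
      have := Finset.mem_Icc.1 (mem_V_subset hQ hB hx)
      omega
    exact (pos_mem_blk1 hQ hM hB hxpos).2 hx

include hQ hM in
lemma revP_part_symBlk {x : ℤ} (hx : x ∈ (zeroBlk Q).erase 0) :
    (revP hQ hM).part x = symBlk Q := by
  have h0Q : zeroBlk Q ≠ {0} := by
    intro hcon
    obtain ⟨h1, h2⟩ := Finset.mem_erase.1 hx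
    rw [hcon, Finset.mem_singleton] at h2
    exact h1 h2
  apply (revP hQ hM).part_eq_of_mem
  · show symBlk Q ∈ gblocks Q M
    exact mem_gblocks.2 (Or.inr (Or.inr ⟨h0Q, rfl⟩))
  · have hxpos : 0 < x := by
      have := Finset.mem_Icc.1 (zeroBlk_erase_subset hQ hx)
      omega
    exact (pos_mem_symBlk hQ hxpos).2 hx

include hQ hM in
lemma cell_revP {x : ℤ} {B : Finset ℤ} (hB : B ∈ Q.erase (zeroBlk Q)) (hx : x ∈ B) :
    cell (revP hQ hM) x = B := by
  have hxI := Finset.mem_Icc.1 (mem_V_subset hQ hB hx)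
  have hpart := revP_part_blk1 hQ hM hB hx
  have hcond : 0 < x ∧ x ≤ (k:ℤ) ∧ negS ((revP hQ hM).part x) ≠ (revP hQ hM).part x := by
    refine ⟨by omega, by omega, ?_⟩
    rw [hpart]
    exact blk1_not_symm hQ hM hB
  rw [cell_of_pos _ hcond]
  show trace ((revP hQ hM).part x) = B
  rw [hpart, trace_blk1_eq hQ hM hB]

include hQ hM in
lemma Z0_revP : Z0 (revP hQ hM) = zeroBlk Q := by
  have hfil : (pmSet k).filter
      (fun y => 0 < y ∧ negS ((revP hQ hM).part y) = (revP hQ hM).part y)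
      = (zeroBlk Q).erase 0 := by
    ext y
    simp only [Finset.mem_filter]
    constructor
    · rintro ⟨hy, hypos, hysym⟩
      obtain ⟨hy0, -, hyk⟩ := mem_pmSet.1 hy
      obtain ⟨-, -, -, hcov⟩ := mem_partitionsOf.1 hQ
      obtain ⟨C, hC, hyC⟩ := hcov y (Finset.mem_Icc.2 ⟨by omega, by omega⟩)
      by_cases hCz : C = zeroBlk Q
      · subst hCz
        exact Finset.mem_erase.2 ⟨hy0, hyC⟩
      · exfalso
        have hCV : C ∈ Q.erase (zeroBlk Q) := Finset.mem_erase.2 ⟨hCz, hC⟩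
        rw [revP_part_blk1 hQ hM hCV hyC] at hysym
        exact blk1_not_symm hQ hM hCV hysym
    · intro hy
      have hyI := Finset.mem_Icc.1 (zeroBlk_erase_subset hQ hy)
      refine ⟨mem_pmSet.2 ⟨by omega, by omega, by omega⟩, by omega, ?_⟩
      rw [revP_part_symBlk hQ hM hy]
      exact negS_symBlk
  rw [Z0, hfil, Finset.insert_erase (zeroBlk_mem hQ).2]

include hQ hM in
lemma Qof_revP : Qof (revP hQ hM) = Q := by
  ext B
  constructor
  · intro hB
    obtain ⟨x, hxI, rfl⟩ := Finset.mem_image.1 hB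
    by_cases hcond : 0 < x ∧ x ≤ (k:ℤ) ∧
        negS ((revP hQ hM).part x) ≠ (revP hQ hM).part x
    · obtain ⟨-, -, -, hcov⟩ := mem_partitionsOf.1 hQ
      obtain ⟨C, hC, hxC⟩ := hcov x (Finset.mem_Icc.2 ⟨by omega, by omega⟩)
      by_cases hCz : C = zeroBlk Q
      · exfalso
        subst hCz
        have hx' : x ∈ (zeroBlk Q).erase 0 := Finset.mem_erase.2 ⟨by omega, hxC⟩
        rw [revP_part_symBlk hQ hM hx'] at hcond
        exact hcond.2.2 negS_symBlk
      · have hCV : C ∈ Q.erase (zeroBlk Q) := Finset.mem_erase.2 ⟨hCz, hC⟩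
        rw [cell_revP hQ hM hCV hxC]
        exact hC
    · rw [cell_of_not _ hcond, Z0_revP hQ hM]
      exact (zeroBlk_mem hQ).1
  · intro hB
    by_cases hBz : B = zeroBlk Q
    · subst hBz
      refine Finset.mem_image.2 ⟨0, zero_mem_Icc0k, ?_⟩
      rw [cell_zero, Z0_revP hQ hM]
    · have hBV : B ∈ Q.erase (zeroBlk Q) := Finset.mem_erase.2 ⟨hBz, hB⟩
      obtain ⟨-, hne, -, -⟩ := mem_partitionsOf.1 hQ
      obtain ⟨x, hx⟩ := hne B hB
      have hxI := Finset.mem_Icc.1 (mem_V_subset hQ hBV hx)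
      refine Finset.mem_image.2 ⟨x, Finset.mem_Icc.2 ⟨by omega, by omega⟩, ?_⟩
      exact cell_revP hQ hM hBV hx

include hQ hM in
lemma ncell_revP {x : ℤ} {B : Finset ℤ} (hB : B ∈ Q.erase (zeroBlk Q)) (hx : x ∈ B) :
    ncell (revP hQ hM) x = partnerOf M B := by
  rw [ncell_eq_trace, revP_part_blk1 hQ hM hB hx, negS_blk1, trace_blk2_eq hQ hM hB]

include hQ hM in
lemma Mof_revP : Mof (revP hQ hM) = M := by
  have hVz : zeroBlk (Qof (revP hQ hM)) = zeroBlk Q := by rw [Qof_revP hQ hM]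
  ext e
  rw [Mof, Finset.mem_image]
  constructor
  · rintro ⟨x, hx, rfl⟩
    obtain ⟨hxI, hxsym, y, hy, hy0⟩ := Finset.mem_filter.1 hx
    rw [Finset.mem_Icc] at hxI
    obtain ⟨-, -, -, hcov⟩ := mem_partitionsOf.1 hQ
    obtain ⟨C, hC, hxC⟩ := hcov x (Finset.mem_Icc.2 ⟨by omega, by omega⟩)
    by_cases hCz : C = zeroBlk Q
    · exfalso
      subst hCz
      have hx' : x ∈ (zeroBlk Q).erase 0 := Finset.mem_erase.2 ⟨by omega, hxC⟩
      rw [revP_part_symBlk hQ hM hx'] at hxsym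
      exact hxsym negS_symBlk
    · have hCV : C ∈ Q.erase (zeroBlk Q) := Finset.mem_erase.2 ⟨hCz, hC⟩
      rw [cell_revP hQ hM hCV hxC, ncell_revP hQ hM hCV hxC]
      -- y is a negative element of blk1 M C, so C is matched
      rw [revP_part_blk1 hQ hM hCV hxC] at hy
      have hyp : -y ∈ partnerOf M C := (neg_mem_blk1 hQ hM hCV hy0).1 hy
      obtain ⟨e, he, hCe⟩ := covered_of_partner_nonempty ⟨-y, hyp⟩
      obtain ⟨hepair, -, -⟩ := partnerOf_spec hM he hCe
      rw [← hepair]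
      exact he
  · intro he
    obtain ⟨hsubV, hcard2, -⟩ := mem_matchings.1 hM
    have hene : e.Nonempty := Finset.card_pos.1 (by rw [hcard2 e he]; omega)
    obtain ⟨B, hBe⟩ := hene
    have hBV : B ∈ Q.erase (zeroBlk Q) := hsubV e he hBe
    obtain ⟨hepair, hpne, hpmem⟩ := partnerOf_spec hM he hBe
    obtain ⟨-, hne, -, -⟩ := mem_partitionsOf.1 hQ
    obtain ⟨x, hx⟩ := hne B (Finset.mem_erase.1 hBV).2
    have hxI := Finset.mem_Icc.1 (mem_V_subset hQ hBV hx)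
    have hpV : partnerOf M B ∈ Q.erase (zeroBlk Q) := hsubV e he hpmem
    obtain ⟨z, hz⟩ := hne _ (Finset.mem_erase.1 hpV).2
    refine ⟨x, Finset.mem_filter.2 ⟨Finset.mem_Icc.2 ⟨by omega, by omega⟩, ?_, ?_⟩, ?_⟩
    · rw [revP_part_blk1 hQ hM hBV hx]
      exact blk1_not_symm hQ hM hBV
    · refine ⟨-z, ?_, ?_⟩
      · rw [revP_part_blk1 hQ hM hBV hx]
        have hzpos : 0 < z := by
          have := Finset.mem_Icc.1 (mem_V_subset hQ hpV hz)
          omega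
        rw [neg_mem_blk1 hQ hM hBV (by omega : -z < 0)]
        simpa using hz
      · have := Finset.mem_Icc.1 (mem_V_subset hQ hpV hz)
        omega
    · rw [cell_revP hQ hM hBV hx, ncell_revP hQ hM hBV hx, ← hepair]

end Reverse

/-! ### round trip 2 -/

section RT2
variable {k : ℕ} (P : Finpartition (pmSet k))
  (hsym : ∀ X ∈ P.parts, X.image (fun x => -x) ∈ P.parts)
  (huniq : ∀ X ∈ P.parts, ∀ Y ∈ P.parts,
      X.image (fun x => -x) = X → Y.image (fun x => -x) = Y → X = Y)

lemma cell_mem_V {x : ℤ} (hcond : 0 < x ∧ x ≤ (k:ℤ) ∧ negS (P.part x) ≠ P.part x) :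
    cell P x ∈ (Qof P).erase (zeroBlk (Qof P)) := by
  rw [zeroBlk_Qof]
  refine Finset.mem_erase.2 ⟨?_, ?_⟩
  · intro hcon
    have := zero_mem_Z0 P
    rw [← hcon, cell_of_pos P hcond] at this
    obtain ⟨-, h0⟩ := Finset.mem_filter.1 this
    omega
  · exact Finset.mem_image.2 ⟨x, Finset.mem_Icc.2 ⟨by omega, by omega⟩, rfl⟩

include hsym in
lemma partner_cell_mixed {x : ℤ} (hcond : 0 < x ∧ x ≤ (k:ℤ) ∧ negS (P.part x) ≠ P.part x)
    (hmix : ∃ y ∈ P.part x, y < 0) :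
    partnerOf (Mof P) (cell P x) = ncell P x := by
  have hM := Mof_mem P hsym
  have hxfil : x ∈ (Finset.Icc (1:ℤ) (k:ℤ)).filter
      (fun x => negS (P.part x) ≠ P.part x ∧ ∃ y ∈ P.part x, y < 0) :=
    Finset.mem_filter.2 ⟨Finset.mem_Icc.2 ⟨by omega, by omega⟩, hcond.2.2, hmix⟩
  have he : ({cell P x, ncell P x} : Finset (Finset ℤ)) ∈ Mof P :=
    Finset.mem_image.2 ⟨x, hxfil, rfl⟩
  obtain ⟨hepair, hpne, hpmem⟩ := partnerOf_spec hM he (Finset.mem_insert_self _ _)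
  rcases Finset.mem_insert.1 hpmem with h | h
  · exact absurd h hpne
  · exact Finset.mem_singleton.1 h

include hsym in
lemma partner_cell_unmixed {x : ℤ} (hx : x ∈ pmSet k)
    (hcond : 0 < x ∧ x ≤ (k:ℤ) ∧ negS (P.part x) ≠ P.part x)
    (hmix : ¬ ∃ y ∈ P.part x, y < 0) :
    partnerOf (Mof P) (cell P x) = ∅ := by
  apply partnerOf_uncovered
  intro e he hmem
  obtain ⟨w, hw, rfl⟩ := Finset.mem_image.1 he
  obtain ⟨hwI, hwsym, hwmix⟩ := Finset.mem_filter.1 hw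
  rw [Finset.mem_Icc] at hwI
  have hwpm : w ∈ pmSet k := mem_pmSet.2 ⟨by omega, by omega, by omega⟩
  have htx : (trace (P.part x)).Nonempty :=
    ⟨x, Finset.mem_filter.2 ⟨P.mem_part hx, hcond.1⟩⟩
  have hcx : cell P x = trace (P.part x) := cell_of_pos P hcond
  rcases Finset.mem_insert.1 hmem with h | h
  · have hcw : cell P w = trace (P.part w) :=
      cell_of_pos P ⟨by omega, by omega, hwsym⟩
    have : P.part x = P.part w := by
      apply trace_inj P ((P.part_mem.2 hx)) ((P.part_mem.2 hwpm)) _ htx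
      rw [← hcx, ← hcw, h]
    obtain ⟨y, hy, hy0⟩ := hwmix
    exact hmix ⟨y, this ▸ hy, hy0⟩
  · rw [Finset.mem_singleton] at h
    have hnW : negS (P.part w) ∈ P.parts := hsym _ ((P.part_mem.2 hwpm))
    have : P.part x = negS (P.part w) := by
      apply trace_inj P ((P.part_mem.2 hx)) hnW _ htx
      rw [← hcx, ← ncell_eq_trace, h]
    apply hmix
    refine ⟨-w, ?_, by omega⟩
    rw [this, mem_negS]
    simpa using P.mem_part hwpm

lemma negS_ncell (x : ℤ) : negS (ncell P x) = (P.part x).filter (fun y => y < 0) := by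
  ext z
  rw [mem_negS, ncell_eq_trace, trace, Finset.mem_filter, Finset.mem_filter, mem_negS]
  constructor
  · rintro ⟨h1, h2⟩
    exact ⟨by simpa using h1, by omega⟩
  · rintro ⟨h1, h2⟩
    exact ⟨by simpa using h1, by omega⟩

include hsym in
lemma blk1_cell {x : ℤ} (hcond : 0 < x ∧ x ≤ (k:ℤ) ∧ negS (P.part x) ≠ P.part x) :
    blk1 (Mof P) (cell P x) = P.part x := by
  have hx : x ∈ pmSet k := mem_pmSet.2 ⟨by omega, by omega, by omega⟩
  have hsub := part_subset_pmSet P hx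
  by_cases hmix : ∃ y ∈ P.part x, y < 0
  · rw [blk1, partner_cell_mixed P hsym hcond hmix, negS_ncell, cell_of_pos P hcond]
    ext z
    simp only [Finset.mem_union, Finset.mem_filter]
    constructor
    · rintro (⟨h, -⟩ | ⟨h, -⟩) <;> exact h
    · intro hz
      have hz0 : z ≠ 0 := (mem_pmSet.1 (hsub hz)).1
      rcases lt_or_gt_of_ne hz0 with h | h
      · exact Or.inr ⟨hz, h⟩
      · exact Or.inl ⟨hz, h⟩
  · rw [blk1, partner_cell_unmixed P hsym hx hcond hmix, cell_of_pos P hcond]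
    have : negS ∅ = (∅ : Finset ℤ) := by simp [negS]
    rw [this, Finset.union_empty]
    ext z
    simp only [Finset.mem_filter]
    constructor
    · rintro ⟨h, -⟩; exact h
    · intro hz
      refine ⟨hz, ?_⟩
      have hz0 : z ≠ 0 := (mem_pmSet.1 (hsub hz)).1
      push_neg at hmix
      have := hmix z hz
      omega

lemma S0_not_zero : (0:ℤ) ∉ (pmSet k).filter
    (fun y => 0 < y ∧ negS (P.part y) = P.part y) := by
  intro h
  obtain ⟨h1, -⟩ := Finset.mem_filter.1 h
  exact (mem_pmSet.1 h1).1 rfl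

lemma Z0_erase : (Z0 P).erase 0 = (pmSet k).filter
    (fun y => 0 < y ∧ negS (P.part y) = P.part y) := by
  rw [Z0, Finset.erase_insert (S0_not_zero P)]

include huniq in
lemma S0_eq_trace {y0 : ℤ} (hy0 : y0 ∈ (pmSet k).filter
    (fun y => 0 < y ∧ negS (P.part y) = P.part y)) :
    (pmSet k).filter (fun y => 0 < y ∧ negS (P.part y) = P.part y)
      = trace (P.part y0) := by
  obtain ⟨hy0pm, hy0pos, hy0sym⟩ := Finset.mem_filter.1 hy0
  ext z
  simp only [Finset.mem_filter, trace]
  constructor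
  · rintro ⟨hzpm, hzpos, hzsym⟩
    have : P.part z = P.part y0 :=
      huniq _ ((P.part_mem.2 hzpm)) _ ((P.part_mem.2 hy0pm)) hzsym hy0sym
    exact ⟨this ▸ P.mem_part hzpm, hzpos⟩
  · rintro ⟨hz, hzpos⟩
    have hzpm : z ∈ pmSet k := part_subset_pmSet P hy0pm hz
    have : P.part z = P.part y0 := part_eq_of_mem_part P hy0pm hz
    exact ⟨hzpm, hzpos, by rw [this]; exact hy0sym⟩

include huniq in
lemma symBlk_Qof {y0 : ℤ} (hy0 : y0 ∈ (pmSet k).filter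
    (fun y => 0 < y ∧ negS (P.part y) = P.part y)) :
    symBlk (Qof P) = P.part y0 := by
  obtain ⟨hy0pm, hy0pos, hy0sym⟩ := Finset.mem_filter.1 hy0
  rw [symBlk, zeroBlk_Qof, Z0_erase, S0_eq_trace P huniq hy0]
  ext z
  simp only [Finset.mem_union, mem_negS, trace, Finset.mem_filter, mem_negS]
  constructor
  · rintro (⟨h, -⟩ | ⟨h1, h2⟩)
    · exact h
    · have : z ∈ negS (P.part y0) := mem_negS.2 h1
      rw [hy0sym] at this
      exact this
  · intro hz
    have hz0 : z ≠ 0 := (mem_pmSet.1 (part_subset_pmSet P hy0pm hz)).1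
    rcases lt_or_gt_of_ne hz0 with h | h
    · refine Or.inr ⟨?_, by omega⟩
      have : z ∈ negS (P.part y0) := by rw [hy0sym]; exact hz
      exact mem_negS.1 this
    · exact Or.inl ⟨hz, h⟩

include hsym huniq in
theorem gblocks_Qof_Mof : gblocks (Qof P) (Mof P) = P.parts := by
  have hQ := Qof_mem P
  have hM := Mof_mem P hsym
  ext X
  constructor
  · intro hX
    rcases mem_gblocks.1 hX with ⟨B, hBV, rfl⟩ | ⟨B, hBV, rfl⟩ | ⟨h0Q, rfl⟩
    all_goals try {
      obtain ⟨hBne, hBQ⟩ := Finset.mem_erase.1 hBV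
      obtain ⟨x, hxI, rfl⟩ := Finset.mem_image.1 hBQ
      rw [zeroBlk_Qof] at hBne
      have hcond : 0 < x ∧ x ≤ (k:ℤ) ∧ negS (P.part x) ≠ P.part x := by
        by_contra hcon
        exact hBne (cell_of_not P hcon)
      first
      | · rw [blk1_cell P hsym hcond]
          exact P.part_mem.2 (mem_pmSet.2 ⟨by omega, by omega, by omega⟩)
      | · rw [← negS_blk1, blk1_cell P hsym hcond]
          exact hsym _ (P.part_mem.2 (mem_pmSet.2 ⟨by omega, by omega, by omega⟩))
    }
    · -- symBlk case
      rw [zeroBlk_Qof] at h0Q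
      have hS0 : ((pmSet k).filter
          (fun y => 0 < y ∧ negS (P.part y) = P.part y)).Nonempty := by
        rw [Finset.nonempty_iff_ne_empty]
        intro hcon
        apply h0Q
        rw [Z0, hcon]
        rfl
      obtain ⟨y0, hy0⟩ := hS0
      rw [symBlk_Qof P huniq hy0]
      exact P.part_mem.2 (Finset.mem_filter.1 hy0).1
  · intro hX
    obtain ⟨x0, hx0⟩ := P.nonempty_of_mem_parts hX
    have hXsub : X ⊆ pmSet k := P.le hX
    have hx0pm : x0 ∈ pmSet k := hXsub hx0
    have hpart : ∀ z ∈ X, P.part z = X := fun z hz => P.part_eq_of_mem hX hz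
    by_cases hXsym : negS X = X
    · -- symmetric block
      have hy : ∃ y ∈ X, 0 < y := by
        rcases lt_or_gt_of_ne (mem_pmSet.1 hx0pm).1 with h | h
        · refine ⟨-x0, ?_, by omega⟩
          rw [← hXsym, mem_negS]
          simpa using hx0
        · exact ⟨x0, hx0, h⟩
      obtain ⟨y, hyX, hypos⟩ := hy
      have hypm : y ∈ pmSet k := hXsub hyX
      have hy0 : y ∈ (pmSet k).filter (fun y => 0 < y ∧ negS (P.part y) = P.part y) :=
        Finset.mem_filter.2 ⟨hypm, hypos, by rw [hpart y hyX]; exact hXsym⟩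
      have h0Q : zeroBlk (Qof P) ≠ {0} := by
        rw [zeroBlk_Qof]
        intro hcon
        have : y ∈ Z0 P := Finset.mem_insert.2 (Or.inr hy0)
        rw [hcon, Finset.mem_singleton] at this
        omega
      refine mem_gblocks.2 (Or.inr (Or.inr ⟨h0Q, ?_⟩))
      rw [symBlk_Qof P huniq hy0, hpart y hyX]
    · by_cases hpos : ∃ y ∈ X, 0 < y
      · obtain ⟨y, hyX, hypos⟩ := hpos
        have hypm : y ∈ pmSet k := hXsub hyX
        have hcond : 0 < y ∧ y ≤ (k:ℤ) ∧ negS (P.part y) ≠ P.part y := by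
          refine ⟨hypos, (mem_pmSet.1 hypm).2.2, ?_⟩
          rw [hpart y hyX]
          exact hXsym
        refine mem_gblocks.2 (Or.inl ⟨cell P y, cell_mem_V P hcond, ?_⟩)
        rw [blk1_cell P hsym hcond, hpart y hyX]
      · -- all negative
        have hnX : negS X ∈ P.parts := hsym _ hX
        have hy : -x0 ∈ negS X := mem_negS.2 (by simpa using hx0)
        have hypos : 0 < -x0 := by
          push_neg at hpos
          have h1 := hpos x0 hx0
          have := (mem_pmSet.1 hx0pm).1
          omega
        have hnpm : -x0 ∈ pmSet k := neg_mem_pmSet hx0pm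
        have hpartn : P.part (-x0) = negS X := P.part_eq_of_mem hnX hy
        have hcond : 0 < -x0 ∧ -x0 ≤ (k:ℤ) ∧ negS (P.part (-x0)) ≠ P.part (-x0) := by
          refine ⟨hypos, (mem_pmSet.1 hnpm).2.2, ?_⟩
          rw [hpartn, negS_negS]
          exact fun h => hXsym h.symm
        refine mem_gblocks.2 (Or.inr (Or.inl ⟨cell P (-x0), cell_mem_V P hcond, ?_⟩))
        rw [← negS_blk1, blk1_cell P hsym hcond, hpartn, negS_negS]

end RT2

/-! ### assembly -/

noncomputable def TB (k : ℕ) :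
    Finset ((_ : Finset (Finset ℤ)) × Finset (Finset (Finset ℤ))) :=
  (partitionsOf (Finset.Icc (0:ℤ) (k:ℤ))).sigma (fun Q => matchings (Q.erase (zeroBlk Q)))

noncomputable def fwd (k : ℕ)
    (P : {P : Finpartition (pmSet k) //
      (∀ X ∈ P.parts, X.image (fun x => -x) ∈ P.parts) ∧
      (∀ X ∈ P.parts, ∀ Y ∈ P.parts,
        X.image (fun x => -x) = X → Y.image (fun x => -x) = Y → X = Y)}) :
    {p // p ∈ TB k} :=
  ⟨⟨Qof P.1, Mof P.1⟩, Finset.mem_sigma.2 ⟨Qof_mem P.1, Mof_mem P.1 P.2.1⟩⟩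

theorem fwd_bijective (k : ℕ) : Function.Bijective (fwd k) := by
  constructor
  · rintro ⟨P₁, hs₁, hu₁⟩ ⟨P₂, hs₂, hu₂⟩ heq
    have hQ12 : Qof P₁ = Qof P₂ := congrArg (fun p => p.val.fst) heq
    have hM12 : Mof P₁ = Mof P₂ := congrArg (fun p => p.val.snd) heq
    apply Subtype.ext
    apply Finpartition.ext
    rw [← gblocks_Qof_Mof P₁ hs₁ hu₁, ← gblocks_Qof_Mof P₂ hs₂ hu₂, hQ12, hM12]
  · rintro ⟨⟨Q, M⟩, hmem⟩
    obtain ⟨hQ, hM⟩ := Finset.mem_sigma.1 hmem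
    refine ⟨⟨revP hQ hM, revP_symm hQ hM, revP_uniq hQ hM⟩, ?_⟩
    apply Subtype.ext
    show (⟨Qof (revP hQ hM), Mof (revP hQ hM)⟩ :
      (_ : Finset (Finset ℤ)) × Finset (Finset (Finset ℤ))) = ⟨Q, M⟩
    rw [Qof_revP hQ hM, Mof_revP hQ hM]

lemma partitionsOf_card_le {s : Finset α} {c : Finset (Finset α)}
    (hc : c ∈ partitionsOf s) : c.card ≤ s.card := by
  classical
  obtain ⟨hsub, hne, hdis, -⟩ := mem_partitionsOf.1 hc
  have h1 : c.card = ∑ B ∈ c, 1 := by simp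
  have h2 : ∑ B ∈ c, 1 ≤ ∑ B ∈ c, B.card :=
    Finset.sum_le_sum fun B hB => Finset.card_pos.2 (hne B hB)
  have h3 : ∑ B ∈ c, B.card = (c.biUnion id).card :=
    (Finset.card_biUnion (fun B hB C hC hBC => hdis B hB C hC hBC)).symm
  have h4 : c.biUnion id ⊆ s := by
    intro x hx
    obtain ⟨B, hB, hxB⟩ := Finset.mem_biUnion.1 hx
    exact hsub B hB hxB
  calc c.card = ∑ B ∈ c, 1 := h1
    _ ≤ ∑ B ∈ c, B.card := h2
    _ = (c.biUnion id).card := h3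
    _ ≤ s.card := Finset.card_le_card h4

lemma card_Icc0k (k : ℕ) : (Finset.Icc (0:ℤ) (k:ℤ)).card = k + 1 := by
  rw [Int.card_Icc]
  omega

theorem card_TB (k : ℕ) :
    (TB k).card = ∑ j ∈ Finset.range (k + 1), stirling (k + 1) (j + 1) * matchNum j := by
  classical
  rw [TB, Finset.card_sigma]
  have step1 : ∀ Q ∈ partitionsOf (Finset.Icc (0:ℤ) (k:ℤ)),
      (matchings (Q.erase (zeroBlk Q))).card = matchNum (Q.card - 1) := by
    intro Q hQ
    rw [card_matchings, Finset.card_erase_of_mem (zeroBlk_mem hQ).1]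
  rw [Finset.sum_congr rfl step1]
  have hmaps : ∀ Q ∈ partitionsOf (Finset.Icc (0:ℤ) (k:ℤ)),
      Q.card ∈ Finset.range (k + 2) := by
    intro Q hQ
    rw [Finset.mem_range]
    have := partitionsOf_card_le hQ
    rw [card_Icc0k] at this
    omega
  rw [← Finset.sum_fiberwise_of_maps_to hmaps (fun Q => matchNum (Q.card - 1))]
  have step2 : ∀ j ∈ Finset.range (k + 2),
      ∑ Q ∈ (partitionsOf (Finset.Icc (0:ℤ) (k:ℤ))).filter (fun Q => Q.card = j),
        matchNum (Q.card - 1) = stirling (k+1) j * matchNum (j - 1) := by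
    intro j hj
    have : ∀ Q ∈ (partitionsOf (Finset.Icc (0:ℤ) (k:ℤ))).filter (fun Q => Q.card = j),
        matchNum (Q.card - 1) = matchNum (j - 1) := by
      intro Q hQ
      rw [(Finset.mem_filter.1 hQ).2]
    rw [Finset.sum_congr rfl this, Finset.sum_const, smul_eq_mul,
      card_partitionsOf_filter, card_Icc0k]
  rw [Finset.sum_congr rfl step2, Finset.sum_range_succ'
    (fun j => stirling (k+1) j * matchNum (j - 1)) (k+1)]
  simp only [Nat.add_sub_cancel, stirling_succ_zero, Nat.zero_mul, add_zero, zero_mul]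

theorem main (k : ℕ) :
    Nat.card {P : Finpartition (pmSet k) //
      (∀ X ∈ P.parts, X.image (fun x => -x) ∈ P.parts) ∧
      (∀ X ∈ P.parts, ∀ Y ∈ P.parts,
        X.image (fun x => -x) = X → Y.image (fun x => -x) = Y → X = Y)} =
    ∑ j ∈ Finset.range (k + 1), stirling (k + 1) (j + 1) * involutions j := by
  rw [Nat.card_congr (Equiv.ofBijective _ (fwd_bijective k)), Nat.card_eq_finsetCard,
    card_TB]
  exact Finset.sum_congr rfl fun j _ => by rw [involutions_eq_matchNum]


end Stmt11

/-- Type `B` set partitions: symmetric partitions of `{-k,…,-1,1,…,k}` with at most one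
self-symmetric (zero) block. -/
theorem stmt11 (k : ℕ) (hk : 1 ≤ k) :
    Nat.card {P : Finpartition (pmSet k) //
      (∀ X ∈ P.parts, X.image (fun x => -x) ∈ P.parts) ∧
      (∀ X ∈ P.parts, ∀ Y ∈ P.parts,
        X.image (fun x => -x) = X → Y.image (fun x => -x) = Y → X = Y)} =
    ∑ j ∈ Finset.range (k + 1), stirling (k + 1) (j + 1) * involutions j := by
  rw [Nat.card_congr (Equiv.ofBijective _ (Stmt11.fwd_bijective k)),
    Nat.card_eq_finsetCard, Stmt11.card_TB]
  exact Finset.sum_congr rfl fun j _ => by rw [Stmt11.involutions_eq_matchNum]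
end

section
/- For all integers k₁, k₂ ≥ 0, the number of set partitions of {1,...,k₁+k₂+1} in which every block X satisfies min(X) ≤ k₁+1 ≤ max(X) equals ∑_{j≥0} j! · S(k₁+1, j+1) · S(k₂+1, j+1). -/
open Finset Nat

lemma stirling_eq_zero : ∀ {n j : ℕ}, n < j → stirling n j = 0 := by
  intro n
  induction n with
  | zero => intro j h; cases j with
    | zero => omega
    | succ j => rfl
  | succ n ih =>
    intro j h
    cases j with
    | zero => omega
    | succ j =>
      show (j + 1) * stirling n (j + 1) + stirling n j = 0
      rw [ih (by omega), ih (by omega)]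
      ring

/-- Restricted growth string: each value is at most one more than the max of earlier values
(in particular the first value is `0`). -/
def IsRGS {a : ℕ} (f : Fin a → ℕ) : Prop :=
  ∀ i, f i ≤ ((univ : Finset (Fin a)).filter fun t => t.val < i.val).sup fun t => f t + 1

lemma isRGS_segment {a : ℕ} {f : Fin a → ℕ} (hf : IsRGS f) :
    ∀ i : Fin a, ∀ c ≤ f i, ∃ t, t ≤ i ∧ f t = c := by
  suffices H : ∀ N : ℕ, ∀ i : Fin a, i.val ≤ N → ∀ c ≤ f i, ∃ t, t ≤ i ∧ f t = c by
    intro i; exact H i i le_rfl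
  intro N
  induction N with
  | zero =>
    intro i hi c hc
    have h0 : ((univ : Finset (Fin a)).filter fun t => t.val < i.val) = ∅ := by
      apply Finset.filter_false_of_mem; intro t _; omega
    have := hf i
    rw [h0] at this
    simp only [Finset.sup_empty, Nat.bot_eq_zero, Nat.le_zero] at this
    refine ⟨i, le_rfl, ?_⟩
    omega
  | succ N ih =>
    intro i hi c hc
    rcases eq_or_lt_of_le hc with h | h
    · exact ⟨i, le_rfl, h.symm⟩
    · have hsup := hf i
      have hne : (((univ : Finset (Fin a)).filter fun t => t.val < i.val)).Nonempty := by
        by_contra hemp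
        rw [Finset.not_nonempty_iff_eq_empty] at hemp
        rw [hemp] at hsup
        simp only [Finset.sup_empty, Nat.bot_eq_zero, Nat.le_zero] at hsup
        omega
      obtain ⟨t₀, ht₀, hsup_eq⟩ := Finset.exists_mem_eq_sup _ hne fun t => f t + 1
      rw [Finset.mem_filter] at ht₀
      have hft₀ : c ≤ f t₀ := by omega
      obtain ⟨t, htt₀, hft⟩ := ih t₀ (by omega) c hft₀
      exact ⟨t, le_trans htt₀ (by exact le_of_lt (by exact (Fin.lt_def).2 ht₀.2)), hft⟩

lemma isRGS_le_val {a : ℕ} {f : Fin a → ℕ} (hf : IsRGS f) : ∀ i, f i ≤ i.val := by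
  suffices H : ∀ N : ℕ, ∀ i : Fin a, i.val ≤ N → f i ≤ i.val by
    intro i; exact H i i le_rfl
  intro N
  induction N with
  | zero =>
    intro i hi
    have h0 : ((univ : Finset (Fin a)).filter fun t => t.val < i.val) = ∅ := by
      apply Finset.filter_false_of_mem; intro t _; omega
    have := hf i; rw [h0] at this
    simp only [Finset.sup_empty, Nat.bot_eq_zero, Nat.le_zero] at this
    omega
  | succ N ih =>
    intro i hi
    have hsup := hf i
    apply le_trans hsup
    apply Finset.sup_le
    intro t ht
    rw [Finset.mem_filter] at ht
    have := ih t (by omega)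
    omega

/-- Restricting the "sup over earlier indices" to an initial chunk of `Fin b`. -/
lemma sup_restrict {a b K : ℕ} (hab : a ≤ b) (hK : K ≤ a) (g : Fin b → ℕ) :
    (((univ : Finset (Fin b)).filter fun t => t.val < K).sup fun t => g t + 1) =
      ((univ : Finset (Fin a)).filter fun t => t.val < K).sup
        fun t => g (Fin.castLE hab t) + 1 := by
  apply le_antisymm
  · apply Finset.sup_le
    intro t ht
    rw [Finset.mem_filter] at ht
    have hta : t.val < a := lt_of_lt_of_le ht.2 hK
    have : g t + 1 = g (Fin.castLE hab ⟨t.val, hta⟩) + 1 := by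
      congr 1
    rw [this]
    exact Finset.le_sup (f := fun t => g (Fin.castLE hab t) + 1)
      (Finset.mem_filter.2 ⟨Finset.mem_univ (⟨t.val, hta⟩ : Fin a), ht.2⟩)
  · apply Finset.sup_le
    intro t ht
    rw [Finset.mem_filter] at ht
    exact Finset.le_sup (f := fun t => g t + 1)
      (Finset.mem_filter.2 ⟨Finset.mem_univ _, ht.2⟩)

def res1 {a : ℕ} (f : Fin (a + 1) → ℕ) : Fin a → ℕ := fun t => f (Fin.castLE (Nat.le_succ a) t)

def ext1 {a : ℕ} (u : Fin a → ℕ) (c : ℕ) : Fin (a + 1) → ℕ := fun i =>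
  if h : i.val < a then u ⟨i.val, h⟩ else c

lemma res1_ext1 {a : ℕ} (u : Fin a → ℕ) (c : ℕ) : res1 (ext1 u c) = u := by
  funext t
  simp only [res1, ext1, Fin.castLE]
  rw [dif_pos t.2]

lemma ext1_last {a : ℕ} (u : Fin a → ℕ) (c : ℕ) {i : Fin (a + 1)} (h : ¬ i.val < a) :
    ext1 u c i = c := by simp only [ext1, dif_neg h]

lemma ext1_lt {a : ℕ} (u : Fin a → ℕ) (c : ℕ) {i : Fin (a + 1)} (h : i.val < a) :
    ext1 u c i = u ⟨i.val, h⟩ := by simp only [ext1, dif_pos h]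

lemma ext1_res1 {a : ℕ} (f : Fin (a + 1) → ℕ) :
    ext1 (res1 f) (f ⟨a, Nat.lt_succ_self a⟩) = f := by
  funext i
  by_cases h : i.val < a
  · rw [ext1_lt _ _ h]
    simp only [res1]
    congr 1
  · rw [ext1_last _ _ h]
    congr 1
    apply Fin.ext
    have := i.2
    simp only []
    omega

lemma univ_filter_lt_self (a : ℕ) :
    ((univ : Finset (Fin a)).filter fun t => t.val < a) = univ :=
  Finset.filter_true_of_mem fun t _ => t.2

lemma isRGS_iff {a : ℕ} (f : Fin (a + 1) → ℕ) :
    IsRGS f ↔ IsRGS (res1 f) ∧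
      f ⟨a, Nat.lt_succ_self a⟩ ≤ (univ : Finset (Fin a)).sup fun t => res1 f t + 1 := by
  constructor
  · intro hf
    refine ⟨fun i => ?_, ?_⟩
    · have h3 := hf (Fin.castLE (Nat.le_succ a) i)
      simp only [Fin.coe_castLE] at h3
      rw [sup_restrict (Nat.le_succ a) (le_of_lt i.2)] at h3
      exact h3
    · have h3 := hf ⟨a, Nat.lt_succ_self a⟩
      simp only [show ((⟨a, Nat.lt_succ_self a⟩ : Fin (a + 1)) : ℕ) = a from rfl] at h3
      rw [sup_restrict (Nat.le_succ a) le_rfl, univ_filter_lt_self] at h3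
      exact h3
  · rintro ⟨h1, h2⟩ i
    by_cases h : i.val < a
    · rw [sup_restrict (Nat.le_succ a) (by omega : i.val ≤ a)]
      exact h1 ⟨i.val, h⟩
    · have hi : i = ⟨a, Nat.lt_succ_self a⟩ := by
        apply Fin.ext; show i.val = a; have := i.2; omega
      rw [hi]
      simp only [show ((⟨a, Nat.lt_succ_self a⟩ : Fin (a + 1)) : ℕ) = a from rfl]
      rw [sup_restrict (Nat.le_succ a) le_rfl, univ_filter_lt_self]
      exact h2

lemma finite_bdd {a m : ℕ} (P : (Fin a → ℕ) → Prop) (hb : ∀ f, P f → ∀ i, f i < m) :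
    Finite {f : Fin a → ℕ // P f} := by
  apply Finite.of_injective (fun x => (fun i => (⟨x.1 i, hb _ x.2 i⟩ : Fin m)))
  intro x y h
  apply Subtype.ext
  funext i
  exact congrArg Fin.val (congrFun h i)

def RGSsurj (a m : ℕ) : Type := {f : Fin a → ℕ // IsRGS f ∧ ∀ c, c < m ↔ ∃ i, f i = c}

instance (a m : ℕ) : Finite (RGSsurj a m) :=
  finite_bdd _ fun f hf i => (hf.2 (f i)).2 ⟨i, rfl⟩

lemma res1_apply {a : ℕ} (f : Fin (a + 1) → ℕ) (t : Fin a) :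
    res1 f t = f (Fin.castLE (Nat.le_succ a) t) := rfl

lemma ext1_cast {a : ℕ} (u : Fin a → ℕ) (c : ℕ) (t : Fin a) :
    ext1 u c (Fin.castLE (Nat.le_succ a) t) = u t := by
  rw [ext1_lt _ _ (show (Fin.castLE (Nat.le_succ a) t).val < a from t.2)]
  exact congrArg u (Fin.ext rfl)

section CaseLemmas
variable {a m : ℕ} {f : Fin (a + 1) → ℕ}

lemma caseA (hf : IsRGS f) (hs : ∀ c, c < m + 1 ↔ ∃ i, f i = c)
    (h : ∃ t : Fin a, res1 f t = m) : ∀ c, c < m + 1 ↔ ∃ t : Fin a, res1 f t = c := by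
  intro c
  constructor
  · intro hc
    obtain ⟨t₀, ht₀⟩ := h
    have hu : IsRGS (res1 f) := ((isRGS_iff f).1 hf).1
    obtain ⟨t, _, ht⟩ := isRGS_segment hu t₀ c (by omega)
    exact ⟨t, ht⟩
  · rintro ⟨t, rfl⟩
    exact (hs _).2 ⟨_, (res1_apply f t).symm⟩

lemma caseD (hs : ∀ c, c < m + 1 ↔ ∃ i, f i = c)
    (h : ¬ ∃ t : Fin a, res1 f t = m) : f ⟨a, Nat.lt_succ_self a⟩ = m := by
  obtain ⟨i, hi⟩ := (hs m).1 (Nat.lt_succ_self m)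
  by_cases hia : i.val < a
  · exact absurd ⟨⟨i.val, hia⟩, by rw [res1_apply]; rw [← hi]; exact congrArg f (Fin.ext rfl)⟩ h
  · rw [← hi]; exact congrArg f (Fin.ext (by show a = i.val; have := i.2; omega))

lemma caseC (hf : IsRGS f) (hs : ∀ c, c < m + 1 ↔ ∃ i, f i = c)
    (h : ¬ ∃ t : Fin a, res1 f t = m) : ∀ c, c < m ↔ ∃ t : Fin a, res1 f t = c := by
  intro c
  constructor
  · intro hc
    have hlast : f ⟨a, Nat.lt_succ_self a⟩ = m := caseD hs h
    obtain ⟨t, htle, ht⟩ := isRGS_segment hf ⟨a, Nat.lt_succ_self a⟩ c (by omega)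
    have hta : t.val < a := by
      rcases lt_or_eq_of_le (show t.val ≤ a from htle) with h' | h'
      · exact h'
      · exfalso; have : t = ⟨a, Nat.lt_succ_self a⟩ := Fin.ext h'
        rw [this, hlast] at ht; omega
    exact ⟨⟨t.val, hta⟩, by rw [res1_apply, ← ht]; exact congrArg f (Fin.ext rfl)⟩
  · rintro ⟨t, rfl⟩
    have h1 : res1 f t < m + 1 := (hs _).2 ⟨_, (res1_apply f t).symm⟩
    have h2 : res1 f t ≠ m := fun he => h ⟨t, he⟩
    omega

lemma invA (u : Fin a → ℕ) (hu : IsRGS u ∧ ∀ c, c < m + 1 ↔ ∃ t, u t = c) (c : ℕ)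
    (hc : c < m + 1) :
    IsRGS (ext1 u c) ∧ ∀ d, d < m + 1 ↔ ∃ i, ext1 u c i = d := by
  constructor
  · rw [isRGS_iff, res1_ext1, ext1_last _ _ (lt_irrefl a)]
    refine ⟨hu.1, ?_⟩
    obtain ⟨t, ht⟩ := (hu.2 m).1 (Nat.lt_succ_self m)
    calc c ≤ m + 1 := by omega
    _ = u t + 1 := by rw [ht]
    _ ≤ _ := Finset.le_sup (f := fun t => u t + 1) (Finset.mem_univ t)
  · intro d
    constructor
    · intro hd
      obtain ⟨t, ht⟩ := (hu.2 d).1 hd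
      exact ⟨_, by rw [ext1_cast]; exact ht⟩
    · rintro ⟨i, rfl⟩
      by_cases h : i.val < a
      · rw [ext1_lt _ _ h]; exact (hu.2 _).2 ⟨_, rfl⟩
      · rw [ext1_last _ _ h]; exact hc

lemma invB (u : Fin a → ℕ) (hu : IsRGS u ∧ ∀ c, c < m ↔ ∃ t, u t = c) :
    IsRGS (ext1 u m) ∧ ∀ d, d < m + 1 ↔ ∃ i, ext1 u m i = d := by
  constructor
  · rw [isRGS_iff, res1_ext1, ext1_last _ _ (lt_irrefl a)]
    refine ⟨hu.1, ?_⟩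
    rcases Nat.eq_zero_or_pos m with hm | hm
    · omega
    · obtain ⟨t, ht⟩ := (hu.2 (m - 1)).1 (by omega)
      calc m = u t + 1 := by omega
      _ ≤ _ := Finset.le_sup (f := fun t => u t + 1) (Finset.mem_univ t)
  · intro d
    constructor
    · intro hd
      rcases Nat.lt_or_ge d m with h' | h'
      · obtain ⟨t, ht⟩ := (hu.2 d).1 h'
        exact ⟨_, by rw [ext1_cast]; exact ht⟩
      · exact ⟨⟨a, Nat.lt_succ_self a⟩, by rw [ext1_last _ _ (lt_irrefl a)]; omega⟩
    · rintro ⟨i, rfl⟩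
      by_cases h : i.val < a
      · rw [ext1_lt _ _ h]
        have := (hu.2 _).2 ⟨(⟨i.val, h⟩ : Fin a), rfl⟩
        omega
      · rw [ext1_last _ _ h]; omega

end CaseLemmas

def splitEquiv (a m : ℕ) :
    RGSsurj (a + 1) (m + 1) ≃ (RGSsurj a (m + 1) × Fin (m + 1)) ⊕ RGSsurj a m where
  toFun x :=
    if h : ∃ t : Fin a, res1 x.1 t = m then
      Sum.inl (⟨res1 x.1, ((isRGS_iff x.1).1 x.2.1).1, caseA x.2.1 x.2.2 h⟩,
        ⟨x.1 ⟨a, Nat.lt_succ_self a⟩, (x.2.2 _).2 ⟨_, rfl⟩⟩)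
    else
      Sum.inr ⟨res1 x.1, ((isRGS_iff x.1).1 x.2.1).1, caseC x.2.1 x.2.2 h⟩
  invFun y :=
    match y with
    | Sum.inl (u, c) => ⟨ext1 u.1 c.val, invA u.1 u.2 c.val c.2⟩
    | Sum.inr u => ⟨ext1 u.1 m, invB u.1 u.2⟩
  left_inv x := by
    by_cases h : ∃ t : Fin a, res1 x.1 t = m
    · simp only [dif_pos h]
      exact Subtype.ext (ext1_res1 x.1)
    · simp only [dif_neg h]
      apply Subtype.ext
      show ext1 (res1 x.1) m = x.1
      have h2 : ext1 (res1 x.1) m = ext1 (res1 x.1) (x.1 ⟨a, Nat.lt_succ_self a⟩) :=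
        congrArg _ (caseD x.2.2 h).symm
      rw [h2]
      exact ext1_res1 x.1
  right_inv y := by
    match y with
    | Sum.inl (u, c) =>
      have h : ∃ t : Fin a, res1 (ext1 u.1 c.val) t = m := by
        rw [res1_ext1]; exact (u.2.2 m).1 (Nat.lt_succ_self m)
      simp only [dif_pos h]
      congr 1
      refine Prod.ext (Subtype.ext ?_) (Fin.ext ?_)
      · exact res1_ext1 u.1 c.val
      · show ext1 u.1 c.val ⟨a, _⟩ = c.val
        exact ext1_last _ _ (lt_irrefl a)
    | Sum.inr u =>
      have h : ¬ ∃ t : Fin a, res1 (ext1 u.1 m) t = m := by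
        rw [res1_ext1]
        rintro ⟨t, ht⟩
        have := (u.2.2 m).2 ⟨t, ht⟩
        omega
      simp only [dif_neg h]
      congr 1
      exact Subtype.ext (res1_ext1 u.1 m)

theorem card_RGSsurj : ∀ a m, Nat.card (RGSsurj a m) = stirling a m := by
  intro a
  induction a with
  | zero =>
    intro m
    cases m with
    | zero =>
      haveI : Unique (RGSsurj 0 0) := by
        refine ⟨⟨⟨fun i => i.elim0, fun i => i.elim0, fun c => ⟨fun h => by omega, ?_⟩⟩⟩, ?_⟩
        · rintro ⟨i, -⟩; exact i.elim0
        · intro x; exact Subtype.ext (funext fun i => i.elim0)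
      rw [Nat.card_unique]; rfl
    | succ m =>
      haveI : IsEmpty (RGSsurj 0 (m + 1)) := by
        refine ⟨fun x => ?_⟩
        obtain ⟨i, -⟩ := (x.2.2 0).1 (Nat.succ_pos m)
        exact i.elim0
      rw [Nat.card_of_isEmpty]; rfl
  | succ a ih =>
    intro m
    cases m with
    | zero =>
      haveI : IsEmpty (RGSsurj (a + 1) 0) := by
        refine ⟨fun x => ?_⟩
        have := (x.2.2 (x.1 0)).2 ⟨0, rfl⟩
        omega
      rw [Nat.card_of_isEmpty]; rfl
    | succ m =>
      have h := Nat.card_congr (splitEquiv a m)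
      rw [Nat.card_sum, Nat.card_prod, Nat.card_eq_fintype_card (α := Fin (m + 1)),
        Fintype.card_fin, ih, ih] at h
      rw [h]
      show _ = (m + 1) * stirling a (m + 1) + stirling a m
      ring

def Surj (b m : ℕ) : Type := {g : Fin b → ℕ // ∀ c, c < m ↔ ∃ i, g i = c}

instance (b m : ℕ) : Finite (Surj b m) :=
  finite_bdd _ fun g hg i => (hg (g i)).2 ⟨i, rfl⟩

lemma swap_lt {c c' m x : ℕ} (hc : c < m) (hc' : c' < m) (hx : x < m) :
    Equiv.swap c c' x < m := by
  rw [Equiv.swap_apply_def]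
  split_ifs <;> omega

def surjSplitEquiv (b m : ℕ) :
    Surj (b + 1) (m + 1) ≃ (Surj b (m + 1) × Fin (m + 1)) ⊕ (Fin (m + 1) × Surj b m) where
  toFun x :=
    if h : ∃ t : Fin b, res1 x.1 t = x.1 ⟨b, Nat.lt_succ_self b⟩ then
      Sum.inl (⟨res1 x.1, by
        intro c
        constructor
        · intro hcm
          obtain ⟨i, hi⟩ := (x.2 c).1 hcm
          by_cases hib : i.val < b
          · exact ⟨⟨i.val, hib⟩, by rw [res1_apply, ← hi]; exact congrArg x.1 (Fin.ext rfl)⟩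
          · obtain ⟨t, ht⟩ := h
            refine ⟨t, ?_⟩
            rw [ht, ← hi]
            exact congrArg x.1 (Fin.ext (by show b = i.val; have := i.2; omega))
        · rintro ⟨t, rfl⟩
          exact (x.2 _).2 ⟨_, (res1_apply x.1 t).symm⟩⟩,
        ⟨x.1 ⟨b, Nat.lt_succ_self b⟩, (x.2 _).2 ⟨_, rfl⟩⟩)
    else
      Sum.inr (⟨x.1 ⟨b, Nat.lt_succ_self b⟩, (x.2 _).2 ⟨_, rfl⟩⟩,
        ⟨fun t => Equiv.swap (x.1 ⟨b, Nat.lt_succ_self b⟩) m (res1 x.1 t), by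
          set c₀ := x.1 ⟨b, Nat.lt_succ_self b⟩ with hc₀
          have hc₀m : c₀ < m + 1 := (x.2 _).2 ⟨_, rfl⟩
          intro c
          constructor
          · intro hcm
            by_cases hc : c = c₀
            · obtain ⟨i, hi⟩ := (x.2 m).1 (Nat.lt_succ_self m)
              have hib : i.val < b := by
                by_contra hib
                have : i = ⟨b, Nat.lt_succ_self b⟩ := Fin.ext (by show i.val = b; have := i.2; omega)
                rw [this, ← hc₀] at hi
                omega
              refine ⟨⟨i.val, hib⟩, ?_⟩
              have hres : res1 x.1 ⟨i.val, hib⟩ = m := (congrArg x.1 (Fin.ext rfl)).trans hi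
              show Equiv.swap c₀ m (res1 x.1 ⟨i.val, hib⟩) = c
              rw [hres, Equiv.swap_apply_right, hc]
            · obtain ⟨i, hi⟩ := (x.2 c).1 (by omega)
              have hib : i.val < b := by
                by_contra hib
                have : i = ⟨b, Nat.lt_succ_self b⟩ := Fin.ext (by show i.val = b; have := i.2; omega)
                rw [this, ← hc₀] at hi
                exact hc hi.symm
              refine ⟨⟨i.val, hib⟩, ?_⟩
              have hres : res1 x.1 ⟨i.val, hib⟩ = c := (congrArg x.1 (Fin.ext rfl)).trans hi
              show Equiv.swap c₀ m (res1 x.1 ⟨i.val, hib⟩) = c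
              rw [hres]
              exact Equiv.swap_apply_of_ne_of_ne hc (by omega)
          · rintro ⟨t, rfl⟩
            show Equiv.swap c₀ m (res1 x.1 t) < m
            have h1 : res1 x.1 t < m + 1 := (x.2 _).2 ⟨_, (res1_apply x.1 t).symm⟩
            have h2 : res1 x.1 t ≠ c₀ := fun he => h ⟨t, he⟩
            by_cases hm : res1 x.1 t = m
            · rw [hm, Equiv.swap_apply_right]
              omega
            · rw [Equiv.swap_apply_of_ne_of_ne h2 hm]
              omega⟩)
  invFun y :=
    match y with
    | Sum.inl (u, c) => ⟨ext1 u.1 c.val, by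
        intro d
        constructor
        · intro hd
          obtain ⟨t, ht⟩ := (u.2 d).1 hd
          exact ⟨_, by rw [ext1_cast]; exact ht⟩
        · rintro ⟨i, rfl⟩
          by_cases hib : i.val < b
          · rw [ext1_lt _ _ hib]; exact (u.2 _).2 ⟨_, rfl⟩
          · rw [ext1_last _ _ hib]; exact c.2⟩
    | Sum.inr (c, v) => ⟨ext1 (fun t => Equiv.swap c.val m (v.1 t)) c.val, by
        intro d
        constructor
        · intro hd
          by_cases hdc : d = c.val
          · exact ⟨⟨b, Nat.lt_succ_self b⟩, by rw [ext1_last _ _ (lt_irrefl b)]; omega⟩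
          · by_cases hdm : d = m
            · have hcm : c.val < m := by have := c.2; omega
              obtain ⟨t, ht⟩ := (v.2 c.val).1 hcm
              exact ⟨_, by rw [ext1_cast, ht, Equiv.swap_apply_left, hdm]⟩
            · obtain ⟨t, ht⟩ := (v.2 d).1 (by omega)
              exact ⟨_, by
                rw [ext1_cast, ht, Equiv.swap_apply_of_ne_of_ne (fun h => hdc h) (fun h => hdm h)]⟩
        · rintro ⟨i, rfl⟩
          by_cases hib : i.val < b
          · rw [ext1_lt _ _ hib]
            have hv : v.1 ⟨i.val, hib⟩ < m := (v.2 _).2 ⟨_, rfl⟩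
            by_cases hvc : v.1 ⟨i.val, hib⟩ = c.val
            · rw [hvc, Equiv.swap_apply_left]; omega
            · rw [Equiv.swap_apply_of_ne_of_ne hvc (by omega)]; omega
          · rw [ext1_last _ _ hib]; exact c.2⟩
  left_inv x := by
    by_cases h : ∃ t : Fin b, res1 x.1 t = x.1 ⟨b, Nat.lt_succ_self b⟩
    · simp only [dif_pos h]
      exact Subtype.ext (ext1_res1 x.1)
    · simp only [dif_neg h]
      apply Subtype.ext
      show ext1 (fun t => Equiv.swap _ m (Equiv.swap _ m (res1 x.1 t))) _ = x.1
      have : (fun t => Equiv.swap (x.1 ⟨b, Nat.lt_succ_self b⟩) m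
          (Equiv.swap (x.1 ⟨b, Nat.lt_succ_self b⟩) m (res1 x.1 t))) = res1 x.1 := by
        funext t; exact Equiv.swap_apply_self _ _ _
      rw [this]
      exact ext1_res1 x.1
  right_inv y := by
    match y with
    | Sum.inl (u, c) =>
      have hlast : ext1 u.1 c.val ⟨b, Nat.lt_succ_self b⟩ = c.val := ext1_last _ _ (lt_irrefl b)
      have h : ∃ t : Fin b, res1 (ext1 u.1 c.val) t = ext1 u.1 c.val ⟨b, Nat.lt_succ_self b⟩ := by
        rw [res1_ext1, hlast]; exact (u.2 c.val).1 c.2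
      simp only [dif_pos h]
      congr 1
      refine Prod.ext (Subtype.ext ?_) (Fin.ext ?_)
      · exact res1_ext1 u.1 c.val
      · show ext1 u.1 c.val ⟨b, _⟩ = c.val
        exact hlast
    | Sum.inr (c, v) =>
      have hlast : ext1 (fun t => Equiv.swap c.val m (v.1 t)) c.val ⟨b, Nat.lt_succ_self b⟩ = c.val :=
        ext1_last _ _ (lt_irrefl b)
      have hres : res1 (ext1 (fun t => Equiv.swap c.val m (v.1 t)) c.val) =
          fun t => Equiv.swap c.val m (v.1 t) := res1_ext1 _ _
      have h : ¬ ∃ t : Fin b, res1 (ext1 (fun t => Equiv.swap c.val m (v.1 t)) c.val) t =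
          ext1 (fun t => Equiv.swap c.val m (v.1 t)) c.val ⟨b, Nat.lt_succ_self b⟩ := by
        rw [hres, hlast]
        rintro ⟨t, ht⟩
        have ht' : Equiv.swap c.val m (v.1 t) = c.val := ht
        have : v.1 t = m := by
          have h2 := Equiv.swap_apply_self c.val m (v.1 t)
          rw [ht', Equiv.swap_apply_left] at h2
          exact h2.symm
        have := (v.2 _).2 ⟨t, rfl⟩
        omega
      simp only [dif_neg h]
      congr 1
      refine Prod.ext (Fin.ext ?_) (Subtype.ext ?_)
      · exact hlast
      · show (fun t => Equiv.swap _ m (res1 (ext1 (fun t => Equiv.swap c.val m (v.1 t)) c.val) t)) = v.1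
        rw [hres]
        funext t
        rw [hlast]
        exact Equiv.swap_apply_self _ _ _

theorem card_Surj : ∀ b m, Nat.card (Surj b m) = m ! * stirling b m := by
  intro b
  induction b with
  | zero =>
    intro m
    cases m with
    | zero =>
      haveI : Unique (Surj 0 0) := by
        refine ⟨⟨⟨fun i => i.elim0, fun c => ⟨fun h => by omega, ?_⟩⟩⟩, ?_⟩
        · rintro ⟨i, -⟩; exact i.elim0
        · intro x; exact Subtype.ext (funext fun i => i.elim0)
      rw [Nat.card_unique]; rfl
    | succ m =>
      haveI : IsEmpty (Surj 0 (m + 1)) := by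
        refine ⟨fun x => ?_⟩
        obtain ⟨i, -⟩ := (x.2 0).1 (Nat.succ_pos m)
        exact i.elim0
      rw [Nat.card_of_isEmpty, stirling_eq_zero (by omega)]
      ring
  | succ b ih =>
    intro m
    cases m with
    | zero =>
      haveI : IsEmpty (Surj (b + 1) 0) := by
        refine ⟨fun x => ?_⟩
        have := (x.2 (x.1 0)).2 ⟨0, rfl⟩
        omega
      rw [Nat.card_of_isEmpty]
      show 0 = 0! * 0
      ring
    | succ m =>
      have h := Nat.card_congr (surjSplitEquiv b m)
      rw [Nat.card_sum, Nat.card_prod, Nat.card_prod,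
        Nat.card_eq_fintype_card (α := Fin (m + 1)), Fintype.card_fin, ih, ih] at h
      rw [h]
      show _ = (m + 1)! * ((m + 1) * stirling b (m + 1) + stirling b m)
      rw [Nat.factorial_succ]
      ring

def SurjPin (b m c : ℕ) : Type :=
  {g : Fin (b + 1) → ℕ // (∀ d, d < m ↔ ∃ i, g i = d) ∧ g 0 = c}

instance (b m c : ℕ) : Finite (SurjPin b m c) :=
  finite_bdd _ fun g hg i => (hg.1 (g i)).2 ⟨i, rfl⟩

def pinEquiv (b m : ℕ) {c c' : ℕ} (hc : c < m) (hc' : c' < m) :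
    SurjPin b m c ≃ SurjPin b m c' := by
  have key : ∀ {d d' : ℕ}, d < m → d' < m →
      ∀ g : Fin (b + 1) → ℕ, ((∀ e, e < m ↔ ∃ i, g i = e) ∧ g 0 = d) →
      ((∀ e, e < m ↔ ∃ i, Equiv.swap d d' (g i) = e) ∧ Equiv.swap d d' (g 0) = d') := by
    intro d d' hd hd' g ⟨hs, hp⟩
    constructor
    · intro e
      constructor
      · intro he
        have he' : Equiv.swap d d' e < m := swap_lt hd hd' he
        obtain ⟨i, hi⟩ := (hs _).1 he'
        refine ⟨i, ?_⟩
        rw [hi]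
        exact Equiv.swap_apply_self _ _ _
      · rintro ⟨i, rfl⟩
        exact swap_lt hd hd' ((hs _).2 ⟨i, rfl⟩)
    · rw [hp]
      exact Equiv.swap_apply_left d d'
  exact {
    toFun := fun g => ⟨fun i => Equiv.swap c c' (g.1 i), key hc hc' g.1 g.2⟩
    invFun := fun g => ⟨fun i => Equiv.swap c' c (g.1 i), by
      have := key hc' hc g.1 g.2
      exact this⟩
    left_inv := fun g => Subtype.ext (funext fun i => by
      show Equiv.swap c' c (Equiv.swap c c' (g.1 i)) = g.1 i
      rw [Equiv.swap_comm c' c]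
      exact Equiv.swap_apply_self _ _ _)
    right_inv := fun g => Subtype.ext (funext fun i => by
      show Equiv.swap c c' (Equiv.swap c' c (g.1 i)) = g.1 i
      rw [Equiv.swap_comm c c']
      exact Equiv.swap_apply_self _ _ _) }

def pinSigma (b m : ℕ) : Surj (b + 1) m ≃ Σ c : Fin m, SurjPin b m c.val where
  toFun g := ⟨⟨g.1 0, (g.2 _).2 ⟨0, rfl⟩⟩, ⟨g.1, g.2, rfl⟩⟩
  invFun x := ⟨x.2.1, x.2.2.1⟩
  left_inv g := Subtype.ext rfl
  right_inv := by
    rintro ⟨c, g, hg, hpin⟩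
    have hc : (⟨g 0, (hg _).2 ⟨0, rfl⟩⟩ : Fin m) = c := Fin.ext hpin
    subst hc
    rfl

lemma nat_card_sigma {ι : Type*} [Fintype ι] (A : ι → Type*) [∀ i, Finite (A i)] :
    Nat.card (Σ i, A i) = ∑ i, Nat.card (A i) := by
  haveI : ∀ i, Fintype (A i) := fun i => Fintype.ofFinite _
  simp only [Nat.card_eq_fintype_card]
  exact Fintype.card_sigma

theorem card_SurjPin (b j c : ℕ) (hc : c ≤ j) :
    Nat.card (SurjPin b (j + 1) c) = j ! * stirling (b + 1) (j + 1) := by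
  have h1 : Nat.card (Surj (b + 1) (j + 1)) =
      (j + 1) * Nat.card (SurjPin b (j + 1) c) := by
    rw [Nat.card_congr (pinSigma b (j + 1)), nat_card_sigma]
    have hsum : ∀ i : Fin (j + 1),
        Nat.card (SurjPin b (j + 1) i.val) = Nat.card (SurjPin b (j + 1) c) := fun i =>
      Nat.card_congr (pinEquiv b (j + 1) i.2 (Nat.lt_succ_of_le hc))
    rw [Finset.sum_congr rfl fun i _ => hsum i]
    simp [Finset.sum_const, Finset.card_univ]
  rw [card_Surj (b + 1) (j + 1)] at h1
  apply Nat.eq_of_mul_eq_mul_left (show 0 < j + 1 by omega)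
  rw [← h1, Nat.factorial_succ]
  ring

section Partitions

variable {n : ℕ}

lemma fp_ext {α : Type*} [Lattice α] [OrderBot α] {a : α} {P Q : Finpartition a}
    (h : P.parts = Q.parts) : P = Q := by
  cases P; cases Q
  simp only at h
  subst h
  rfl

lemma parts_eq_image_part (P : Finpartition (univ : Finset (Fin n))) :
    P.parts = Finset.univ.image P.part := by
  ext B
  simp only [Finset.mem_image]
  constructor
  · intro hB
    obtain ⟨x, _, hxB⟩ := P.part_surjOn (Finset.mem_coe.2 hB)
    exact ⟨x, Finset.mem_univ x, hxB⟩
  · rintro ⟨x, -, rfl⟩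
    exact P.part_mem.2 (Finset.mem_univ x)

lemma min_injOn (P : Finpartition (univ : Finset (Fin n))) {B C : Finset (Fin n)}
    (hB : B ∈ P.parts) (hC : C ∈ P.parts) (h : B.min = C.min) : B = C := by
  have hBne := P.nonempty_of_mem_parts hB
  have hCne := P.nonempty_of_mem_parts hC
  have h1 : ((B.min' hBne : Fin n) : WithTop (Fin n)) = B.min := Finset.coe_min' hBne
  have h2 : ((C.min' hCne : Fin n) : WithTop (Fin n)) = C.min := Finset.coe_min' hCne
  have h3 : B.min' hBne = C.min' hCne := by
    have := h1.trans (h.trans h2.symm)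
    exact_mod_cast this
  exact P.eq_of_mem_parts hB hC (Finset.min'_mem B hBne)
    (h3 ▸ Finset.min'_mem C hCne)

def lab (P : Finpartition (univ : Finset (Fin n))) (i : Fin n) : ℕ :=
  #(P.parts.filter fun B => B.min < (P.part i).min)

lemma lab_lt_of_min_lt (P : Finpartition (univ : Finset (Fin n))) {a b : Fin n}
    (h : (P.part a).min < (P.part b).min) : lab P a < lab P b := by
  apply Finset.card_lt_card
  constructor
  · intro C hC
    rw [Finset.mem_filter] at hC ⊢
    exact ⟨hC.1, lt_trans hC.2 h⟩
  · intro hcontra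
    have hmem : P.part a ∈ P.parts.filter fun B => B.min < (P.part b).min :=
      Finset.mem_filter.2 ⟨P.part_mem.2 (Finset.mem_univ a), h⟩
    have := hcontra hmem
    rw [Finset.mem_filter] at this
    exact lt_irrefl _ this.2

lemma lab_eq_iff (P : Finpartition (univ : Finset (Fin n))) (a b : Fin n) :
    lab P a = lab P b ↔ P.part a = P.part b := by
  constructor
  · intro h
    rcases lt_trichotomy ((P.part a).min) ((P.part b).min) with hlt | heq | hgt
    · exact absurd h (Nat.ne_of_lt (lab_lt_of_min_lt P hlt))
    · exact min_injOn P (P.part_mem.2 (Finset.mem_univ a)) (P.part_mem.2 (Finset.mem_univ b)) heq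
    · exact absurd h.symm (Nat.ne_of_lt (lab_lt_of_min_lt P hgt))
  · intro h
    unfold lab
    rw [h]

lemma lab_isRGS (P : Finpartition (univ : Finset (Fin n))) : IsRGS (lab P) := by
  intro i
  have hBp : P.part i ∈ P.parts := P.part_mem.2 (Finset.mem_univ i)
  have hBne : (P.part i).Nonempty := ⟨i, P.mem_part (Finset.mem_univ i)⟩
  set m0 := (P.part i).min' hBne with hm0
  have hm0B : m0 ∈ P.part i := Finset.min'_mem _ _
  have hm0le : m0 ≤ i := Finset.min'_le _ i (P.mem_part (Finset.mem_univ i))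
  rcases lt_or_eq_of_le hm0le with hlt | heq
  · have hlabeq : lab P m0 = lab P i :=
      (lab_eq_iff P m0 i).2 (P.part_eq_of_mem hBp hm0B)
    have hmem : m0 ∈ (univ : Finset (Fin n)).filter fun t => t.val < i.val :=
      Finset.mem_filter.2 ⟨Finset.mem_univ m0, hlt⟩
    have hs : lab P m0 + 1 ≤
        ((univ : Finset (Fin n)).filter fun t => t.val < i.val).sup (fun t => lab P t + 1) :=
      Finset.le_sup (f := fun t => lab P t + 1) hmem
    omega
  · rcases Nat.eq_zero_or_pos (lab P i) with h0 | hpos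
    · rw [h0]; exact Nat.zero_le _
    · set S := P.parts.filter (fun C => C.min < (P.part i).min) with hS
      have hScard : S.card = lab P i := rfl
      have hSne : S.Nonempty := Finset.card_pos.mp (by omega)
      obtain ⟨B₀, hB₀S, hmax⟩ := Finset.exists_max_image S Finset.min hSne
      have hB₀p : B₀ ∈ P.parts := (Finset.mem_filter.1 hB₀S).1
      have hB₀lt : B₀.min < (P.part i).min := (Finset.mem_filter.1 hB₀S).2
      have hB₀ne : B₀.Nonempty := P.nonempty_of_mem_parts hB₀p
      set t := B₀.min' hB₀ne with htd
      have htB₀ : t ∈ B₀ := Finset.min'_mem _ _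
      have hti : t < i := by
        have h1 : (↑t : WithTop (Fin n)) = B₀.min := Finset.coe_min' hB₀ne
        have h2 : ((m0 : Fin n) : WithTop (Fin n)) = (P.part i).min := Finset.coe_min' hBne
        have : (↑t : WithTop (Fin n)) < (↑m0 : WithTop (Fin n)) := by
          rw [h1, h2]; exact hB₀lt
        have := WithTop.coe_lt_coe.1 this
        omega
      have hpart_t : P.part t = B₀ := P.part_eq_of_mem hB₀p htB₀
      have hfilter : P.parts.filter (fun C => C.min < B₀.min) = S.erase B₀ := by
        ext C
        simp only [Finset.mem_filter, Finset.mem_erase, hS]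
        constructor
        · rintro ⟨hCp, hClt⟩
          refine ⟨fun hCB₀ => by rw [hCB₀] at hClt; exact lt_irrefl _ hClt,
            hCp, lt_trans hClt hB₀lt⟩
        · rintro ⟨hne, hCp, hClt⟩
          refine ⟨hCp, ?_⟩
          have hle : C.min ≤ B₀.min := hmax C (Finset.mem_filter.2 ⟨hCp, hClt⟩)
          rcases lt_or_eq_of_le hle with h' | h'
          · exact h'
          · exact absurd (min_injOn P hCp hB₀p h') hne
      have hlabt : lab P t = lab P i - 1 := by
        have : lab P t = #(P.parts.filter fun C => C.min < B₀.min) := by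
          unfold lab; rw [hpart_t]
        rw [this, hfilter, Finset.card_erase_of_mem hB₀S, hScard]
      have hmem : t ∈ (univ : Finset (Fin n)).filter fun t => t.val < i.val :=
        Finset.mem_filter.2 ⟨Finset.mem_univ t, hti⟩
      have hs : lab P t + 1 ≤
          ((univ : Finset (Fin n)).filter fun t => t.val < i.val).sup (fun t => lab P t + 1) :=
        Finset.le_sup (f := fun t => lab P t + 1) hmem
      omega

def kerSetoid (F : Fin n → ℕ) : Setoid (Fin n) :=
  ⟨fun a b => F a = F b, ⟨fun _ => rfl, Eq.symm, Eq.trans⟩⟩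

instance kerSetoidDec (F : Fin n → ℕ) : DecidableRel (kerSetoid F).r := fun a b =>
  inferInstanceAs (Decidable (F a = F b))

def pOf (F : Fin n → ℕ) : Finpartition (univ : Finset (Fin n)) :=
  Finpartition.ofSetoid (kerSetoid F)

lemma mem_part_pOf (F : Fin n → ℕ) (a b : Fin n) : b ∈ (pOf F).part a ↔ F a = F b :=
  Finpartition.mem_part_ofSetoid_iff_rel

lemma part_pOf (F : Fin n → ℕ) (a : Fin n) :
    (pOf F).part a = univ.filter fun x => F x = F a := by
  ext x
  rw [mem_part_pOf]
  simp only [Finset.mem_filter, Finset.mem_univ, true_and]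
  exact ⟨Eq.symm, Eq.symm⟩

lemma part_pOf_min_lt {F : Fin n → ℕ} (hF : IsRGS F) {a b : Fin n} (h : F a < F b) :
    ((pOf F).part a).min < ((pOf F).part b).min := by
  have hane : ((pOf F).part a).Nonempty := ⟨a, (pOf F).mem_part (Finset.mem_univ a)⟩
  have hbne : ((pOf F).part b).Nonempty := ⟨b, (pOf F).mem_part (Finset.mem_univ b)⟩
  set mb := ((pOf F).part b).min' hbne with hmb
  have hmbmem : mb ∈ (pOf F).part b := Finset.min'_mem _ _
  have hFmb : F b = F mb := (mem_part_pOf F b mb).1 hmbmem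
  obtain ⟨t, htle, ht⟩ := isRGS_segment hF mb (F a) (by omega)
  have htne : t ≠ mb := fun he => by rw [← he, ht] at hFmb; omega
  have htlt : t < mb := lt_of_le_of_ne htle htne
  have htmem : t ∈ (pOf F).part a := (mem_part_pOf F a t).2 ht.symm
  calc ((pOf F).part a).min ≤ (↑t : WithTop (Fin n)) := Finset.min_le htmem
  _ < (↑mb : WithTop (Fin n)) := WithTop.coe_lt_coe.2 htlt
  _ = ((pOf F).part b).min := Finset.coe_min' hbne

lemma lab_pOf {F : Fin n → ℕ} (hF : IsRGS F) : lab (pOf F) = F := by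
  funext a
  have hfilter : ((pOf F).parts.filter fun C => C.min < ((pOf F).part a).min) =
      (Finset.range (F a)).image fun c => univ.filter fun x => F x = c := by
    ext C
    simp only [Finset.mem_filter, Finset.mem_image, Finset.mem_range]
    constructor
    · rintro ⟨hCp, hClt⟩
      obtain ⟨x, -, rfl⟩ := (pOf F).part_surjOn (Finset.mem_coe.2 hCp)
      have hxa : F x < F a := by
        rcases lt_trichotomy (F x) (F a) with h' | h' | h'
        · exact h'
        · exfalso
          have : (pOf F).part x = (pOf F).part a := by
            rw [part_pOf, part_pOf, h']
          rw [this] at hClt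
          exact lt_irrefl _ hClt
        · exact absurd (lt_trans hClt (part_pOf_min_lt hF h')) (lt_irrefl _)
      exact ⟨F x, hxa, (part_pOf F x).symm⟩
    · rintro ⟨c, hc, rfl⟩
      obtain ⟨t, -, ht⟩ := isRGS_segment hF a c (le_of_lt hc)
      have h1 : univ.filter (fun x => F x = c) = (pOf F).part t := by
        rw [part_pOf, ht]
      rw [h1]
      refine ⟨(pOf F).part_mem.2 (Finset.mem_univ t), part_pOf_min_lt hF (by omega)⟩
  show #((pOf F).parts.filter fun C => C.min < ((pOf F).part a).min) = F a
  rw [hfilter, Finset.card_image_of_injOn, Finset.card_range]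
  intro c hc c' hc' he
  simp only [Finset.coe_range, Set.mem_Iio] at hc hc'
  obtain ⟨t, -, ht⟩ := isRGS_segment hF a c (le_of_lt hc)
  have h1 : t ∈ univ.filter fun x => F x = c := by
    simp only [Finset.mem_filter, Finset.mem_univ, true_and]; exact ht
  have he' : (univ.filter fun x => F x = c) = univ.filter fun x => F x = c' := he
  rw [he'] at h1
  simp only [Finset.mem_filter, Finset.mem_univ, true_and] at h1
  rw [← ht, h1]

lemma pOf_lab (P : Finpartition (univ : Finset (Fin n))) : pOf (lab P) = P := by
  have hpart : ∀ a, (pOf (lab P)).part a = P.part a := by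
    intro a
    rw [part_pOf]
    ext x
    simp only [Finset.mem_filter, Finset.mem_univ, true_and]
    rw [lab_eq_iff]
    exact (P.mem_part_iff_part_eq_part (Finset.mem_univ x) (Finset.mem_univ a)).symm
  apply fp_ext
  rw [parts_eq_image_part (pOf (lab P)), parts_eq_image_part P]
  exact Finset.image_congr fun x _ => hpart x

end Partitions

section Assembly

variable (k₁ k₂ : ℕ)

def Wtype : Type :=
  {F : Fin (k₁ + k₂ + 1) → ℕ // IsRGS F ∧
    (∀ i, ∃ t, t.val ≤ k₁ ∧ F t = F i) ∧ (∀ i, ∃ t, k₁ ≤ t.val ∧ F t = F i)}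

abbrev Ctype (j : ℕ) : Type :=
  {p : (Fin (k₁ + 1) → ℕ) × (Fin (k₂ + 1) → ℕ) //
    (IsRGS p.1 ∧ ∀ c, c < j + 1 ↔ ∃ i, p.1 i = c) ∧
    ((∀ c, c < j + 1 ↔ ∃ i, p.2 i = c) ∧ p.2 0 = p.1 ⟨k₁, Nat.lt_succ_self k₁⟩)}

instance (j : ℕ) : Finite (Ctype k₁ k₂ j) := by
  apply Finite.of_injective (β := (Fin (k₁ + 1) → Fin (j + 1)) × (Fin (k₂ + 1) → Fin (j + 1)))
    (fun x => (fun i => ⟨x.1.1 i, (x.2.1.2 _).2 ⟨i, rfl⟩⟩, fun i => ⟨x.1.2 i, (x.2.2.1 _).2 ⟨i, rfl⟩⟩))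
  intro x y h
  apply Subtype.ext
  have h1 := congrArg Prod.fst h
  have h2 := congrArg Prod.snd h
  refine Prod.ext (funext fun i => ?_) (funext fun i => ?_)
  · exact congrArg Fin.val (congrFun h1 i)
  · exact congrArg Fin.val (congrFun h2 i)

def ctypeEquiv (j : ℕ) :
    Ctype k₁ k₂ j ≃ Σ f : RGSsurj (k₁ + 1) (j + 1),
      SurjPin k₂ (j + 1) (f.1 ⟨k₁, Nat.lt_succ_self k₁⟩) where
  toFun x := ⟨⟨x.1.1, x.2.1⟩, ⟨x.1.2, x.2.2.1, x.2.2.2⟩⟩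
  invFun y := ⟨(y.1.1, y.2.1), y.1.2, y.2.2.1, y.2.2.2⟩
  left_inv := by rintro ⟨⟨f, g⟩, h⟩; rfl
  right_inv := by rintro ⟨⟨f, hf⟩, ⟨g, hg⟩⟩; rfl

lemma card_Ctype (j : ℕ) :
    Nat.card (Ctype k₁ k₂ j) =
      stirling (k₁ + 1) (j + 1) * (j ! * stirling (k₂ + 1) (j + 1)) := by
  rw [Nat.card_congr (ctypeEquiv k₁ k₂ j)]
  haveI : Fintype (RGSsurj (k₁ + 1) (j + 1)) := Fintype.ofFinite _
  rw [nat_card_sigma]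
  have hterm : ∀ f : RGSsurj (k₁ + 1) (j + 1),
      Nat.card (SurjPin k₂ (j + 1) (f.1 ⟨k₁, Nat.lt_succ_self k₁⟩)) =
        j ! * stirling (k₂ + 1) (j + 1) := by
    intro f
    apply card_SurjPin
    have := (f.2.2 _).2 ⟨⟨k₁, Nat.lt_succ_self k₁⟩, rfl⟩
    omega
  rw [Finset.sum_congr rfl fun f _ => hterm f, Finset.sum_const, Finset.card_univ,
    ← Nat.card_eq_fintype_card, card_RGSsurj, smul_eq_mul]

def resF (F : Fin (k₁ + k₂ + 1) → ℕ) : Fin (k₁ + 1) → ℕ :=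
  fun i => F (Fin.castLE (by omega) i)

def resG (F : Fin (k₁ + k₂ + 1) → ℕ) : Fin (k₂ + 1) → ℕ :=
  fun t => F ⟨k₁ + t.val, by omega⟩

def supF (F : Fin (k₁ + k₂ + 1) → ℕ) : ℕ := univ.sup (resF k₁ k₂ F)

variable {k₁ k₂}

lemma resF_rgs {F : Fin (k₁ + k₂ + 1) → ℕ} (hF : IsRGS F) : IsRGS (resF k₁ k₂ F) := by
  intro i
  have h3 := hF (Fin.castLE (by omega : k₁ + 1 ≤ k₁ + k₂ + 1) i)
  simp only [Fin.coe_castLE] at h3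
  rw [sup_restrict (show k₁ + 1 ≤ k₁ + k₂ + 1 by omega) (le_of_lt i.2)] at h3
  exact h3

lemma supF_le {F : Fin (k₁ + k₂ + 1) → ℕ} (hF : IsRGS F) : supF k₁ k₂ F ≤ k₁ := by
  apply Finset.sup_le
  intro i _
  have := isRGS_le_val hF (Fin.castLE (by omega) i)
  simp only [Fin.coe_castLE] at this
  have := i.2
  show resF k₁ k₂ F i ≤ k₁
  unfold resF
  omega

lemma supF_att (F : Fin (k₁ + k₂ + 1) → ℕ) : ∃ t, resF k₁ k₂ F t = supF k₁ k₂ F := by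
  obtain ⟨t, -, h⟩ := Finset.exists_mem_eq_sup univ univ_nonempty (resF k₁ k₂ F)
  exact ⟨t, h.symm⟩

lemma W_le (x : Wtype k₁ k₂) : ∀ i, x.1 i ≤ supF k₁ k₂ x.1 := by
  intro i
  obtain ⟨t, ht1, ht2⟩ := x.2.2.1 i
  have he : x.1 t = resF k₁ k₂ x.1 ⟨t.val, by omega⟩ := congrArg x.1 (Fin.ext rfl)
  rw [← ht2, he]
  exact Finset.le_sup (mem_univ _)

lemma resF_surj (x : Wtype k₁ k₂) :
    ∀ c, c < supF k₁ k₂ x.1 + 1 ↔ ∃ i, resF k₁ k₂ x.1 i = c := by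
  intro c
  constructor
  · intro hc
    obtain ⟨t₀, ht₀⟩ := supF_att x.1
    obtain ⟨t, -, ht⟩ := isRGS_segment (resF_rgs x.2.1) t₀ c (by omega)
    exact ⟨t, ht⟩
  · rintro ⟨i, rfl⟩
    have : resF k₁ k₂ x.1 i ≤ supF k₁ k₂ x.1 := Finset.le_sup (mem_univ _)
    omega

lemma resG_surj (x : Wtype k₁ k₂) :
    ∀ c, c < supF k₁ k₂ x.1 + 1 ↔ ∃ t, resG k₁ k₂ x.1 t = c := by
  intro c
  constructor
  · intro hc
    obtain ⟨i, hi⟩ := (resF_surj x c).1 hc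
    obtain ⟨t, ht1, ht2⟩ := x.2.2.2 (Fin.castLE (by omega) i)
    refine ⟨⟨t.val - k₁, by have := t.2; omega⟩, ?_⟩
    show x.1 ⟨k₁ + (t.val - k₁), _⟩ = c
    rw [show (⟨k₁ + (t.val - k₁), by omega⟩ : Fin (k₁ + k₂ + 1)) = t from Fin.ext (by
      show k₁ + (t.val - k₁) = t.val; omega)]
    rw [ht2]
    exact hi
  · rintro ⟨t, rfl⟩
    have := W_le x ⟨k₁ + t.val, by omega⟩
    show x.1 ⟨k₁ + t.val, _⟩ < supF k₁ k₂ x.1 + 1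
    omega

lemma resG_pin (F : Fin (k₁ + k₂ + 1) → ℕ) :
    resG k₁ k₂ F 0 = resF k₁ k₂ F ⟨k₁, Nat.lt_succ_self k₁⟩ :=
  congrArg F (Fin.ext (by show k₁ + (0 : Fin (k₂ + 1)).val = k₁; simp))

def extF (f : Fin (k₁ + 1) → ℕ) (g : Fin (k₂ + 1) → ℕ) : Fin (k₁ + k₂ + 1) → ℕ :=
  fun i => if h : i.val ≤ k₁ then f ⟨i.val, by omega⟩ else g ⟨i.val - k₁, by omega⟩

variable {f : Fin (k₁ + 1) → ℕ} {g : Fin (k₂ + 1) → ℕ} {j : ℕ}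

lemma resF_extF : resF k₁ k₂ (extF f g) = f := by
  funext i
  show extF f g (Fin.castLE (by omega) i) = f i
  unfold extF
  rw [dif_pos (show (Fin.castLE (by omega : k₁ + 1 ≤ k₁ + k₂ + 1) i).val ≤ k₁ by
    simp only [Fin.coe_castLE]; omega)]
  exact congrArg f (Fin.ext rfl)

lemma resG_extF (hpin : g 0 = f ⟨k₁, Nat.lt_succ_self k₁⟩) :
    resG k₁ k₂ (extF f g) = g := by
  funext t
  show extF f g ⟨k₁ + t.val, _⟩ = g t
  unfold extF
  by_cases h : k₁ + t.val ≤ k₁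
  · rw [dif_pos h]
    have ht0 : t.val = 0 := by omega
    have : f ⟨k₁ + t.val, by omega⟩ = f ⟨k₁, Nat.lt_succ_self k₁⟩ :=
      congrArg f (Fin.ext (by show k₁ + t.val = k₁; omega))
    rw [this, ← hpin]
    exact congrArg g (Fin.ext (by show (0 : Fin (k₂ + 1)).val = t.val; rw [ht0]; simp))
  · rw [dif_neg h]
    exact congrArg g (Fin.ext (by show k₁ + t.val - k₁ = t.val; omega))

lemma extF_rgs (hf : IsRGS f) (hfs : ∀ c, c < j + 1 ↔ ∃ i, f i = c)
    (hgs : ∀ c, c < j + 1 ↔ ∃ i, g i = c) : IsRGS (extF f g) := by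
  intro i
  by_cases h : i.val ≤ k₁
  · rw [sup_restrict (show k₁ + 1 ≤ k₁ + k₂ + 1 by omega) (show i.val ≤ k₁ + 1 by omega)]
    have hsup : (((univ : Finset (Fin (k₁ + 1))).filter fun t => t.val < i.val).sup
        fun t => extF f g (Fin.castLE (by omega) t) + 1) =
        ((univ : Finset (Fin (k₁ + 1))).filter fun t => t.val < i.val).sup
        fun t => f t + 1 := by
      apply Finset.sup_congr rfl
      intro t _
      rw [show extF f g (Fin.castLE (by omega) t) = f t from congrFun resF_extF t]
    rw [hsup]
    have hlow : extF f g i = f ⟨i.val, by omega⟩ := dif_pos h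
    rw [hlow]
    exact hf ⟨i.val, by omega⟩
  · have hval : extF f g i = g ⟨i.val - k₁, by have := i.2; omega⟩ := dif_neg h
    have hlt : extF f g i < j + 1 := by
      rw [hval]; exact (hgs _).2 ⟨_, rfl⟩
    obtain ⟨t₀, ht₀⟩ := (hfs j).1 (Nat.lt_succ_self j)
    have hmem : Fin.castLE (by omega : k₁ + 1 ≤ k₁ + k₂ + 1) t₀ ∈
        (univ : Finset (Fin (k₁ + k₂ + 1))).filter fun t => t.val < i.val := by
      apply Finset.mem_filter.2
      refine ⟨mem_univ _, ?_⟩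
      simp only [Fin.coe_castLE]
      have := t₀.2
      omega
    have hs : extF f g (Fin.castLE (by omega : k₁ + 1 ≤ k₁ + k₂ + 1) t₀) + 1 ≤
        ((univ : Finset (Fin (k₁ + k₂ + 1))).filter fun t => t.val < i.val).sup
          fun t => extF f g t + 1 :=
      Finset.le_sup (f := fun t => extF f g t + 1) hmem
    have he : extF f g (Fin.castLE (by omega) t₀) = f t₀ := congrFun resF_extF t₀
    rw [he, ht₀] at hs
    omega

lemma extF_Cb (hfs : ∀ c, c < j + 1 ↔ ∃ i, f i = c)
    (hgs : ∀ c, c < j + 1 ↔ ∃ i, g i = c) :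
    ∀ i, ∃ t, t.val ≤ k₁ ∧ extF f g t = extF f g i := by
  intro i
  by_cases h : i.val ≤ k₁
  · exact ⟨i, h, rfl⟩
  · have hval : extF f g i = g ⟨i.val - k₁, by have := i.2; omega⟩ := dif_neg h
    have hlt : extF f g i < j + 1 := by rw [hval]; exact (hgs _).2 ⟨_, rfl⟩
    obtain ⟨t, ht⟩ := (hfs _).1 hlt
    refine ⟨Fin.castLE (by omega) t, by simp only [Fin.coe_castLE]; omega, ?_⟩
    rw [show extF f g (Fin.castLE (by omega) t) = f t from congrFun resF_extF t, ht]

lemma extF_Cc (hfs : ∀ c, c < j + 1 ↔ ∃ i, f i = c)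
    (hgs : ∀ c, c < j + 1 ↔ ∃ i, g i = c)
    (hpin : g 0 = f ⟨k₁, Nat.lt_succ_self k₁⟩) :
    ∀ i, ∃ t, k₁ ≤ t.val ∧ extF f g t = extF f g i := by
  intro i
  have hlt : extF f g i < j + 1 := by
    unfold extF
    by_cases h : i.val ≤ k₁
    · rw [dif_pos h]; exact (hfs _).2 ⟨_, rfl⟩
    · rw [dif_neg h]; exact (hgs _).2 ⟨_, rfl⟩
  obtain ⟨t, ht⟩ := (hgs _).1 hlt
  refine ⟨⟨k₁ + t.val, by have := t.2; omega⟩, by show k₁ ≤ k₁ + t.val; omega, ?_⟩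
  have : extF f g ⟨k₁ + t.val, by have := t.2; omega⟩ = resG k₁ k₂ (extF f g) t := rfl
  rw [this, resG_extF hpin, ht]

variable (k₁ k₂)

lemma sigma_subtype_eq {ι X : Type*} (Q : ι → X → Prop) {a b : ι}
    (x : {v : X // Q a v}) (y : {v : X // Q b v}) (hab : a = b) (hxy : x.1 = y.1) :
    (⟨a, x⟩ : Σ i : ι, {v : X // Q i v}) = ⟨b, y⟩ := by
  subst hab
  exact congrArg (Sigma.mk a) (Subtype.ext hxy)

def bigSplit : Wtype k₁ k₂ ≃ Σ j : Fin (k₁ + 1), Ctype k₁ k₂ j.val where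
  toFun x :=
    ⟨⟨supF k₁ k₂ x.1, by have := supF_le x.2.1; omega⟩,
      ⟨(resF k₁ k₂ x.1, resG k₁ k₂ x.1),
        ⟨resF_rgs x.2.1, resF_surj x⟩, resG_surj x, resG_pin x.1⟩⟩
  invFun y :=
    ⟨extF y.2.1.1 y.2.1.2,
      extF_rgs y.2.2.1.1 y.2.2.1.2 y.2.2.2.1,
      extF_Cb y.2.2.1.2 y.2.2.2.1,
      extF_Cc y.2.2.1.2 y.2.2.2.1 y.2.2.2.2⟩
  left_inv x := by
    apply Subtype.ext
    funext i
    show extF (resF k₁ k₂ x.1) (resG k₁ k₂ x.1) i = x.1 i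
    unfold extF
    by_cases h : i.val ≤ k₁
    · rw [dif_pos h]
      exact congrArg x.1 (Fin.ext rfl)
    · rw [dif_neg h]
      exact congrArg x.1 (Fin.ext (by show k₁ + (i.val - k₁) = i.val; omega))
  right_inv := by
    rintro ⟨j, ⟨⟨f, g⟩, hfg⟩⟩
    have hf : resF k₁ k₂ (extF f g) = f := resF_extF
    have hg : resG k₁ k₂ (extF f g) = g := resG_extF hfg.2.2
    have hsup : supF k₁ k₂ (extF f g) = j.val := by
      show univ.sup (resF k₁ k₂ (extF f g)) = j.val
      rw [hf]
      apply le_antisymm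
      · apply Finset.sup_le
        intro i _
        have := (hfg.1.2 (f i)).2 ⟨i, rfl⟩
        omega
      · obtain ⟨t₀, ht₀⟩ := (hfg.1.2 j.val).1 (Nat.lt_succ_self _)
        calc j.val = f t₀ := ht₀.symm
        _ ≤ _ := Finset.le_sup (mem_univ _)
    have hidx : (⟨supF k₁ k₂ (extF f g), by have := supF_le (extF_rgs hfg.1.1 hfg.1.2 hfg.2.1); omega⟩ :
        Fin (k₁ + 1)) = j := Fin.ext hsup
    refine sigma_subtype_eq
      (fun (jj : Fin (k₁ + 1)) (p : (Fin (k₁ + 1) → ℕ) × (Fin (k₂ + 1) → ℕ)) =>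
        (IsRGS p.1 ∧ ∀ c, c < jj.val + 1 ↔ ∃ i, p.1 i = c) ∧
        ((∀ c, c < jj.val + 1 ↔ ∃ i, p.2 i = c) ∧ p.2 0 = p.1 ⟨k₁, Nat.lt_succ_self k₁⟩))
      _ _ hidx ?_
    show (resF k₁ k₂ (extF f g), resG k₁ k₂ (extF f g)) = (f, g)
    rw [hf, hg]

end Assembly

def connEquiv (k₁ k₂ : ℕ) :
    {P : Finpartition (Finset.univ : Finset (Fin (k₁ + k₂ + 1))) //
      ∀ X ∈ P.parts, ∀ h : X.Nonempty,
        ((X.min' h : ℕ) ≤ k₁ ∧ k₁ ≤ (X.max' h : ℕ))} ≃ Wtype k₁ k₂ where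
  toFun x := ⟨lab x.1, lab_isRGS x.1, by
    intro i
    have hXp : x.1.part i ∈ x.1.parts := x.1.part_mem.2 (Finset.mem_univ i)
    have hne : (x.1.part i).Nonempty := ⟨i, x.1.mem_part (Finset.mem_univ i)⟩
    obtain ⟨h1, h2⟩ := x.2 _ hXp hne
    exact ⟨(x.1.part i).min' hne, h1,
      (lab_eq_iff _ _ _).2 (x.1.part_eq_of_mem hXp (Finset.min'_mem _ _))⟩, by
    intro i
    have hXp : x.1.part i ∈ x.1.parts := x.1.part_mem.2 (Finset.mem_univ i)
    have hne : (x.1.part i).Nonempty := ⟨i, x.1.mem_part (Finset.mem_univ i)⟩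
    obtain ⟨h1, h2⟩ := x.2 _ hXp hne
    exact ⟨(x.1.part i).max' hne, h2,
      (lab_eq_iff _ _ _).2 (x.1.part_eq_of_mem hXp (Finset.max'_mem _ _))⟩⟩
  invFun y := ⟨pOf y.1, by
    intro X hX h
    obtain ⟨xx, -, rfl⟩ := (pOf y.1).part_surjOn (Finset.mem_coe.2 hX)
    constructor
    · obtain ⟨t, ht1, ht2⟩ := y.2.2.1 xx
      have htX : t ∈ (pOf y.1).part xx := (mem_part_pOf _ _ _).2 ht2.symm
      have hle : (((pOf y.1).part xx).min' h).val ≤ t.val := Finset.min'_le _ t htX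
      omega
    · obtain ⟨t, ht1, ht2⟩ := y.2.2.2 xx
      have htX : t ∈ (pOf y.1).part xx := (mem_part_pOf _ _ _).2 ht2.symm
      have hle : t.val ≤ (((pOf y.1).part xx).max' h).val := Finset.le_max' _ t htX
      omega⟩
  left_inv x := Subtype.ext (pOf_lab x.1)
  right_inv y := Subtype.ext (lab_pOf y.2.1)

/-- `(k₁+1)`-connecting set partitions of `{1,…,k₁+k₂+1}` (0-indexed as
`Fin (k₁+k₂+1)`, so the condition `min(X) ≤ k₁+1 ≤ max(X)` becomes
`min(X) ≤ k₁ ≤ max(X)` on values). -/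
theorem stmt14 (k₁ k₂ : ℕ) :
    Nat.card {P : Finpartition (Finset.univ : Finset (Fin (k₁ + k₂ + 1))) //
      ∀ X ∈ P.parts, ∀ h : X.Nonempty,
        ((X.min' h : ℕ) ≤ k₁ ∧ k₁ ≤ (X.max' h : ℕ))} =
    ∑ j ∈ Finset.range (k₁ + k₂ + 2),
      j ! * stirling (k₁ + 1) (j + 1) * stirling (k₂ + 1) (j + 1) := by
  rw [Nat.card_congr (connEquiv k₁ k₂), Nat.card_congr (bigSplit k₁ k₂), nat_card_sigma]
  rw [Finset.sum_congr rfl fun j (_ : j ∈ univ) => card_Ctype k₁ k₂ j.val]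
  rw [Fin.sum_univ_eq_sum_range
    (fun j => stirling (k₁ + 1) (j + 1) * (j ! * stirling (k₂ + 1) (j + 1))) (k₁ + 1)]
  have hext : ∑ j ∈ Finset.range (k₁ + 1),
      stirling (k₁ + 1) (j + 1) * (j ! * stirling (k₂ + 1) (j + 1)) =
      ∑ j ∈ Finset.range (k₁ + k₂ + 2),
      stirling (k₁ + 1) (j + 1) * (j ! * stirling (k₂ + 1) (j + 1)) := by
    apply Finset.sum_subset (Finset.range_subset_range.2 (by omega))
    intro j _ hj
    rw [Finset.mem_range, not_lt] at hj
    rw [stirling_eq_zero (show k₁ + 1 < j + 1 by omega)]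
    ring
  rw [hext]
  apply Finset.sum_congr rfl
  intro j _
  ring
end

section
/- For all integers k ≥ 0, the number of symmetric set partitions of {-k,...,-1,0,1,...,k} equals the binomial transform of the numbers of symmetric set partitions of {-j,...,-1,1,...,j}: if g_j denotes the number of symmetric set partitions of {-j,...,-1,1,...,j} and h_k the number of symmetric set partitions of {-k,...,0,...,k}, then h_k = ∑_{j=0}^{k} C(k,j) g_j. -/
open Finset

/-! ### Odd permutations of ℤ -/

instance : Infinite {n : ℤ // 0 < n} :=
  Infinite.of_injective (fun n : ℕ => ⟨(n : ℤ) + 1, by positivity⟩)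
    (by intro a b h; simpa using h)

lemma exists_pos_perm (T U : Finset {n : ℤ // 0 < n}) (h : T.card = U.card) :
    ∃ p : Equiv.Perm {n : ℤ // 0 < n}, ∀ x, x ∈ T ↔ p x ∈ U := by
  classical
  have e1 : ↥T ≃ ↥U := Finset.equivOfCardEq h
  have hTc : (↑T : Set {n : ℤ // 0 < n})ᶜ.Infinite := (T.finite_toSet).infinite_compl
  have hUc : (↑U : Set {n : ℤ // 0 < n})ᶜ.Infinite := (U.finite_toSet).infinite_compl
  haveI := hTc.to_subtype
  haveI := hUc.to_subtype
  have e2 : ↥(↑T : Set {n : ℤ // 0 < n})ᶜ ≃ ↥(↑U : Set {n : ℤ // 0 < n})ᶜ :=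
    Nonempty.some inferInstance
  refine ⟨(Equiv.Set.sumCompl (↑T : Set {n : ℤ // 0 < n})).symm.trans
    ((e1.sumCongr e2).trans (Equiv.Set.sumCompl (↑U : Set {n : ℤ // 0 < n}))), ?_⟩
  intro x
  by_cases hx : x ∈ T
  · simp only [Equiv.trans_apply]
    rw [Equiv.Set.sumCompl_symm_apply_of_mem (by exact hx)]
    simp [hx]
    exact (e1 ⟨x, hx⟩).2
  · simp only [Equiv.trans_apply]
    rw [Equiv.Set.sumCompl_symm_apply_of_notMem (by exact hx)]
    simp [hx]
    exact (e2 ⟨x, hx⟩).2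

noncomputable def oddExtFun (p : Equiv.Perm {n : ℤ // 0 < n}) (x : ℤ) : ℤ :=
  if h : 0 < x then (p ⟨x, h⟩ : ℤ) else if h' : 0 < -x then -(p ⟨-x, h'⟩ : ℤ) else x

lemma oddExtFun_pos (p : Equiv.Perm {n : ℤ // 0 < n}) {x : ℤ} (h : 0 < x) :
    oddExtFun p x = (p ⟨x, h⟩ : ℤ) := dif_pos h

lemma oddExtFun_neg' (p : Equiv.Perm {n : ℤ // 0 < n}) {x : ℤ} (h : ¬ 0 < x) (h' : 0 < -x) :
    oddExtFun p x = -(p ⟨-x, h'⟩ : ℤ) := by rw [oddExtFun, dif_neg h, dif_pos h']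

lemma oddExtFun_zero (p : Equiv.Perm {n : ℤ // 0 < n}) {x : ℤ} (h : ¬ 0 < x) (h' : ¬ 0 < -x) :
    oddExtFun p x = x := by rw [oddExtFun, dif_neg h, dif_neg h']

lemma oddExtFun_inv (p : Equiv.Perm {n : ℤ // 0 < n}) (x : ℤ) :
    oddExtFun p.symm (oddExtFun p x) = x := by
  by_cases h : 0 < x
  · rw [oddExtFun_pos p h]
    have hp : 0 < (p ⟨x, h⟩ : ℤ) := (p ⟨x, h⟩).2
    rw [oddExtFun_pos p.symm hp, Subtype.coe_eta, Equiv.symm_apply_apply]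
  · by_cases h' : 0 < -x
    · rw [oddExtFun_neg' p h h']
      have hp : 0 < (p ⟨-x, h'⟩ : ℤ) := (p ⟨-x, h'⟩).2
      have h1 : ¬ 0 < -(p ⟨-x, h'⟩ : ℤ) := by omega
      have h2 : 0 < - -(p ⟨-x, h'⟩ : ℤ) := by omega
      rw [oddExtFun_neg' p.symm h1 h2]
      have : (⟨- -(p ⟨-x, h'⟩ : ℤ), h2⟩ : {n : ℤ // 0 < n}) = p ⟨-x, h'⟩ := by
        ext; simp
      rw [this, Equiv.symm_apply_apply]
      simp
    · rw [oddExtFun_zero p h h', oddExtFun_zero p.symm h h']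

/-- Odd extension of a permutation of the positive integers. -/
noncomputable def oddExt (p : Equiv.Perm {n : ℤ // 0 < n}) : Equiv.Perm ℤ where
  toFun := oddExtFun p
  invFun := oddExtFun p.symm
  left_inv := oddExtFun_inv p
  right_inv := by
    intro x
    have := oddExtFun_inv p.symm x
    rwa [Equiv.symm_symm] at this

lemma oddExt_odd (p : Equiv.Perm {n : ℤ // 0 < n}) (x : ℤ) :
    oddExt p (-x) = -(oddExt p x) := by
  show oddExtFun p (-x) = -(oddExtFun p x)
  by_cases h : 0 < x
  · have h1 : ¬ 0 < -x := by omega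
    have h2 : 0 < - -x := by omega
    rw [oddExtFun_neg' p h1 h2, oddExtFun_pos p h]
    congr 2
    ext; simp
  · by_cases h' : 0 < -x
    · rw [oddExtFun_pos p h', oddExtFun_neg' p h h']
      simp
    · have hx : x = 0 := by omega
      subst hx
      simp [oddExtFun_zero p h h']

lemma oddExt_pos (p : Equiv.Perm {n : ℤ // 0 < n}) {x : ℤ} (h : 0 < x) :
    oddExt p x = (p ⟨x, h⟩ : ℤ) := oddExtFun_pos p h

lemma exists_odd_perm (T U : Finset ℤ) (hT : ∀ x ∈ T, 0 < x) (hU : ∀ x ∈ U, 0 < x)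
    (h : T.card = U.card) :
    ∃ σ : Equiv.Perm ℤ, (∀ x, σ (-x) = -σ x) ∧ T.image σ = U := by
  classical
  set T' : Finset {n : ℤ // 0 < n} := T.subtype (0 < ·) with hT'
  set U' : Finset {n : ℤ // 0 < n} := U.subtype (0 < ·) with hU'
  have hcT : T'.card = T.card := by
    rw [hT', Finset.card_subtype, Finset.filter_true_of_mem hT]
  have hcU : U'.card = U.card := by
    rw [hU', Finset.card_subtype, Finset.filter_true_of_mem hU]
  obtain ⟨p, hp⟩ := exists_pos_perm T' U' (by omega)
  refine ⟨oddExt p, oddExt_odd p, ?_⟩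
  ext y
  simp only [Finset.mem_image]
  constructor
  · rintro ⟨x, hx, rfl⟩
    have hx0 : 0 < x := hT x hx
    rw [oddExt_pos p hx0]
    have : (⟨x, hx0⟩ : {n : ℤ // 0 < n}) ∈ T' := by simp [hT', Finset.mem_subtype, hx]
    have := (hp _).1 this
    simpa [hU', Finset.mem_subtype] using this
  · intro hy
    have hy0 : 0 < y := hU y hy
    refine ⟨(p.symm ⟨y, hy0⟩ : ℤ), ?_, ?_⟩
    · have hmem : p (p.symm ⟨y, hy0⟩) ∈ U' := by
        rw [Equiv.apply_symm_apply]; simp [hU', Finset.mem_subtype, hy]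
      have := (hp _).2 hmem
      simpa [hT', Finset.mem_subtype] using this
    · rw [oddExt_pos p (p.symm ⟨y, hy0⟩).2, Subtype.coe_eta, Equiv.apply_symm_apply]

/-! ### Transport of symmetric partitions -/

def finsetIso (σ : Equiv.Perm ℤ) : Finset ℤ ≃o Finset ℤ where
  toEquiv := σ.finsetCongr
  map_rel_iff' := by
    intro s t
    simp [Equiv.finsetCongr_apply, Finset.map_subset_map]

lemma finsetIso_apply (σ : Equiv.Perm ℤ) (s : Finset ℤ) :
    finsetIso σ s = s.image σ := by
  simp [finsetIso, Equiv.finsetCongr_apply, Finset.map_eq_image]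

noncomputable def pmap (σ : Equiv.Perm ℤ) {A : Finset ℤ} (P : Finpartition A) :
    Finpartition (A.image σ) :=
  (P.map (finsetIso σ)).copy (finsetIso_apply σ A)

lemma pmap_parts (σ : Equiv.Perm ℤ) {A : Finset ℤ} (P : Finpartition A) :
    (pmap σ P).parts = P.parts.image (fun X => X.image σ) := by
  classical
  show (P.map (finsetIso σ)).parts = _
  rw [Finpartition.map]
  simp only [Finset.map_eq_image]
  apply Finset.image_congr
  intro X _
  exact finsetIso_apply σ X

def SymP {A : Finset ℤ} (P : Finpartition A) : Prop :=
  ∀ X ∈ P.parts, X.image (fun x => -x) ∈ P.parts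

lemma pmap_sym (σ : Equiv.Perm ℤ) (hodd : ∀ x, σ (-x) = -σ x) {A : Finset ℤ}
    {P : Finpartition A} (hP : SymP P) : SymP (pmap σ P) := by
  intro X hX
  rw [pmap_parts] at hX ⊢
  rw [Finset.mem_image] at hX
  obtain ⟨Y, hY, rfl⟩ := hX
  rw [Finset.mem_image]
  refine ⟨Y.image (fun x => -x), hP Y hY, ?_⟩
  rw [Finset.image_image, Finset.image_image]
  apply Finset.image_congr
  intro x _
  simpa using hodd x

lemma symm_odd (σ : Equiv.Perm ℤ) (hodd : ∀ x, σ (-x) = -σ x) (x : ℤ) :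
    σ.symm (-x) = -σ.symm x := by
  apply σ.injective
  rw [Equiv.apply_symm_apply, hodd, Equiv.apply_symm_apply]

lemma image_symm_image (σ : Equiv.Perm ℤ) (A : Finset ℤ) :
    (A.image σ).image σ.symm = A := by
  rw [Finset.image_image]
  simp

lemma image_image_symm (σ : Equiv.Perm ℤ) (A : Finset ℤ) :
    (A.image σ.symm).image σ = A := by
  have := image_symm_image σ.symm A
  simpa using this

lemma copy_sym {A B : Finset ℤ} (P : Finpartition A) (h : A = B) (hP : SymP P) :
    SymP (P.copy h) := hP

noncomputable def symSubEquiv (σ : Equiv.Perm ℤ) (hodd : ∀ x, σ (-x) = -σ x) (A : Finset ℤ) :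
    {P : Finpartition A // SymP P} ≃ {P : Finpartition (A.image σ) // SymP P} where
  toFun P := ⟨pmap σ P.1, pmap_sym σ hodd P.2⟩
  invFun Q := ⟨(pmap σ.symm Q.1).copy (image_symm_image σ A),
    copy_sym _ _ (pmap_sym σ.symm (symm_odd σ hodd) Q.2)⟩
  left_inv P := by
    apply Subtype.ext
    apply Finpartition.ext
    simp only [Finpartition.copy_parts, pmap_parts, Finset.image_image]
    ext X
    simp only [Finset.mem_image, Function.comp]
    constructor
    · rintro ⟨Y, hY, rfl⟩
      rw [image_symm_image]
      exact hY
    · intro hX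
      exact ⟨X, hX, image_symm_image σ X⟩
  right_inv Q := by
    apply Subtype.ext
    apply Finpartition.ext
    simp only [Finpartition.copy_parts, pmap_parts, Finset.image_image]
    ext X
    simp only [Finset.mem_image, Function.comp]
    constructor
    · rintro ⟨Y, hY, rfl⟩
      rw [image_image_symm]
      exact hY
    · intro hX
      exact ⟨X, hX, image_image_symm σ X⟩

lemma card_sym_image (σ : Equiv.Perm ℤ) (hodd : ∀ x, σ (-x) = -σ x) (A B : Finset ℤ)
    (hAB : A.image σ = B) :
    Nat.card {P : Finpartition A // SymP P} = Nat.card {P : Finpartition B // SymP P} := by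
  subst hAB
  exact Nat.card_congr (symSubEquiv σ hodd A)

/-! ### The zero block -/

def blk (S : Finset ℤ) : Finset ℤ := insert 0 (S ∪ S.image (fun x => -x))

lemma zero_mem_blk (S : Finset ℤ) : (0 : ℤ) ∈ blk S := mem_insert_self _ _

lemma blk_ne_empty (S : Finset ℤ) : blk S ≠ ∅ := ne_empty_of_mem (zero_mem_blk S)

lemma blk_image_neg (S : Finset ℤ) : (blk S).image (fun x => -x) = blk S := by
  unfold blk
  rw [Finset.image_insert, Finset.image_union, Finset.image_image]
  have h1 : S.image ((fun x : ℤ => -x) ∘ (fun x : ℤ => -x)) = S := by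
    simp [Function.comp]
  rw [h1, neg_zero, union_comm]

lemma blk_subset {k : ℕ} {S : Finset ℤ} (hS : S ⊆ Icc 1 (k : ℤ)) :
    blk S ⊆ Icc (-(k : ℤ)) k := by
  intro x hx
  rw [blk, mem_insert, mem_union, mem_image] at hx
  rw [mem_Icc]
  rcases hx with rfl | hx | ⟨y, hy, rfl⟩
  · omega
  · have := hS hx; rw [mem_Icc] at this; omega
  · have := hS hy; rw [mem_Icc] at this; omega

lemma blk_inter {k : ℕ} {S : Finset ℤ} (hS : S ⊆ Icc 1 (k : ℤ)) :
    blk S ∩ Icc 1 (k : ℤ) = S := by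
  ext x
  rw [mem_inter, blk, mem_insert, mem_union, mem_image, mem_Icc]
  constructor
  · rintro ⟨rfl | hx | ⟨y, hy, rfl⟩, hx1, hx2⟩
    · omega
    · exact hx
    · have := hS hy; rw [mem_Icc] at this; omega
  · intro hx
    have := hS hx; rw [mem_Icc] at this
    exact ⟨Or.inr (Or.inl hx), this.1, this.2⟩

/-! ### rest -/

noncomputable def rest (k : ℕ) (S : Finset ℤ) : Finset ℤ := Icc (-(k : ℤ)) k \ blk S

lemma rest_eq {k : ℕ} {S : Finset ℤ} (hS : S ⊆ Icc 1 (k : ℤ)) :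
    rest k S = (Icc 1 (k : ℤ) \ S) ∪ (Icc 1 (k : ℤ) \ S).image (fun x => -x) := by
  have hS' : ∀ y ∈ S, 1 ≤ y ∧ y ≤ (k:ℤ) := by
    intro y hy; have := hS hy; rwa [mem_Icc] at this
  ext x
  simp only [rest, blk, mem_sdiff, mem_insert, mem_union, mem_image, mem_Icc, not_or,
    not_exists, not_and]
  constructor
  · rintro ⟨⟨h1, h2⟩, hne, hnS, hnIm⟩
    by_cases hp : 0 < x
    · exact Or.inl ⟨⟨by omega, h2⟩, hnS⟩
    · refine Or.inr ⟨-x, ⟨⟨by omega, by omega⟩, ?_⟩, by ring⟩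
      intro hmem
      exact hnIm (-x) hmem (by ring)
  · rintro (⟨⟨h1, h2⟩, hnS⟩ | ⟨y, ⟨⟨h1, h2⟩, hy⟩, rfl⟩)
    · refine ⟨⟨by omega, h2⟩, by omega, hnS, ?_⟩
      intro y hyS hyx
      have := hS' y hyS
      omega
    · refine ⟨⟨by omega, by omega⟩, by omega, ?_, ?_⟩
      · intro hmem
        have := hS' _ hmem
        omega
      · intro z hzS hz
        have hzy : z = y := by omega
        exact hy (hzy ▸ hzS)

lemma erase_Icc_eq (j : ℕ) :
    (Icc (-(j : ℤ)) j).erase 0 = Icc 1 (j : ℤ) ∪ (Icc 1 (j : ℤ)).image (fun x => -x) := by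
  ext x
  simp only [mem_erase, mem_Icc, mem_union, mem_image]
  constructor
  · rintro ⟨hne, h1, h2⟩
    by_cases hp : 0 < x
    · exact Or.inl ⟨by omega, h2⟩
    · exact Or.inr ⟨-x, ⟨by omega, by omega⟩, by ring⟩
  · rintro (⟨h1, h2⟩ | ⟨y, ⟨h1, h2⟩, rfl⟩) <;> refine ⟨by omega, by omega, by omega⟩

section Main
attribute [local instance] Classical.propDecidable

/-- Remove a part from a finpartition. -/
noncomputable def erasePart {A : Finset ℤ} (P : Finpartition A) {B : Finset ℤ}
    (hB : B ∈ P.parts) : Finpartition (A \ B) :=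
  P.ofSubset (Finset.erase_subset B P.parts) (by
    ext x
    rw [Finset.mem_sup, Finset.mem_sdiff]
    constructor
    · rintro ⟨t, ht, hx⟩
      rw [Finset.mem_erase] at ht
      refine ⟨P.le ht.2 hx, fun hxB => ht.1 (P.eq_of_mem_parts ht.2 hB hx hxB)⟩
    · rintro ⟨hxA, hxB⟩
      obtain ⟨t, ht, hx⟩ := P.exists_mem hxA
      refine ⟨t, Finset.mem_erase.2 ⟨fun h => hxB (h ▸ hx), ht⟩, hx⟩)

lemma erasePart_parts {A : Finset ℤ} (P : Finpartition A) {B : Finset ℤ}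
    (hB : B ∈ P.parts) : (erasePart P hB).parts = P.parts.erase B := rfl

lemma zero_mem_Icc (k : ℕ) : (0 : ℤ) ∈ Icc (-(k : ℤ)) k := by
  rw [mem_Icc]; omega

/-- Extend a partition of `rest k S` by the block `blk S`. -/
noncomputable def extBlk {k : ℕ} {S : Finset ℤ} (hS : S ⊆ Icc 1 (k : ℤ))
    (Q : Finpartition (rest k S)) : Finpartition (Icc (-(k : ℤ)) k) :=
  Q.extend (by rw [bot_eq_empty]; exact blk_ne_empty S)
    (Finset.sdiff_disjoint)
    (by rw [sup_eq_union, rest, Finset.sdiff_union_of_subset (blk_subset hS)])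

lemma extBlk_parts {k : ℕ} {S : Finset ℤ} (hS : S ⊆ Icc 1 (k : ℤ))
    (Q : Finpartition (rest k S)) : (extBlk hS Q).parts = insert (blk S) Q.parts := rfl

lemma extBlk_part_zero {k : ℕ} {S : Finset ℤ} (hS : S ⊆ Icc 1 (k : ℤ))
    (Q : Finpartition (rest k S)) : (extBlk hS Q).part 0 = blk S :=
  Finpartition.part_eq_of_mem _ (by rw [extBlk_parts]; exact mem_insert_self _ _)
    (zero_mem_blk S)

lemma extBlk_sym {k : ℕ} {S : Finset ℤ} (hS : S ⊆ Icc 1 (k : ℤ))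
    (Q : Finpartition (rest k S)) (hQ : SymP Q) : SymP (extBlk hS Q) := by
  intro X hX
  rw [extBlk_parts] at hX ⊢
  rw [mem_insert] at hX
  rcases hX with rfl | hX
  · rw [blk_image_neg]
    exact mem_insert_self _ _
  · exact mem_insert_of_mem (hQ X hX)

lemma part_zero_image {k : ℕ} (P : Finpartition (Icc (-(k : ℤ)) k)) (hP : SymP P) :
    (P.part 0).image (fun x => -x) = P.part 0 := by
  have h0 := zero_mem_Icc k
  apply P.eq_of_mem_parts (hP _ (P.part_mem.2 h0)) (P.part_mem.2 h0)
  · exact Finset.mem_image.2 ⟨0, P.mem_part h0, neg_zero⟩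
  · exact P.mem_part h0

lemma part_zero_closed {k : ℕ} (P : Finpartition (Icc (-(k : ℤ)) k)) (hP : SymP P)
    {x : ℤ} (hx : x ∈ P.part 0) : -x ∈ P.part 0 := by
  rw [← part_zero_image P hP]
  exact Finset.mem_image.2 ⟨x, hx, rfl⟩

lemma part_zero_eq_blk {k : ℕ} (P : Finpartition (Icc (-(k : ℤ)) k)) (hP : SymP P) :
    P.part 0 = blk (P.part 0 ∩ Icc 1 (k : ℤ)) := by
  have h0 := zero_mem_Icc k
  ext x
  constructor
  · intro hx
    have hxI : x ∈ Icc (-(k : ℤ)) k := P.le (P.part_mem.2 h0) hx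
    rw [mem_Icc] at hxI
    rw [blk, mem_insert, mem_union]
    rcases lt_trichotomy x 0 with hneg | rfl | hpos
    · refine Or.inr (Or.inr ?_)
      rw [Finset.mem_image]
      exact ⟨-x, Finset.mem_inter.2 ⟨part_zero_closed P hP hx, by rw [mem_Icc]; omega⟩,
        by ring⟩
    · exact Or.inl rfl
    · exact Or.inr (Or.inl (Finset.mem_inter.2 ⟨hx, by rw [mem_Icc]; omega⟩))
  · intro hx
    rw [blk, mem_insert, mem_union] at hx
    rcases hx with rfl | hx | hx
    · exact P.mem_part h0
    · exact (Finset.mem_inter.1 hx).1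
    · rw [Finset.mem_image] at hx
      obtain ⟨y, hy, rfl⟩ := hx
      exact part_zero_closed P hP (Finset.mem_inter.1 hy).1

lemma blk_not_mem {k : ℕ} {S : Finset ℤ} (Q : Finpartition (rest k S)) :
    blk S ∉ Q.parts := by
  intro h
  have := Q.le h (zero_mem_blk S)
  rw [rest, Finset.mem_sdiff] at this
  exact this.2 (zero_mem_blk S)

lemma fiber_card (k : ℕ) (S : Finset ℤ) (hS : S ⊆ Icc 1 (k : ℤ)) :
    ((univ : Finset {P : Finpartition (Icc (-(k : ℤ)) k) // SymP P}).filter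
      (fun P => P.1.part 0 ∩ Icc 1 (k : ℤ) = S)).card
      = Nat.card {Q : Finpartition (rest k S) // SymP Q} := by
  rw [Nat.card_eq_fintype_card, ← Finset.card_univ]
  refine Finset.card_bij'
    (i := fun P hP => ⟨(erasePart P.1 (P.1.part_mem.2 (zero_mem_Icc k))).copy ?_,
      ?_⟩)
    (j := fun Q _ => ⟨extBlk hS Q.1, extBlk_sym hS Q.1 Q.2⟩) ?_ ?_ ?_ ?_
  case refine_1 =>
    rw [Finset.mem_filter] at hP
    rw [rest, ← hP.2, ← part_zero_eq_blk P.1 P.2]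
  case refine_2 =>
    intro X hX
    rw [Finpartition.copy_parts, erasePart_parts] at hX ⊢
    rw [Finset.mem_erase] at hX ⊢
    refine ⟨?_, P.2 X hX.2⟩
    intro hEq
    apply hX.1
    have : (X.image (fun x => -x)).image (fun x => -x) = X := by
      rw [Finset.image_image]; simp
    rw [← this, hEq, part_zero_image P.1 P.2]
  · intro P hP
    exact mem_univ _
  · intro Q hQ
    rw [Finset.mem_filter]
    refine ⟨mem_univ _, ?_⟩
    rw [extBlk_part_zero hS, blk_inter hS]
  · intro P hP
    apply Subtype.ext
    apply Finpartition.ext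
    rw [extBlk_parts, Finpartition.copy_parts, erasePart_parts]
    rw [Finset.mem_filter] at hP
    have hblk : blk S = P.1.part 0 := by
      rw [← hP.2]; exact (part_zero_eq_blk P.1 P.2).symm
    rw [hblk, Finset.insert_erase (P.1.part_mem.2 (zero_mem_Icc k))]
  · intro Q hQ
    apply Subtype.ext
    apply Finpartition.ext
    rw [Finpartition.copy_parts, erasePart_parts, extBlk_part_zero hS, extBlk_parts,
      Finset.erase_insert (blk_not_mem Q.1)]

lemma hSym_decomp (k : ℕ) :
    Nat.card {P : Finpartition (Icc (-(k : ℤ)) k) // SymP P}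
      = ∑ S ∈ (Icc 1 (k : ℤ)).powerset, Nat.card {Q : Finpartition (rest k S) // SymP Q} := by
  rw [Nat.card_eq_fintype_card, ← Finset.card_univ]
  rw [Finset.card_eq_sum_card_fiberwise
    (f := fun P : {P : Finpartition (Icc (-(k : ℤ)) k) // SymP P} =>
      P.1.part 0 ∩ Icc 1 (k : ℤ))
    (t := (Icc 1 (k : ℤ)).powerset)
    (fun P _ => Finset.mem_powerset.2 Finset.inter_subset_right)]
  exact Finset.sum_congr rfl fun S hS => fiber_card k S (Finset.mem_powerset.1 hS)

end Main

/-- Number of symmetric set partitions of `{-j,…,-1,1,…,j}`. -/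
noncomputable def gSym (j : ℕ) : ℕ :=
  Nat.card {P : Finpartition ((Finset.Icc (-(j : ℤ)) j).erase 0) //
    ∀ X ∈ P.parts, X.image (fun x => -x) ∈ P.parts}

/-- Number of symmetric set partitions of `{-k,…,-1,0,1,…,k}`. -/
noncomputable def hSym (k : ℕ) : ℕ :=
  Nat.card {P : Finpartition (Finset.Icc (-(k : ℤ)) k) //
    ∀ X ∈ P.parts, X.image (fun x => -x) ∈ P.parts}


lemma gSym_eq (j : ℕ) :
    gSym j = Nat.card {P : Finpartition ((Icc (-(j : ℤ)) j).erase 0) // SymP P} := rfl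

lemma hSym_eq (k : ℕ) :
    hSym k = Nat.card {P : Finpartition (Icc (-(k : ℤ)) k) // SymP P} := rfl

lemma card_Icc_one (k : ℕ) : (Icc 1 (k : ℤ)).card = k := by
  rw [Int.card_Icc]
  omega

lemma image_neg_comm (σ : Equiv.Perm ℤ) (hodd : ∀ x, σ (-x) = -σ x) (T : Finset ℤ) :
    (T.image (fun x => -x)).image σ = (T.image σ).image (fun x => -x) := by
  rw [Finset.image_image, Finset.image_image]
  apply Finset.image_congr
  intro x _
  simpa using hodd x

lemma fiber_transport (k : ℕ) (S : Finset ℤ) (hS : S ⊆ Icc 1 (k : ℤ)) :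
    Nat.card {Q : Finpartition (rest k S) // SymP Q} = gSym (k - S.card) := by
  have hSk : S.card ≤ k := by
    have := Finset.card_le_card hS
    rwa [card_Icc_one] at this
  set j : ℕ := k - S.card with hj
  set T : Finset ℤ := Icc 1 (k : ℤ) \ S with hT
  set U : Finset ℤ := Icc 1 (j : ℤ) with hU
  have hTpos : ∀ x ∈ T, 0 < x := by
    intro x hx
    rw [hT, Finset.mem_sdiff, mem_Icc] at hx
    omega
  have hUpos : ∀ x ∈ U, 0 < x := by
    intro x hx
    rw [hU, mem_Icc] at hx
    omega
  have hcard : T.card = U.card := by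
    rw [hT, hU, Finset.card_sdiff_of_subset hS, card_Icc_one, card_Icc_one]
  obtain ⟨σ, hodd, himg⟩ := exists_odd_perm T U hTpos hUpos hcard
  rw [gSym_eq]
  apply card_sym_image σ hodd
  rw [rest_eq hS, erase_Icc_eq j, Finset.image_union, ← hT, himg,
    image_neg_comm σ hodd, himg]

theorem stmt15 (k : ℕ) :
    hSym k = ∑ j ∈ Finset.range (k + 1), k.choose j * gSym j := by
  rw [hSym_eq, hSym_decomp]
  have h1 : ∀ S ∈ (Icc 1 (k : ℤ)).powerset,
      Nat.card {Q : Finpartition (rest k S) // SymP Q} = gSym (k - S.card) := by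
    intro S hS
    exact fiber_transport k S (Finset.mem_powerset.1 hS)
  rw [Finset.sum_congr rfl h1]
  rw [Finset.sum_powerset_apply_card (fun m => gSym (k - m))]
  rw [card_Icc_one]
  rw [← Finset.sum_range_reflect]
  apply Finset.sum_congr rfl
  intro j hj
  rw [Finset.mem_range] at hj
  have hj' : j ≤ k := by omega
  have e1 : k + 1 - 1 - j = k - j := by omega
  have e2 : k - (k - j) = j := by omega
  rw [e1, e2, Nat.choose_symm hj', smul_eq_mul]
end
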